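/- arXiv:1605.09202 — 12 statements merged into one kernel-verified Lean document; each statement's English description precedes it below -/
import Mathlib

section
/- Let β ≥ 2, μ ≥ 1 be integers and u = 1/(2β^μ). If fl rounds to nearest in F, e is an exponent for F, and |z| = β^e(β^μ + w) with w ∈ [0,(β−1)β^μ], then fl(z) = sign(z)·β^e(β^μ + r) for some integer r ∈ [0,(β−1)β^μ] with |r − w| ≤ 1/2, and moreover |fl(z) − z|/|z| ≤ u/(1 + max{1, 2w}·u) ≤ u/(1+u). -/
noncomputable section

/-- The set of positive normal floating point numbers with exponent `e`. -/
def Eset (β μ : ℕ) (e : ℤ) : Set ℝ :=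
  {x | ∃ r : ℕ, r < (β - 1) * β ^ μ ∧ x = (β : ℝ) ^ e * ((β : ℝ) ^ μ + r)}

/-- Perfect floating point system: all integer exponents. -/
def PerfectF (β μ : ℕ) : Set ℝ :=
  {x | x = 0 ∨ ∃ e : ℤ, x ∈ Eset β μ e ∨ -x ∈ Eset β μ e}

/-- MPFR system: exponents bounded below by `emin`, no subnormals. -/
def MPFRF (β μ : ℕ) (emin : ℤ) : Set ℝ :=
  {x | x = 0 ∨ ∃ e : ℤ, emin ≤ e ∧ (x ∈ Eset β μ e ∨ -x ∈ Eset β μ e)}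

/-- Subnormal numbers (both signs) for minimal exponent `emin`. -/
def SubN (β μ : ℕ) (emin : ℤ) : Set ℝ :=
  {x | ∃ r : ℕ, 1 ≤ r ∧ r < β ^ μ ∧ (x = (β : ℝ) ^ emin * r ∨ x = -((β : ℝ) ^ emin * r))}

/-- IEEE system: MPFR system augmented with subnormal numbers. -/
def IEEEF (β μ : ℕ) (emin : ℤ) : Set ℝ := MPFRF β μ emin ∪ SubN β μ emin

/-- `fl` rounds to nearest in `F`. -/
def RTN (F : Set ℝ) (fl : ℝ → ℝ) : Prop :=
  ∀ z : ℝ, fl z ∈ F ∧ ∀ x ∈ F, |fl z - z| ≤ |x - z|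

/-- Recursively rounded sum: `rsum fl y 0 = y 0`,
`rsum fl y (k+1) = fl (k+1) (rsum fl y k + y (k+1))`. -/
def rsum (fl : ℕ → ℝ → ℝ) (y : ℕ → ℝ) : ℕ → ℝ
  | 0 => y 0
  | k + 1 => fl (k + 1) (rsum fl y k + y (k + 1))

/-- Ties are broken downward. -/
def BreaksTiesDown (F : Set ℝ) (fl : ℝ → ℝ) : Prop :=
  ∀ z : ℝ, ∀ x ∈ F, |x - z| = |fl z - z| → fl z ≤ x

/-- Ties are broken upward. -/
def BreaksTiesUp (F : Set ℝ) (fl : ℝ → ℝ) : Prop :=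
  ∀ z : ℝ, ∀ x ∈ F, |x - z| = |fl z - z| → x ≤ fl z

lemma Eset_pos' {β μ : ℕ} (hβ : 2 ≤ β) {e : ℤ} {x : ℝ} (hx : x ∈ Eset β μ e) : 0 < x := by
  obtain ⟨r, _, rfl⟩ := hx
  have hb0 : (0:ℝ) < (β:ℝ) := by exact_mod_cast (by omega : 0 < β)
  positivity

lemma stmt1_neg_mem {β μ : ℕ} {emin : ℤ} {F : Set ℝ}
    (hF : F = PerfectF β μ ∨ F = IEEEF β μ emin ∨ F = MPFRF β μ emin)
    {x : ℝ} (hx : x ∈ F) : -x ∈ F := by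
  have hM : ∀ y : ℝ, y ∈ MPFRF β μ emin → -y ∈ MPFRF β μ emin := by
    rintro y (rfl | ⟨f, hf, h | h⟩)
    · exact Or.inl (by simp)
    · exact Or.inr ⟨f, hf, Or.inr (by simpa using h)⟩
    · exact Or.inr ⟨f, hf, Or.inl h⟩
  rcases hF with rfl | rfl | rfl
  · rcases hx with rfl | ⟨f, h | h⟩
    · exact Or.inl (by simp)
    · exact Or.inr ⟨f, Or.inr (by simpa using h)⟩
    · exact Or.inr ⟨f, Or.inl h⟩
  · rcases hx with hx | ⟨r, h1, h2, h3 | h3⟩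
    · exact Or.inl (hM x hx)
    · exact Or.inr ⟨r, h1, h2, Or.inr (by rw [h3])⟩
    · exact Or.inr ⟨r, h1, h2, Or.inl (by rw [h3]; ring)⟩
  · exact hM x hx

lemma stmt1_mem {β μ : ℕ} (hβ : 2 ≤ β) (hμ : 1 ≤ μ) {emin e : ℤ} {F : Set ℝ}
    (hF : F = PerfectF β μ ∨ ((F = IEEEF β μ emin ∨ F = MPFRF β μ emin) ∧ emin ≤ e))
    (r : ℕ) (hr : r ≤ (β - 1) * β ^ μ) :
    (β:ℝ) ^ e * ((β:ℝ) ^ μ + r) ∈ F := by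
  have hb0 : (0:ℝ) < (β:ℝ) := by exact_mod_cast (by omega : 0 < β)
  have hmem : ∃ f : ℤ, e ≤ f ∧ (β:ℝ) ^ e * ((β:ℝ) ^ μ + r) ∈ Eset β μ f := by
    rcases lt_or_eq_of_le hr with h | h
    · exact ⟨e, le_refl _, ⟨r, h, rfl⟩⟩
    · refine ⟨e + 1, by omega, ⟨0, ?_, ?_⟩⟩
      · have : 0 < β ^ μ := pow_pos (by omega) μ
        have : 1 ≤ β - 1 := by omega
        positivity
      · have hcast : (r : ℝ) = ((β:ℝ) - 1) * (β:ℝ) ^ μ := by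
          rw [h]
          push_cast [Nat.cast_sub (by omega : 1 ≤ β)]
          ring
        rw [hcast, zpow_add_one₀ hb0.ne']
        push_cast
        ring
  obtain ⟨f, hef, hmem⟩ := hmem
  rcases hF with rfl | ⟨hF2, he⟩
  · exact Or.inr ⟨f, Or.inl hmem⟩
  · have hm : (β:ℝ) ^ e * ((β:ℝ) ^ μ + r) ∈ MPFRF β μ emin :=
      Or.inr ⟨f, by omega, Or.inl hmem⟩
    rcases hF2 with rfl | rfl
    · exact Or.inl hm
    · exact hm

lemma stmt1_classify {β μ : ℕ} (hβ : 2 ≤ β) (hμ : 1 ≤ μ) {emin e : ℤ} {F : Set ℝ}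
    (hF : F = PerfectF β μ ∨ ((F = IEEEF β μ emin ∨ F = MPFRF β μ emin) ∧ emin ≤ e))
    {x : ℝ} (hx : x ∈ F)
    (h1 : (β:ℝ)^e * ((β:ℝ)^μ - 1/(β:ℝ)) < x)
    (h2 : x < (β:ℝ)^e * ((β:ℝ) * (β:ℝ)^μ + (β:ℝ))) :
    ∃ r : ℕ, (r:ℝ) ≤ ((β:ℝ) - 1) * (β:ℝ)^μ ∧ x = (β:ℝ)^e * ((β:ℝ)^μ + r) := by
  have hb2 : (2:ℝ) ≤ (β:ℝ) := by exact_mod_cast hβ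
  have hb0 : (0:ℝ) < (β:ℝ) := by linarith
  have hbe : (0:ℝ) < (β:ℝ)^e := zpow_pos hb0 e
  have hbm : (2:ℝ) ≤ (β:ℝ)^μ := le_trans hb2 (le_self_pow₀ (by linarith) (by omega))
  have hinvb : 1/(β:ℝ) ≤ 1/2 := by
    rw [div_le_div_iff₀ hb0 (by norm_num)]; linarith
  have hinvb0 : 0 < 1/(β:ℝ) := by positivity
  have hlow_pos : (0:ℝ) < (β:ℝ)^e * ((β:ℝ)^μ - 1/(β:ℝ)) := by
    apply mul_pos hbe; linarith
  have key : ∀ f : ℤ, x ∈ Eset β μ f →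
      ∃ r : ℕ, (r:ℝ) ≤ ((β:ℝ)-1)*(β:ℝ)^μ ∧ x = (β:ℝ)^e * ((β:ℝ)^μ + r) := by
    intro f hxf
    obtain ⟨s, hs, hxe⟩ := hxf
    have hsR : (s:ℝ) ≤ ((β:ℝ)-1)*(β:ℝ)^μ - 1 := by
      have h' : (s:ℝ) + 1 ≤ (((β-1) * β^μ : ℕ) : ℝ) := by exact_mod_cast hs
      push_cast [Nat.cast_sub (by omega : 1 ≤ β)] at h'
      linarith
    have hs0 : (0:ℝ) ≤ (s:ℝ) := Nat.cast_nonneg s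
    rcases lt_trichotomy f e with hfe | rfl | hfe
    · exfalso
      have hmono : (β:ℝ)^f ≤ (β:ℝ)^(e-1) := zpow_le_zpow_right₀ (by linarith) (by omega)
      have hfac : (β:ℝ)^μ + (s:ℝ) ≤ (β:ℝ)*(β:ℝ)^μ - 1 := by nlinarith
      have hbf0 : (0:ℝ) < (β:ℝ)^f := zpow_pos hb0 f
      have hb1 : x ≤ (β:ℝ)^(e-1) * ((β:ℝ)*(β:ℝ)^μ - 1) := by
        rw [hxe]
        exact mul_le_mul hmono hfac (by positivity) (zpow_pos hb0 _).le
      have heq : (β:ℝ)^(e-1) * ((β:ℝ)*(β:ℝ)^μ - 1) = (β:ℝ)^e * ((β:ℝ)^μ - 1/(β:ℝ)) := by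
        have he' : (β:ℝ)^e = (β:ℝ)^(e-1) * (β:ℝ) := by
          rw [← zpow_add_one₀ hb0.ne']; norm_num
        rw [he']
        have hne : (β:ℝ) ≠ 0 := hb0.ne'
        field_simp
      linarith
    · exact ⟨s, by linarith, hxe⟩
    · rcases eq_or_lt_of_le (by omega : e + 1 ≤ f) with rfl | hf2
      · rcases Nat.eq_zero_or_pos s with rfl | hs1
        · refine ⟨(β-1) * β^μ, ?_, ?_⟩
          · push_cast [Nat.cast_sub (by omega : 1 ≤ β)]
            exact le_of_eq (by ring)
          · rw [hxe, zpow_add_one₀ hb0.ne']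
            push_cast [Nat.cast_sub (by omega : 1 ≤ β)]
            ring
        · exfalso
          have hs1' : (1:ℝ) ≤ (s:ℝ) := by exact_mod_cast hs1
          have hle : (β:ℝ)^e * ((β:ℝ)*(β:ℝ)^μ + (β:ℝ)) ≤ x := by
            rw [hxe, zpow_add_one₀ hb0.ne']
            nlinarith
          linarith
      · exfalso
        have hmono : (β:ℝ)^(e+2) ≤ (β:ℝ)^f := zpow_le_zpow_right₀ (by linarith) (by omega)
        have h22 : (β:ℝ)^(e+2) = (β:ℝ)^e * (β:ℝ) * (β:ℝ) := by
          rw [show e+2 = e + 1 + 1 from by ring, zpow_add_one₀ hb0.ne', zpow_add_one₀ hb0.ne']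
        have hstep : (β:ℝ)^(e+2) * (β:ℝ)^μ ≤ (β:ℝ)^f * ((β:ℝ)^μ + s) :=
          mul_le_mul hmono (by linarith) (by positivity) (zpow_pos hb0 _).le
        have h3 : (1:ℝ)*2 ≤ ((β:ℝ)-1)*(β:ℝ)^μ :=
          mul_le_mul (by linarith) hbm (by norm_num) (by linarith)
        have hq : (β:ℝ)*(β:ℝ)^μ + (β:ℝ) ≤ (β:ℝ)*(β:ℝ)*(β:ℝ)^μ := by nlinarith [h3, hb0]
        have h22' : (β:ℝ)^(e+2)*(β:ℝ)^μ = (β:ℝ)^e*((β:ℝ)*(β:ℝ)*(β:ℝ)^μ) := by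
          rw [h22]; ring
        have hmul := mul_le_mul_of_nonneg_left hq hbe.le
        have hle : (β:ℝ)^e * ((β:ℝ)*(β:ℝ)^μ + (β:ℝ)) ≤ x := by
          rw [hxe]; linarith
        linarith
  have keyneg : ∀ f : ℤ, -x ∈ Eset β μ f → False := by
    intro f hxf
    have := Eset_pos' hβ hxf
    linarith
  have hMP : x ∈ MPFRF β μ emin →
      ∃ r : ℕ, (r:ℝ) ≤ ((β:ℝ)-1)*(β:ℝ)^μ ∧ x = (β:ℝ)^e * ((β:ℝ)^μ + r) := by
    rintro (rfl | ⟨f, _, hxf | hxf⟩)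
    · exact absurd h1 (by linarith)
    · exact key f hxf
    · exact (keyneg f hxf).elim
  rcases hF with rfl | ⟨hF2, hee⟩
  · rcases hx with rfl | ⟨f, hxf | hxf⟩
    · exact absurd h1 (by linarith)
    · exact key f hxf
    · exact (keyneg f hxf).elim
  · have hsub : x ∈ SubN β μ emin → False := by
      rintro ⟨s, hs1, hs2, rfl | rfl⟩
      · have hse : (s:ℝ) ≤ (β:ℝ)^μ - 1 := by
          have h' : (s:ℝ) + 1 ≤ ((β^μ : ℕ):ℝ) := by exact_mod_cast hs2
          push_cast at h'
          linarith
        have hmono : (β:ℝ)^emin ≤ (β:ℝ)^e := zpow_le_zpow_right₀ (by linarith) hee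
        have hbemin : (0:ℝ) < (β:ℝ)^emin := zpow_pos hb0 emin
        have hle : (β:ℝ)^emin * (s:ℝ) ≤ (β:ℝ)^e * ((β:ℝ)^μ - 1/(β:ℝ)) := by
          apply mul_le_mul hmono (by linarith) (Nat.cast_nonneg s) hbe.le
        linarith
      · have hs1' : (1:ℝ) ≤ (s:ℝ) := by exact_mod_cast hs1
        have hbemin : (0:ℝ) < (β:ℝ)^emin := zpow_pos hb0 emin
        nlinarith
    rcases hF2 with rfl | rfl
    · rcases hx with hx | hx
      · exact hMP hx
      · exact (hsub hx).elim
    · exact hMP hx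

set_option maxHeartbeats 1000000 in
theorem stmt1 (β μ : ℕ) (hβ : 2 ≤ β) (hμ : 1 ≤ μ) (emin : ℤ)
    (hemin : emin < -(μ : ℤ))
    (F : Set ℝ) (e : ℤ) (fl : ℝ → ℝ) (z w u : ℝ)
    (hu : u = 1 / (2 * (β : ℝ) ^ μ))
    (hF : F = PerfectF β μ ∨
          ((F = IEEEF β μ emin ∨ F = MPFRF β μ emin) ∧ emin ≤ e))
    (hfl : RTN F fl)
    (hw0 : 0 ≤ w) (hw1 : w ≤ ((β : ℝ) - 1) * (β : ℝ) ^ μ)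
    (hz : |z| = (β : ℝ) ^ e * ((β : ℝ) ^ μ + w)) :
    (∃ r : ℕ, (r : ℝ) ≤ ((β : ℝ) - 1) * (β : ℝ) ^ μ ∧ |(r : ℝ) - w| ≤ 1 / 2 ∧
      fl z = (if 0 ≤ z then 1 else -1) * ((β : ℝ) ^ e * ((β : ℝ) ^ μ + r))) ∧
    |fl z - z| / |z| ≤ u / (1 + max 1 (2 * w) * u) ∧
    u / (1 + max 1 (2 * w) * u) ≤ u / (1 + u) := by
  have hb2 : (2:ℝ) ≤ (β:ℝ) := by exact_mod_cast hβ
  have hb0 : (0:ℝ) < (β:ℝ) := by linarith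
  have hbe : (0:ℝ) < (β:ℝ)^e := zpow_pos hb0 e
  have hbm : (2:ℝ) ≤ (β:ℝ)^μ := le_trans hb2 (le_self_pow₀ (by linarith) (by omega))
  have hu0 : 0 < u := by rw [hu]; positivity
  set s : ℝ := if 0 ≤ z then 1 else -1 with hs
  have habs_s : |s| = 1 := by rw [hs]; split_ifs <;> simp
  have hss : s * s = 1 := by rw [hs]; split_ifs <;> norm_num
  have hzs : z = s * ((β:ℝ)^e * ((β:ℝ)^μ + w)) := by
    rcases le_or_gt 0 z with h | h
    · rw [hs, if_pos h, one_mul, ← hz, abs_of_nonneg h]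
    · rw [hs, if_neg (not_le.mpr h)]
      have := hz
      rw [abs_of_neg h] at this
      linarith [this]
  have hsz : s * z = (β:ℝ)^e * ((β:ℝ)^μ + w) := by
    rw [hzs, ← mul_assoc, hss, one_mul]
  have hFneg : F = PerfectF β μ ∨ F = IEEEF β μ emin ∨ F = MPFRF β μ emin := by
    rcases hF with h | ⟨h | h, _⟩ <;> tauto
  -- the nearest-integer candidate
  set m : ℤ := round w with hm
  have hm0 : 0 ≤ m := by
    rw [hm, round_eq]; exact Int.floor_nonneg.mpr (by linarith)
  set Rn : ℕ := (β - 1) * β ^ μ with hRn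
  have hRcast : ((Rn:ℕ):ℝ) = ((β:ℝ) - 1) * (β:ℝ)^μ := by
    rw [hRn]; push_cast [Nat.cast_sub (by omega : 1 ≤ β)]; ring
  have hmRn : m ≤ (Rn : ℤ) := by
    have h' : (m:ℝ) < ((Rn:ℤ):ℝ) + 1 := by
      rw [hm, round_eq]
      push_cast
      calc ((⌊w + 1/2⌋ : ℤ):ℝ) ≤ w + 1/2 := Int.floor_le _
        _ < (Rn:ℝ) + 1 := by rw [hRcast]; linarith
    have h'' : m < (Rn:ℤ) + 1 := by exact_mod_cast h'
    omega
  set δ : ℝ := |(m:ℝ) - w| with hδ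
  have hδ0 : (0:ℝ) ≤ δ := abs_nonneg _
  have hδhalf : δ ≤ 1/2 := by rw [hδ, abs_sub_comm]; exact abs_sub_round w
  have hδw : δ ≤ w := by
    rcases le_or_gt (1/2) w with h | h
    · linarith
    · have hm00 : m = 0 := by
        rw [hm, round_eq]
        exact Int.floor_eq_zero_iff.mpr (Set.mem_Ico.mpr ⟨by linarith, by linarith⟩)
      rw [hδ, hm00]
      simp [abs_of_nonneg hw0]
  have hmtn_cast : ((m.toNat:ℕ):ℝ) = (m:ℝ) := by exact_mod_cast Int.toNat_of_nonneg hm0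
  have hcand : (β:ℝ)^e * ((β:ℝ)^μ + ((m.toNat:ℕ):ℝ)) ∈ F := by
    apply stmt1_mem hβ hμ hF m.toNat
    rw [← hRn]; omega
  have hcand' : s * ((β:ℝ)^e * ((β:ℝ)^μ + (m:ℝ))) ∈ F := by
    rw [← hmtn_cast]
    rcases le_or_gt 0 z with h | h
    · rw [hs, if_pos h, one_mul]; exact hcand
    · rw [hs, if_neg (not_le.mpr h)]
      simpa [neg_one_mul] using stmt1_neg_mem hFneg hcand
  have hnear : |fl z - z| ≤ (β:ℝ)^e * δ := by
    refine le_trans ((hfl z).2 _ hcand') ?_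
    have hdiff : s * ((β:ℝ)^e * ((β:ℝ)^μ + (m:ℝ))) - z = s * ((β:ℝ)^e * ((m:ℝ) - w)) := by
      rw [hzs]; ring
    rw [hdiff, abs_mul, habs_s, one_mul, abs_mul, abs_of_pos hbe, ← hδ]
  -- locate fl z in F
  have hyF : s * fl z ∈ F := by
    rcases le_or_gt 0 z with h | h
    · rw [hs, if_pos h, one_mul]; exact (hfl z).1
    · rw [hs, if_neg (not_le.mpr h)]
      simpa [neg_one_mul] using stmt1_neg_mem hFneg (hfl z).1
  have hwin : |s * fl z - (β:ℝ)^e * ((β:ℝ)^μ + w)| ≤ (β:ℝ)^e * δ := by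
    have hdiff : s * fl z - (β:ℝ)^e * ((β:ℝ)^μ + w) = s * (fl z - z) := by
      rw [← hsz]; ring
    rw [hdiff, abs_mul, habs_s, one_mul]
    exact hnear
  have hwlow : (β:ℝ)^e * ((β:ℝ)^μ - 1/(β:ℝ)) < s * fl z := by
    have h' := (abs_le.mp hwin).1
    have hib : (0:ℝ) < 1/(β:ℝ) := by positivity
    have hstrict : (β:ℝ)^e * ((β:ℝ)^μ - 1/(β:ℝ)) < (β:ℝ)^e * ((β:ℝ)^μ + w - δ) :=
      mul_lt_mul_of_pos_left (by linarith) hbe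
    have hexp : (β:ℝ)^e * ((β:ℝ)^μ + w - δ) = (β:ℝ)^e * ((β:ℝ)^μ + w) - (β:ℝ)^e * δ := by
      ring
    linarith
  have hwhigh : s * fl z < (β:ℝ)^e * ((β:ℝ) * (β:ℝ)^μ + (β:ℝ)) := by
    have h' := (abs_le.mp hwin).2
    have hexpand : ((β:ℝ)-1)*(β:ℝ)^μ = (β:ℝ)*(β:ℝ)^μ - (β:ℝ)^μ := by ring
    have hstrict : (β:ℝ)^e * ((β:ℝ)^μ + w + δ) < (β:ℝ)^e * ((β:ℝ)*(β:ℝ)^μ + (β:ℝ)) :=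
      mul_lt_mul_of_pos_left (by linarith) hbe
    have hexp : (β:ℝ)^e * ((β:ℝ)^μ + w + δ) = (β:ℝ)^e * ((β:ℝ)^μ + w) + (β:ℝ)^e * δ := by
      ring
    linarith
  obtain ⟨r, hrR, hreq⟩ := stmt1_classify hβ hμ hF hyF hwlow hwhigh
  have hflz : fl z = s * ((β:ℝ)^e * ((β:ℝ)^μ + (r:ℝ))) := by
    rw [← hreq, ← mul_assoc, hss, one_mul]
  have habs_fl : |fl z - z| = (β:ℝ)^e * |(r:ℝ) - w| := by
    rw [hflz, hzs, show s * ((β:ℝ)^e * ((β:ℝ)^μ + (r:ℝ))) - s * ((β:ℝ)^e * ((β:ℝ)^μ + w))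
        = s * ((β:ℝ)^e * ((r:ℝ) - w)) from by ring,
      abs_mul, habs_s, one_mul, abs_mul, abs_of_pos hbe]
  have hrw : |(r:ℝ) - w| ≤ δ := by
    have := hnear
    rw [habs_fl] at this
    exact le_of_mul_le_mul_left this hbe
  refine ⟨⟨r, hrR, hrw.trans hδhalf, hflz⟩, ?_, ?_⟩
  · -- relative error bound
    have hBw : (0:ℝ) < (β:ℝ)^μ + w := by linarith
    have hzpos : 0 < |z| := by rw [hz]; exact mul_pos hbe hBw
    set M : ℝ := max 1 (2*w) with hM
    have hM1 : 1 ≤ M := le_max_left _ _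
    have hMpos : (0:ℝ) < 2*(β:ℝ)^μ + M := by linarith
    have hRHSeq : u / (1 + M*u) = 1/(2*(β:ℝ)^μ + M) := by
      rw [hu]
      have hne1 : (2*(β:ℝ)^μ) ≠ 0 := by positivity
      have hne2 : 2*(β:ℝ)^μ + M ≠ 0 := ne_of_gt hMpos
      field_simp
    have hkey : δ * (2*(β:ℝ)^μ + M) ≤ (β:ℝ)^μ + w := by
      rcases le_total (2*w) 1 with h | h
      · have hMeq : M = 1 := by rw [hM, max_eq_left h]
        rw [hMeq]
        have a1 : δ*(2*(β:ℝ)^μ) ≤ w*(2*(β:ℝ)^μ) :=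
          mul_le_mul_of_nonneg_right hδw (by positivity)
        have a2 : (0:ℝ) ≤ (1 - 2*w)*(β:ℝ)^μ := mul_nonneg (by linarith) (by positivity)
        nlinarith [a1, a2, hδw]
      · have hMeq : M = 2*w := by rw [hM, max_eq_right h]
        rw [hMeq]
        have a1 : (0:ℝ) ≤ (1/2 - δ)*(2*(β:ℝ)^μ + 2*w) :=
          mul_nonneg (by linarith) (by positivity)
        nlinarith [a1]
    rw [hRHSeq, div_le_div_iff₀ hzpos hMpos]
    calc |fl z - z| * (2*(β:ℝ)^μ + M) ≤ ((β:ℝ)^e * δ) * (2*(β:ℝ)^μ + M) :=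
          mul_le_mul_of_nonneg_right hnear hMpos.le
      _ = (β:ℝ)^e * (δ * (2*(β:ℝ)^μ + M)) := by ring
      _ ≤ (β:ℝ)^e * ((β:ℝ)^μ + w) := mul_le_mul_of_nonneg_left hkey hbe.le
      _ = 1 * |z| := by rw [hz]; ring
  · -- monotonicity in the denominator
    have hM1 : 1 ≤ max 1 (2*w) := le_max_left _ _
    have h1u : (0:ℝ) < 1 + u := by linarith
    have h2u : 1 + u ≤ 1 + max 1 (2*w) * u := by
      have := mul_le_mul_of_nonneg_right hM1 hu0.le
      linarith
    rw [div_le_div_iff₀ (by linarith) h1u]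
    have := mul_le_mul_of_nonneg_left h2u hu0.le
    linarith
end
end

section
/- Under the hypotheses of the sharp-epsilon lemma (fl rounds to nearest, |z| = β^e(β^μ+w), fl(z) = sign(z)β^e(β^μ+r) with |r−w| ≤ 1/2), one has |fl(z) − z|/|z| ≤ u/(1 + (2r−1)u) and |fl(z) − z|/|fl(z)| ≤ u/(1 + 2ru). -/
noncomputable section

theorem stmt2 (β μ : ℕ) (hβ : 2 ≤ β) (hμ : 1 ≤ μ)
    (F : Set ℝ) (e : ℤ) (fl : ℝ → ℝ) (z w u : ℝ) (r : ℕ)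
    (hu : u = 1 / (2 * (β : ℝ) ^ μ))
    (hfl : RTN F fl)
    (hw0 : 0 ≤ w) (hw1 : w ≤ ((β : ℝ) - 1) * (β : ℝ) ^ μ)
    (hr : (r : ℝ) ≤ ((β : ℝ) - 1) * (β : ℝ) ^ μ)
    (hrw : |(r : ℝ) - w| ≤ 1 / 2)
    (hz : |z| = (β : ℝ) ^ e * ((β : ℝ) ^ μ + w))
    (hflz : fl z = (if 0 ≤ z then 1 else -1) * ((β : ℝ) ^ e * ((β : ℝ) ^ μ + r))) :
    |fl z - z| / |z| ≤ u / (1 + (2 * (r : ℝ) - 1) * u) ∧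
    |fl z - z| / |fl z| ≤ u / (1 + 2 * (r : ℝ) * u) := by
  set B : ℝ := (β : ℝ) ^ e with hBdef
  set M : ℝ := (β : ℝ) ^ μ with hMdef
  have hβ0 : (0:ℝ) < β := by positivity
  have hB : (0:ℝ) < B := by positivity
  have hM2 : (2:ℝ) ≤ M := by
    calc (2:ℝ) ≤ (β:ℝ) := by exact_mod_cast hβ
    _ ≤ (β:ℝ) ^ μ := le_self_pow₀ (by exact_mod_cast Nat.one_le_of_lt hβ) (by omega)
  have hr0 : (0:ℝ) ≤ (r:ℝ) := Nat.cast_nonneg r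
  have hrw' := abs_le.mp hrw
  have habs : |fl z - z| = B * |(r:ℝ) - w| := by
    by_cases h0 : 0 ≤ z
    · have hz' : z = B * (M + w) := by rw [abs_of_nonneg h0] at hz; exact hz
      have : fl z - z = B * ((r:ℝ) - w) := by rw [hflz, if_pos h0, hz']; ring
      rw [this, abs_mul, abs_of_pos hB]
    · have hz' : z = -(B * (M + w)) := by
        rw [abs_of_neg (lt_of_not_ge h0)] at hz; linarith
      have : fl z - z = -(B * ((r:ℝ) - w)) := by rw [hflz, if_neg h0, hz']; ring
      rw [this, abs_neg, abs_mul, abs_of_pos hB]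
  have hlez : |fl z - z| ≤ B * (1/2) := by
    rw [habs]; exact mul_le_mul_of_nonneg_left hrw hB.le
  have hzabs : |z| = B * (M + w) := hz
  have hzpos : (0:ℝ) < |z| := by rw [hzabs]; positivity
  have hflabs : |fl z| = B * (M + (r:ℝ)) := by
    have hx : (0:ℝ) ≤ B * (M + (r:ℝ)) := by positivity
    rw [hflz]; split_ifs <;> simp [abs_mul, abs_of_nonneg hx]
  have hflpos : (0:ℝ) < |fl z| := by rw [hflabs]; positivity
  have hMpos : (0:ℝ) < M := by linarith
  have hd1 : (0:ℝ) < 2*M + 2*(r:ℝ) - 1 := by linarith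
  have hd2 : (0:ℝ) < 2*M + 2*(r:ℝ) := by linarith
  have hupos : (0:ℝ) < u := by rw [hu]; positivity
  have hule : u ≤ 1/4 := by
    rw [hu, div_le_div_iff₀ (by positivity) (by norm_num)]; linarith
  constructor
  · have hR : u / (1 + (2*(r:ℝ) - 1) * u) = 1 / (2*M + 2*(r:ℝ) - 1) := by
      have hden : (0:ℝ) < 1 + (2*(r:ℝ) - 1) * u := by nlinarith
      rw [div_eq_div_iff hden.ne' hd1.ne', hu]; field_simp; ring
    rw [hR, div_le_div_iff₀ hzpos hd1, hzabs]
    nlinarith [hlez, hrw'.1, hrw'.2]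
  · have hR : u / (1 + 2*(r:ℝ) * u) = 1 / (2*M + 2*(r:ℝ)) := by
      have hden : (0:ℝ) < 1 + 2*(r:ℝ) * u := by nlinarith
      rw [div_eq_div_iff hden.ne' hd2.ne', hu]; field_simp
    rw [hR, div_le_div_iff₀ hflpos hd2, hflabs]
    calc |fl z - z| * (2*M + 2*(r:ℝ)) ≤ (B*(1/2)) * (2*M + 2*(r:ℝ)) :=
          mul_le_mul_of_nonneg_right hlez hd2.le
      _ = 1 * (B * (M + (r:ℝ))) := by ring
end
end

section
/- If x and y are elements of a floating point system F and α ≤ |x+y| ≤ βν, then x + y ∈ F (the sum is exact). Here α is the smallest positive element of F and ν the smallest positive normal number. -/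
noncomputable section

lemma Eset_int (β μ : ℕ) (hβ : 2 ≤ β) {emin e : ℤ} (he : emin ≤ e) {x : ℝ}
    (hx : x ∈ Eset β μ e) : ∃ m : ℤ, x = (β:ℝ)^emin * m := by
  obtain ⟨r, hr, hxe⟩ := hx
  have hβ0 : (β:ℝ) ≠ 0 := by positivity
  refine ⟨(β:ℤ)^(e-emin).toNat * ((β:ℤ)^μ + r), ?_⟩
  have hk : ((e-emin).toNat : ℤ) = e - emin := Int.toNat_of_nonneg (by omega)
  have hβe : (β:ℝ)^e = (β:ℝ)^emin * (β:ℝ)^((e-emin).toNat) := by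
    rw [← zpow_natCast (β:ℝ) (e-emin).toNat, hk, ← zpow_add₀ hβ0]
    congr 1; omega
  rw [hxe, hβe]; push_cast; ring

lemma mem_int (β μ : ℕ) (hβ : 2 ≤ β) {emin : ℤ} {x : ℝ}
    (hx : x ∈ IEEEF β μ emin) : ∃ m : ℤ, x = (β:ℝ)^emin * m := by
  rcases hx with (h | ⟨e, he, h | h⟩) | ⟨r, _, _, h | h⟩
  · exact ⟨0, by simp [h]⟩
  · exact Eset_int β μ hβ he h
  · obtain ⟨m, hm⟩ := Eset_int β μ hβ he h
    exact ⟨-m, by push_cast; linarith⟩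
  · exact ⟨r, by push_cast [h]; ring⟩
  · exact ⟨-r, by push_cast [h]; ring⟩

lemma neg_memM (β μ : ℕ) {emin : ℤ} {x : ℝ} (hx : x ∈ MPFRF β μ emin) :
    -x ∈ MPFRF β μ emin := by
  rcases hx with h | ⟨e, he, h | h⟩
  · left; simp [h]
  · exact Or.inr ⟨e, he, Or.inr (by simpa using h)⟩
  · exact Or.inr ⟨e, he, Or.inl h⟩

lemma neg_memI (β μ : ℕ) {emin : ℤ} {x : ℝ} (hx : x ∈ IEEEF β μ emin) :
    -x ∈ IEEEF β μ emin := by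
  rcases hx with h | ⟨r, h1, h2, h3 | h3⟩
  · exact Or.inl (neg_memM β μ h)
  · exact Or.inr ⟨r, h1, h2, Or.inr (by rw [h3])⟩
  · exact Or.inr ⟨r, h1, h2, Or.inl (by rw [h3]; ring)⟩

lemma repr_memM (β μ : ℕ) (hβ : 2 ≤ β) (emin : ℤ) {n : ℕ}
    (hn1 : β^μ ≤ n) (hn2 : n ≤ β^(μ+1)) :
    (β:ℝ)^emin * n ∈ MPFRF β μ emin := by
  have hβ0 : (β:ℝ) ≠ 0 := by positivity
  have hp : 0 < β^μ := pow_pos (by omega) μ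
  have hs : β^(μ+1) = β * β^μ := by ring
  by_cases h : n < β * β^μ
  · refine Or.inr ⟨emin, le_refl _, Or.inl ⟨n - β^μ, ?_, ?_⟩⟩
    · have h2 : (β-1)*β^μ = β*β^μ - β^μ := by
        rw [Nat.sub_mul, one_mul]
      omega
    · push_cast [Nat.cast_sub hn1]; ring
  · have hn : n = β^(μ+1) := by omega
    refine Or.inr ⟨emin+1, by omega, Or.inl ⟨0, ?_, ?_⟩⟩
    · exact Nat.mul_pos (by omega) hp
    · have hz : (β:ℝ)^(emin+1) = (β:ℝ)^emin * β := by rw [zpow_add₀ hβ0, zpow_one]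
      rw [hn, hz]; push_cast; ring

lemma repr_memI (β μ : ℕ) (hβ : 2 ≤ β) (emin : ℤ) {n : ℕ}
    (hn1 : 1 ≤ n) (hn2 : n ≤ β^(μ+1)) :
    (β:ℝ)^emin * n ∈ IEEEF β μ emin := by
  by_cases h : n < β^μ
  · exact Or.inr ⟨n, hn1, h, Or.inl rfl⟩
  · exact Or.inl (repr_memM β μ hβ emin (by omega) hn2)

lemma key (β μ : ℕ) (hβ : 2 ≤ β) (emin : ℤ) {m : ℤ} (hm : m ≠ 0)
    (hm2 : m.natAbs ≤ β^(μ+1)) :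
    (β:ℝ)^emin * m ∈ IEEEF β μ emin := by
  set n := m.natAbs with hnd
  have hrep : (β:ℝ)^emin * n ∈ IEEEF β μ emin :=
    repr_memI β μ hβ emin (by omega) hm2
  have hcn : ((n:ℕ):ℝ) = |(m:ℝ)| := by rw [hnd, Nat.cast_natAbs]; exact_mod_cast rfl
  rcases le_or_gt 0 m with h | h
  · have hc : (m:ℝ) = (n:ℝ) := by
      rw [hcn, abs_of_nonneg (by exact_mod_cast h : (0:ℝ) ≤ (m:ℝ))]
    rwa [hc]
  · have hc : (m:ℝ) = -(n:ℝ) := by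
      rw [hcn, abs_of_neg (by exact_mod_cast h : (m:ℝ) < 0)]; ring
    rw [hc, mul_neg]
    exact neg_memI β μ hrep

lemma keyM (β μ : ℕ) (hβ : 2 ≤ β) (emin : ℤ) {m : ℤ} (hm : β^μ ≤ m.natAbs)
    (hm2 : m.natAbs ≤ β^(μ+1)) :
    (β:ℝ)^emin * m ∈ MPFRF β μ emin := by
  set n := m.natAbs with hnd
  have hrep : (β:ℝ)^emin * n ∈ MPFRF β μ emin := repr_memM β μ hβ emin hm hm2
  have hcn : ((n:ℕ):ℝ) = |(m:ℝ)| := by rw [hnd, Nat.cast_natAbs]; exact_mod_cast rfl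
  rcases le_or_gt 0 m with h | h
  · have hc : (m:ℝ) = (n:ℝ) := by
      rw [hcn, abs_of_nonneg (by exact_mod_cast h : (0:ℝ) ≤ (m:ℝ))]
    rwa [hc]
  · have hc : (m:ℝ) = -(n:ℝ) := by
      rw [hcn, abs_of_neg (by exact_mod_cast h : (m:ℝ) < 0)]; ring
    rw [hc, mul_neg]
    exact neg_memM β μ hrep

theorem stmt3 (β μ : ℕ) (hβ : 2 ≤ β) (hμ : 1 ≤ μ) (emin : ℤ)
    (hemin : emin < -(μ : ℤ))
    (F : Set ℝ) (a ν : ℝ)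
    (hF : (F = PerfectF β μ ∧ a = 0 ∧ ν = 0) ∨
          (F = IEEEF β μ emin ∧ a = (β : ℝ) ^ emin ∧ ν = (β : ℝ) ^ (emin + μ)) ∨
          (F = MPFRF β μ emin ∧ a = (β : ℝ) ^ (emin + μ) ∧ ν = (β : ℝ) ^ (emin + μ)))
    (x y : ℝ) (hx : x ∈ F) (hy : y ∈ F)
    (h1 : a ≤ |x + y|) (h2 : |x + y| ≤ (β : ℝ) * ν) :
    x + y ∈ F := by
  have hβR : (0:ℝ) < (β:ℝ) := by exact_mod_cast (by omega : (0:ℕ) < β)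
  have hβne : (β:ℝ) ≠ 0 := ne_of_gt hβR
  have hpe : (0:ℝ) < (β:ℝ)^emin := zpow_pos hβR emin
  rcases hF with ⟨hFe, ha, hν⟩ | ⟨hFe, ha, hν⟩ | ⟨hFe, ha, hν⟩
  · subst hFe; subst hν
    have hz : x + y = 0 := by
      have h0 := abs_nonneg (x + y)
      have : |x+y| = 0 := le_antisymm (by simpa using h2) h0
      exact abs_eq_zero.mp this
    exact Or.inl hz
  · subst hFe; subst ha; subst hν
    obtain ⟨mx, hmx⟩ := mem_int β μ hβ hx
    obtain ⟨my, hmy⟩ := mem_int β μ hβ hy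
    set m := mx + my with hm
    have hsum : x + y = (β:ℝ)^emin * m := by rw [hmx, hmy]; push_cast [hm]; ring
    have habs : |x+y| = (β:ℝ)^emin * |(m:ℝ)| := by
      rw [hsum, abs_mul, abs_of_pos hpe]
    -- m ≠ 0
    have hm0 : m ≠ 0 := by
      intro h
      rw [habs, h] at h1; simp at h1; linarith
    -- natAbs bound
    have hbnd : m.natAbs ≤ β^(μ+1) := by
      have hrhs : (β:ℝ) * (β:ℝ)^(emin+(μ:ℤ)) = (β:ℝ)^emin * ((β^(μ+1):ℕ):ℝ) := by
        rw [zpow_add₀ hβne, zpow_natCast]; push_cast; ring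
      rw [habs, hrhs] at h2
      have h3 : |(m:ℝ)| ≤ ((β^(μ+1):ℕ):ℝ) := le_of_mul_le_mul_left h2 hpe
      have h4 : ((m.natAbs : ℕ):ℝ) ≤ ((β^(μ+1):ℕ):ℝ) := by
        rwa [Nat.cast_natAbs, (by exact_mod_cast rfl : ((|m|:ℤ):ℝ) = |(m:ℝ)|)]
      exact_mod_cast h4
    rw [hsum]
    exact key β μ hβ emin hm0 hbnd
  · subst hFe; subst ha; subst hν
    obtain ⟨mx, hmx⟩ := mem_int β μ hβ (Set.mem_union_left _ hx)
    obtain ⟨my, hmy⟩ := mem_int β μ hβ (Set.mem_union_left _ hy)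
    set m := mx + my with hm
    have hsum : x + y = (β:ℝ)^emin * m := by rw [hmx, hmy]; push_cast [hm]; ring
    have habs : |x+y| = (β:ℝ)^emin * |(m:ℝ)| := by
      rw [hsum, abs_mul, abs_of_pos hpe]
    have hcast : ((m.natAbs : ℕ):ℝ) = |(m:ℝ)| := by
      rw [Nat.cast_natAbs]; exact_mod_cast rfl
    have hlow : β^μ ≤ m.natAbs := by
      have hlhs : (β:ℝ)^(emin+(μ:ℤ)) = (β:ℝ)^emin * ((β^μ:ℕ):ℝ) := by
        rw [zpow_add₀ hβne, zpow_natCast]; push_cast; ring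
      rw [habs, hlhs] at h1
      have h3 : ((β^μ:ℕ):ℝ) ≤ |(m:ℝ)| := le_of_mul_le_mul_left h1 hpe
      rw [← hcast] at h3
      exact_mod_cast h3
    have hbnd : m.natAbs ≤ β^(μ+1) := by
      have hrhs : (β:ℝ) * (β:ℝ)^(emin+(μ:ℤ)) = (β:ℝ)^emin * ((β^(μ+1):ℕ):ℝ) := by
        rw [zpow_add₀ hβne, zpow_natCast]; push_cast; ring
      rw [habs, hrhs] at h2
      have h3 : |(m:ℝ)| ≤ ((β^(μ+1):ℕ):ℝ) := le_of_mul_le_mul_left h2 hpe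
      rw [← hcast] at h3
      exact_mod_cast h3
    rw [hsum]
    exact keyM β μ hβ emin hlow hbnd
end
end

section
/- In an IEEE floating point system F (with subnormal numbers), if x, y ∈ F and 0 < |x+y| ≤ βν, then |x+y| ≥ α and x+y ∈ F; consequently any nonzero sum of two floating point numbers of absolute value at most βν is itself a floating point number. -/
noncomputable section

/-!
Every element of `IEEEF β μ emin` is an integer multiple of `α = β ^ emin`, so `x + y = α * k`
with `k : ℤ`; the hypotheses give `1 ≤ |k| ≤ β ^ (μ + 1)`. Conversely every such multiple is
representable: as a subnormal for `|k| < β ^ μ`, as a normal number of exponent `emin` for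
`β ^ μ ≤ |k| < β ^ (μ + 1)`, and as `β ^ (emin + 1) * β ^ μ` at the top.
-/

theorem neg_mem_IEEEF {β μ : ℕ} {emin : ℤ} {z : ℝ} (hz : z ∈ IEEEF β μ emin) :
    -z ∈ IEEEF β μ emin := by
  rcases hz with (rfl | ⟨e, he, hE | hE⟩) | ⟨r, hr1, hr2, rfl | rfl⟩
  · simp [IEEEF, MPFRF]
  · exact Or.inl (Or.inr ⟨e, he, Or.inr (by rwa [neg_neg])⟩)
  · exact Or.inl (Or.inr ⟨e, he, Or.inl hE⟩)
  · exact Or.inr ⟨r, hr1, hr2, Or.inr rfl⟩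
  · exact Or.inr ⟨r, hr1, hr2, Or.inl (neg_neg _)⟩

theorem exists_int_mul_of_mem_Eset {β μ : ℕ} (hβ : β ≠ 0) {emin e : ℤ} (he : emin ≤ e)
    {z : ℝ} (hz : z ∈ Eset β μ e) : ∃ m : ℤ, z = (β : ℝ) ^ emin * m := by
  obtain ⟨r, -, rfl⟩ := hz
  obtain ⟨d, rfl⟩ := Int.le.dest he
  refine ⟨β ^ d * (β ^ μ + r), ?_⟩
  rw [zpow_add₀ (Nat.cast_ne_zero.mpr hβ), zpow_natCast]
  push_cast
  ring

theorem exists_int_mul_of_mem_IEEEF {β μ : ℕ} (hβ : β ≠ 0) {emin : ℤ} {z : ℝ}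
    (hz : z ∈ IEEEF β μ emin) : ∃ m : ℤ, z = (β : ℝ) ^ emin * m := by
  rcases hz with (rfl | ⟨e, he, hE | hE⟩) | ⟨r, -, -, rfl | rfl⟩
  · exact ⟨0, by simp⟩
  · exact exists_int_mul_of_mem_Eset hβ he hE
  · obtain ⟨m, hm⟩ := exists_int_mul_of_mem_Eset hβ he hE
    exact ⟨-m, by push_cast; linarith⟩
  · exact ⟨r, by push_cast; ring⟩
  · exact ⟨-r, by push_cast; ring⟩

theorem zpow_mul_natCast_mem_Eset {β μ : ℕ} (e : ℤ) {k : ℕ} (hk₁ : β ^ μ ≤ k)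
    (hk₂ : k < β ^ (μ + 1)) : (β : ℝ) ^ e * k ∈ Eset β μ e := by
  refine ⟨k - β ^ μ, ?_, by push_cast [hk₁]; ring⟩
  rw [Nat.sub_mul, one_mul, ← pow_succ']
  omega

theorem zpow_mul_natCast_mem_IEEEF {β μ : ℕ} (hβ : 2 ≤ β) (emin : ℤ) {k : ℕ}
    (hk₀ : k ≠ 0) (hk : k ≤ β ^ (μ + 1)) : (β : ℝ) ^ emin * k ∈ IEEEF β μ emin := by
  rcases lt_or_ge k (β ^ μ) with hsub | hnormal
  · exact Or.inr ⟨k, Nat.one_le_iff_ne_zero.mpr hk₀, hsub, Or.inl rfl⟩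
  rcases hk.lt_or_eq with hlt | rfl
  · exact Or.inl (Or.inr ⟨emin, le_rfl, Or.inl (zpow_mul_natCast_mem_Eset emin hnormal hlt)⟩)
  refine Or.inl (Or.inr ⟨emin + 1, by omega, Or.inl ⟨0, ?_, ?_⟩⟩)
  · exact Nat.mul_pos (by omega) (by positivity)
  · rw [zpow_add_one₀ (by positivity), pow_succ']
    push_cast
    ring

theorem zpow_mul_intCast_mem_IEEEF {β μ : ℕ} (hβ : 2 ≤ β) (emin : ℤ) {k : ℤ}
    (hk₀ : k ≠ 0) (hk : |k| ≤ β ^ (μ + 1)) :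
    (β : ℝ) ^ emin * k ∈ IEEEF β μ emin := by
  obtain ⟨n, rfl | rfl⟩ := Int.eq_nat_or_neg k
  · rw [Nat.abs_cast] at hk
    exact_mod_cast zpow_mul_natCast_mem_IEEEF hβ emin (by omega) (by exact_mod_cast hk)
  · rw [abs_neg, Nat.abs_cast] at hk
    have hpos := zpow_mul_natCast_mem_IEEEF hβ emin (k := n) (by omega) (by exact_mod_cast hk)
    simpa using neg_mem_IEEEF hpos

theorem stmt4_general (β μ : ℕ) (hβ : 2 ≤ β) (emin : ℤ)
    (x y : ℝ) (hx : x ∈ IEEEF β μ emin) (hy : y ∈ IEEEF β μ emin)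
    (h1 : 0 < |x + y|) (h2 : |x + y| ≤ (β : ℝ) * (β : ℝ) ^ (emin + μ)) :
    (β : ℝ) ^ emin ≤ |x + y| ∧ x + y ∈ IEEEF β μ emin := by
  have hα : (0 : ℝ) < (β : ℝ) ^ emin := zpow_pos (by positivity) _
  obtain ⟨m, hm⟩ := exists_int_mul_of_mem_IEEEF (by omega) hx
  obtain ⟨n, hn⟩ := exists_int_mul_of_mem_IEEEF (by omega) hy
  have hsum : x + y = (β : ℝ) ^ emin * ((m + n : ℤ) : ℝ) := by rw [hm, hn]; push_cast; ring
  have habs : |x + y| = (β : ℝ) ^ emin * |((m + n : ℤ) : ℝ)| := by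
    rw [hsum, abs_mul, abs_of_pos hα]
  have hk₀ : m + n ≠ 0 := by rintro h; simp [habs, h] at h1
  have hk₁ : (1 : ℝ) ≤ |((m + n : ℤ) : ℝ)| := by
    exact_mod_cast Int.one_le_abs hk₀
  have hk₂ : |m + n| ≤ (β : ℤ) ^ (μ + 1) := by
    have hbound :
        (β : ℝ) * (β : ℝ) ^ (emin + μ) = (β : ℝ) ^ emin * ((β : ℤ) ^ (μ + 1) : ℤ) := by
      rw [zpow_add₀ (by positivity), zpow_natCast]
      push_cast
      ring
    rw [habs, hbound] at h2
    exact_mod_cast le_of_mul_le_mul_left h2 hα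
  refine ⟨?_, hsum ▸ zpow_mul_intCast_mem_IEEEF hβ emin hk₀ hk₂⟩
  rw [habs]
  exact le_mul_of_one_le_right hα.le hk₁

theorem stmt4 (β μ : ℕ) (hβ : 2 ≤ β) (hμ : 1 ≤ μ) (emin : ℤ)
    (hemin : emin < -(μ : ℤ))
    (x y : ℝ) (hx : x ∈ IEEEF β μ emin) (hy : y ∈ IEEEF β μ emin)
    (h1 : 0 < |x + y|) (h2 : |x + y| ≤ (β : ℝ) * (β : ℝ) ^ (emin + μ)) :
    (β : ℝ) ^ emin ≤ |x + y| ∧ x + y ∈ IEEEF β μ emin :=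
  stmt4_general β μ hβ emin x y hx hy h1 h2
end
end

section
/- Sterbenz's Lemma with underflow threshold: if a, b belong to a floating point system F and α ≤ b − a ≤ a, where α is the smallest positive element of F, then b − a ∈ F. -/
noncomputable section

namespace SterbAux

variable {β μ : ℕ}

lemma bR_pos (hβ : 2 ≤ β) : (0:ℝ) < β := by exact_mod_cast (by omega : 0 < β)
lemma bR_one_lt (hβ : 2 ≤ β) : (1:ℝ) < β := by exact_mod_cast (by omega : 1 < β)

/-- normalization of a small natural by multiplying by powers of β -/
lemma norm_nat (hβ : 2 ≤ β) :
    ∀ d m : ℕ, β ^ (μ+1) - m ≤ d → 1 ≤ m → m < β ^ (μ+1) →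
      ∃ k : ℕ, β ^ μ ≤ m * β ^ k ∧ m * β ^ k < β ^ (μ+1) := by
  intro d
  induction d with
  | zero => intro m hd h1 h2; omega
  | succ d ih =>
    intro m hd h1 h2
    by_cases hm : β ^ μ ≤ m
    · exact ⟨0, by simpa using hm, by simpa using h2⟩
    · push_neg at hm
      have hmb : m * β < β ^ (μ+1) := by
        calc m * β < β ^ μ * β := mul_lt_mul_of_pos_right hm (by omega)
          _ = β ^ (μ+1) := by ring
      have hmb1 : m + 1 ≤ m * β := by nlinarith
      obtain ⟨k, hk1, hk2⟩ := ih (m * β) (by omega) (by omega) hmb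
      exact ⟨k+1, by calc β ^ μ ≤ m * β * β ^ k := hk1
                      _ = m * β ^ (k+1) := by ring,
             by calc m * β ^ (k+1) = m * β * β ^ k := by ring
                  _ < β ^ (μ+1) := hk2⟩

lemma norm_nat' (hβ : 2 ≤ β) (m : ℕ) (h1 : 1 ≤ m) (h2 : m < β ^ (μ+1)) :
    ∃ k : ℕ, β ^ μ ≤ m * β ^ k ∧ m * β ^ k < β ^ (μ+1) :=
  norm_nat hβ _ m le_rfl h1 h2

lemma mem_Eset_of (hβ : 2 ≤ β) (e : ℤ) (m : ℕ) (h1 : β ^ μ ≤ m) (h2 : m < β ^ (μ+1)) :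
    (m : ℝ) * (β : ℝ) ^ e ∈ Eset β μ e := by
  refine ⟨m - β ^ μ, by
    have : β ^ (μ+1) = β ^ μ + (β - 1) * β ^ μ := by
      have : 1 + (β - 1) = β := by omega
      calc β ^ (μ+1) = (1 + (β-1)) * β ^ μ := by rw [this]; ring
        _ = β ^ μ + (β - 1) * β ^ μ := by ring
    omega, ?_⟩
  have : ((m - β ^ μ : ℕ) : ℝ) = (m : ℝ) - (β : ℝ) ^ μ := by
    push_cast [h1]; ring
  rw [this]; ring

lemma Eset_pos (hβ : 2 ≤ β) {e : ℤ} {x : ℝ} (hx : x ∈ Eset β μ e) : 0 < x := by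
  obtain ⟨r, hr, rfl⟩ := hx
  have h1 : (0:ℝ) < (β:ℝ) ^ e := zpow_pos (bR_pos hβ) e
  have h2 : (0:ℝ) < (β:ℝ) ^ μ := pow_pos (bR_pos hβ) μ
  have h3 : (0:ℝ) ≤ (r:ℝ) := Nat.cast_nonneg r
  nlinarith

lemma rep_of_Eset (hβ : 2 ≤ β) {e : ℤ} {x : ℝ} (hx : x ∈ Eset β μ e) :
    ∃ m : ℕ, β ^ μ ≤ m ∧ m < β ^ (μ+1) ∧ x = (m : ℝ) * (β : ℝ) ^ e := by
  obtain ⟨r, hr, rfl⟩ := hx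
  refine ⟨β ^ μ + r, le_add_of_nonneg_right (Nat.zero_le r), ?_, by push_cast; ring⟩
  have : β ^ (μ+1) = β ^ μ + (β - 1) * β ^ μ := by
    have h : 1 + (β - 1) = β := by omega
    calc β ^ (μ+1) = (1 + (β-1)) * β ^ μ := by rw [h]; ring
      _ = β ^ μ + (β - 1) * β ^ μ := by ring
  omega

/-- upper bound: x = m β^e with m < β^(μ+1) gives x < β^(e+μ+1) -/
lemma rep_lt (hβ : 2 ≤ β) {e : ℤ} {m : ℕ} (h2 : m < β ^ (μ+1)) :
    (m : ℝ) * (β : ℝ) ^ e < (β : ℝ) ^ (e + μ + 1) := by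
  have hb := bR_pos hβ
  have hcast : ((m : ℝ)) < (β : ℝ) ^ (μ+1) := by exact_mod_cast h2
  have : (β : ℝ) ^ (e + μ + 1) = (β:ℝ) ^ ((μ:ℕ)+1) * (β:ℝ) ^ e := by
    rw [← zpow_natCast (β:ℝ) (μ+1), ← zpow_add₀ (ne_of_gt hb)]
    congr 1; push_cast; ring
  rw [this]
  exact mul_lt_mul_of_pos_right hcast (zpow_pos hb e)

lemma rep_ge (hβ : 2 ≤ β) {e : ℤ} {m : ℕ} (h1 : β ^ μ ≤ m) :
    (β : ℝ) ^ (e + μ) ≤ (m : ℝ) * (β : ℝ) ^ e := by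
  have hb := bR_pos hβ
  have hcast : ((β:ℝ) ^ μ) ≤ (m : ℝ) := by exact_mod_cast h1
  have : (β : ℝ) ^ (e + μ) = (β:ℝ) ^ (μ:ℕ) * (β:ℝ) ^ e := by
    rw [← zpow_natCast (β:ℝ) μ, ← zpow_add₀ (ne_of_gt hb)]
    congr 1; ring
  rw [this]
  exact mul_le_mul_of_nonneg_right hcast (le_of_lt (zpow_pos hb e))

lemma zpow_lt_iff (hβ : 2 ≤ β) {e1 e2 : ℤ} :
    (β:ℝ) ^ e1 < (β:ℝ) ^ e2 ↔ e1 < e2 :=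
  zpow_lt_zpow_iff_right₀ (bR_one_lt hβ)

lemma mem_perfect_of_rep (hβ : 2 ≤ β) (e : ℤ) (m : ℕ) (h2 : m < β ^ (μ+1)) :
    (m : ℝ) * (β : ℝ) ^ e ∈ PerfectF β μ := by
  rcases Nat.eq_zero_or_pos m with rfl | h1
  · left; simp
  obtain ⟨k, hk1, hk2⟩ := norm_nat' hβ m h1 h2
  right
  refine ⟨e - k, Or.inl ?_⟩
  have hx : (m : ℝ) * (β : ℝ) ^ e = ((m * β ^ k : ℕ) : ℝ) * (β : ℝ) ^ (e - k) := by
    have hb := ne_of_gt (bR_pos hβ)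
    push_cast
    rw [mul_assoc, ← zpow_natCast (β:ℝ) k, ← zpow_add₀ hb]
    congr 2; ring
  rw [hx]
  exact mem_Eset_of hβ _ _ hk1 hk2

lemma mem_mpfr_of_rep (hβ : 2 ≤ β) (emin : ℤ) (e : ℤ) (m : ℕ) (he : emin ≤ e)
    (h2 : m < β ^ (μ+1))
    (hx : (m : ℝ) * (β : ℝ) ^ e = 0 ∨ (β:ℝ) ^ (emin + μ) ≤ (m : ℝ) * (β : ℝ) ^ e) :
    (m : ℝ) * (β : ℝ) ^ e ∈ MPFRF β μ emin := by
  rcases Nat.eq_zero_or_pos m with rfl | h1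
  · left; simp
  have hb := bR_pos hβ
  have hxpos : (0:ℝ) < (m : ℝ) * (β : ℝ) ^ e := by
    apply mul_pos (by exact_mod_cast h1) (zpow_pos hb e)
  have hxge : (β:ℝ) ^ (emin + μ) ≤ (m : ℝ) * (β : ℝ) ^ e := by
    rcases hx with h | h
    · linarith
    · exact h
  obtain ⟨k, hk1, hk2⟩ := norm_nat' hβ m h1 h2
  have hx : (m : ℝ) * (β : ℝ) ^ e = ((m * β ^ k : ℕ) : ℝ) * (β : ℝ) ^ (e - k) := by
    push_cast
    rw [mul_assoc, ← zpow_natCast (β:ℝ) k, ← zpow_add₀ (ne_of_gt hb)]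
    congr 2; ring
  have hub : (m : ℝ) * (β : ℝ) ^ e < (β:ℝ) ^ (e - k + μ + 1) := by
    rw [hx]; exact rep_lt hβ hk2
  have hee : emin ≤ e - k := by
    have := lt_of_le_of_lt hxge hub
    rw [zpow_lt_iff hβ] at this
    omega
  right
  refine ⟨e - k, hee, Or.inl ?_⟩
  rw [hx]
  exact mem_Eset_of hβ _ _ hk1 hk2

lemma mem_ieee_of_rep (hβ : 2 ≤ β) (emin : ℤ) (e : ℤ) (m : ℕ) (he : emin ≤ e)
    (h2 : m < β ^ (μ+1)) :
    (m : ℝ) * (β : ℝ) ^ e ∈ IEEEF β μ emin := by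
  rcases Nat.eq_zero_or_pos m with rfl | h1
  · left; left; simp
  have hb := bR_pos hβ
  obtain ⟨k, hk1, hk2⟩ := norm_nat' hβ m h1 h2
  have hx : (m : ℝ) * (β : ℝ) ^ e = ((m * β ^ k : ℕ) : ℝ) * (β : ℝ) ^ (e - k) := by
    push_cast
    rw [mul_assoc, ← zpow_natCast (β:ℝ) k, ← zpow_add₀ (ne_of_gt hb)]
    congr 2; ring
  by_cases hek : emin ≤ e - k
  · left; right
    refine ⟨e - k, hek, Or.inl ?_⟩
    rw [hx]
    exact mem_Eset_of hβ _ _ hk1 hk2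
  · -- subnormal case
    push_neg at hek
    right
    set N : ℕ := m * β ^ (e - emin).toNat with hN
    have heemin : ((e - emin).toNat : ℤ) = e - emin := Int.toNat_of_nonneg (by omega)
    have hxN : (m : ℝ) * (β : ℝ) ^ e = (β:ℝ) ^ emin * (N:ℝ) := by
      have hsplit : (β:ℝ) ^ e = (β:ℝ) ^ emin * (β:ℝ) ^ (e - emin) := by
        rw [← zpow_add₀ (ne_of_gt hb)]; congr 1; ring
      rw [hN]; push_cast
      rw [← zpow_natCast (β:ℝ) (e-emin).toNat, heemin, hsplit]; ring
    have hN1 : 1 ≤ N := Nat.one_le_iff_ne_zero.mpr (by positivity)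
    have hub : (m : ℝ) * (β : ℝ) ^ e < (β:ℝ) ^ (emin + μ) := by
      calc (m : ℝ) * (β : ℝ) ^ e = ((m * β ^ k : ℕ) : ℝ) * (β : ℝ) ^ (e - k) := hx
        _ < (β:ℝ) ^ (e - k + μ + 1) := rep_lt hβ hk2
        _ ≤ (β:ℝ) ^ (emin + μ) := by
            apply zpow_le_zpow_right₀ (le_of_lt (bR_one_lt hβ))
            omega
    have hNlt : N < β ^ μ := by
      have h1' : (β:ℝ) ^ emin * (N:ℝ) < (β:ℝ) ^ (emin + μ) := by rw [← hxN]; exact hub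
      have h2' : (β:ℝ) ^ (emin + μ) = (β:ℝ) ^ emin * (β:ℝ) ^ (μ:ℕ) := by
        rw [← zpow_natCast (β:ℝ) μ, ← zpow_add₀ (ne_of_gt hb)]
      rw [h2'] at h1'
      have := lt_of_mul_lt_mul_left h1' (le_of_lt (zpow_pos hb emin))
      exact_mod_cast this
    exact ⟨N, hN1, hNlt, Or.inl hxN⟩

/-- canonical representation of a positive element, with normality flag -/
lemma rep_of_Eset' (hβ : 2 ≤ β) {x : ℝ} {e : ℤ} (hx : x ∈ Eset β μ e) :
    ∃ m : ℕ, β ^ μ ≤ m ∧ m < β ^ (μ+1) ∧ x = (m:ℝ) * (β:ℝ) ^ e := rep_of_Eset hβ hx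

lemma rep_of_perfect (hβ : 2 ≤ β) {x : ℝ} (hx : x ∈ PerfectF β μ) (hpos : 0 < x) :
    ∃ (e : ℤ) (m : ℕ), β ^ μ ≤ m ∧ m < β ^ (μ+1) ∧ x = (m:ℝ) * (β:ℝ) ^ e := by
  rcases hx with rfl | ⟨e, h | h⟩
  · exact absurd hpos (lt_irrefl 0)
  · exact ⟨e, rep_of_Eset hβ h⟩
  · exact absurd (Eset_pos hβ h) (by linarith)

lemma rep_of_mpfr (hβ : 2 ≤ β) {emin : ℤ} {x : ℝ} (hx : x ∈ MPFRF β μ emin) (hpos : 0 < x) :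
    ∃ (e : ℤ) (m : ℕ), emin ≤ e ∧ β ^ μ ≤ m ∧ m < β ^ (μ+1) ∧ x = (m:ℝ) * (β:ℝ) ^ e := by
  rcases hx with rfl | ⟨e, he, h | h⟩
  · exact absurd hpos (lt_irrefl 0)
  · obtain ⟨m, h1, h2, h3⟩ := rep_of_Eset hβ h
    exact ⟨e, m, he, h1, h2, h3⟩
  · exact absurd (Eset_pos hβ h) (by linarith)

lemma rep_of_ieee (hβ : 2 ≤ β) {emin : ℤ} {x : ℝ} (hx : x ∈ IEEEF β μ emin) (hpos : 0 < x) :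
    ∃ (e : ℤ) (m : ℕ), emin ≤ e ∧ 1 ≤ m ∧ m < β ^ (μ+1) ∧ x = (m:ℝ) * (β:ℝ) ^ e ∧
      (β ^ μ ≤ m ∨ e = emin) := by
  rcases hx with h | ⟨r, hr1, hr2, h | h⟩
  · obtain ⟨e, m, he, h1, h2, h3⟩ := rep_of_mpfr hβ h hpos
    exact ⟨e, m, he, by
      have : 1 ≤ β ^ μ := Nat.one_le_pow _ _ (by omega)
      omega, h2, h3, Or.inl h1⟩
  · refine ⟨emin, r, le_rfl, hr1, ?_, by rw [h]; ring, Or.inr rfl⟩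
    calc r < β ^ μ := hr2
      _ ≤ β ^ (μ+1) := Nat.pow_le_pow_right (by omega) (by omega)
  · -- x = -(positive), contradiction
    exfalso
    have hb := bR_pos hβ
    have : (0:ℝ) < (β:ℝ) ^ emin * r := by
      apply mul_pos (zpow_pos hb emin)
      exact_mod_cast hr1
    linarith [h ▸ hpos]

/-- exponent comparison: if a normal at ea and a ≤ b with b repped at eb, then ea ≤ eb -/
lemma exp_le (hβ : 2 ≤ β) {a b : ℝ} {ea eb : ℤ} {ma mb : ℕ}
    (haeq : a = (ma:ℝ) * (β:ℝ) ^ ea) (hbeq : b = (mb:ℝ) * (β:ℝ) ^ eb)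
    (hma : β ^ μ ≤ ma) (hmb : mb < β ^ (μ+1)) (hab : a ≤ b) : ea ≤ eb := by
  have h1 : (β:ℝ) ^ (ea + μ) ≤ a := haeq ▸ rep_ge hβ hma
  have h2 : b < (β:ℝ) ^ (eb + μ + 1) := hbeq ▸ rep_lt hβ hmb
  have := (zpow_lt_iff hβ).mp (lt_of_le_of_lt h1 (lt_of_le_of_lt hab h2))
  omega

/-- the grid argument -/
lemma key (hβ : 2 ≤ β) {a b : ℝ} {ea eb : ℤ} {ma mb : ℕ}
    (haeq : a = (ma:ℝ) * (β:ℝ) ^ ea) (hbeq : b = (mb:ℝ) * (β:ℝ) ^ eb)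
    (hma : ma < β ^ (μ+1)) (hee : ea ≤ eb)
    (hab : 0 ≤ b - a) (hba : b - a ≤ a) :
    ∃ n : ℕ, n < β ^ (μ+1) ∧ b - a = (n:ℝ) * (β:ℝ) ^ ea := by
  have hb := bR_pos hβ
  have hea := zpow_pos hb ea
  set N : ℕ := mb * β ^ (eb - ea).toNat with hNdef
  have heemin : ((eb - ea).toNat : ℤ) = eb - ea := Int.toNat_of_nonneg (by omega)
  have hbN : b = (N:ℝ) * (β:ℝ) ^ ea := by
    rw [hbeq, hNdef]; push_cast
    rw [← zpow_natCast (β:ℝ) (eb-ea).toNat, heemin, mul_assoc,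
      ← zpow_add₀ (ne_of_gt hb)]
    ring_nf
  have hmaN : ma ≤ N := by
    have : (ma:ℝ) * (β:ℝ) ^ ea ≤ (N:ℝ) * (β:ℝ) ^ ea := by
      rw [← haeq, ← hbN]; linarith
    exact_mod_cast le_of_mul_le_mul_right this hea
  refine ⟨N - ma, ?_, ?_⟩
  · -- N - ma ≤ ma < β^(μ+1)
    have hdiff : b - a = ((N - ma : ℕ):ℝ) * (β:ℝ) ^ ea := by
      rw [hbN, haeq]
      have : ((N - ma : ℕ):ℝ) = (N:ℝ) - (ma:ℝ) := by push_cast [hmaN]; ring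
      rw [this]; ring
    have : ((N - ma : ℕ):ℝ) * (β:ℝ) ^ ea ≤ (ma:ℝ) * (β:ℝ) ^ ea := by
      rw [← hdiff, ← haeq] at *; linarith
    have h' : (N - ma : ℕ) ≤ ma := by exact_mod_cast le_of_mul_le_mul_right this hea
    omega
  · rw [hbN, haeq]
    have : ((N - ma : ℕ):ℝ) = (N:ℝ) - (ma:ℝ) := by push_cast [hmaN]; ring
    rw [this]; ring

end SterbAux

open SterbAux in
theorem stmt5 (β μ : ℕ) (hβ : 2 ≤ β) (hμ : 1 ≤ μ) (emin : ℤ)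
    (hemin : emin < -(μ : ℤ))
    (F : Set ℝ) (α : ℝ)
    (hF : (F = PerfectF β μ ∧ α = 0) ∨
          (F = IEEEF β μ emin ∧ α = (β : ℝ) ^ emin) ∨
          (F = MPFRF β μ emin ∧ α = (β : ℝ) ^ (emin + μ)))
    (a b : ℝ) (ha : a ∈ F) (hb : b ∈ F)
    (h1 : α ≤ b - a) (h2 : b - a ≤ a) :
    b - a ∈ F := by
  have hbp : (0:ℝ) < (β:ℝ) := SterbAux.bR_pos hβ
  by_cases h0 : b - a = 0
  · rw [h0]
    rcases hF with ⟨rfl, _⟩ | ⟨rfl, _⟩ | ⟨rfl, _⟩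
    · exact Or.inl rfl
    · exact Or.inl (Or.inl rfl)
    · exact Or.inl rfl
  · rcases hF with ⟨rfl, rfl⟩ | ⟨rfl, rfl⟩ | ⟨rfl, rfl⟩
    · -- Perfect
      have hpos : 0 < b - a := lt_of_le_of_ne h1 (Ne.symm h0)
      have hapos : 0 < a := lt_of_lt_of_le hpos h2
      have hbpos : 0 < b := by linarith
      obtain ⟨ea, ma, hma1, hma2, haeq⟩ := SterbAux.rep_of_perfect hβ ha hapos
      obtain ⟨eb, mb, hmb1, hmb2, hbeq⟩ := SterbAux.rep_of_perfect hβ hb hbpos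
      have hee : ea ≤ eb := SterbAux.exp_le hβ haeq hbeq hma1 hmb2 (by linarith)
      obtain ⟨n, hn, hneq⟩ := SterbAux.key hβ haeq hbeq hma2 hee (by linarith) h2
      rw [hneq]
      exact SterbAux.mem_perfect_of_rep hβ ea n hn
    · -- IEEE
      have hpos : 0 < b - a := lt_of_lt_of_le (zpow_pos hbp emin) h1
      have hapos : 0 < a := lt_of_lt_of_le hpos h2
      have hbpos : 0 < b := by linarith
      obtain ⟨ea, ma, hea, hma0, hma2, haeq, hflag⟩ := SterbAux.rep_of_ieee hβ ha hapos
      obtain ⟨eb, mb, heb, hmb0, hmb2, hbeq, hflagb⟩ := SterbAux.rep_of_ieee hβ hb hbpos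
      have hee : ea ≤ eb := by
        rcases hflag with hnorm | heq
        · exact SterbAux.exp_le hβ haeq hbeq hnorm hmb2 (by linarith)
        · omega
      obtain ⟨n, hn, hneq⟩ := SterbAux.key hβ haeq hbeq hma2 hee (by linarith) h2
      rw [hneq]
      exact SterbAux.mem_ieee_of_rep hβ emin ea n hea hn
    · -- MPFR
      have hpos : 0 < b - a := lt_of_lt_of_le (zpow_pos hbp (emin + μ)) h1
      have hapos : 0 < a := lt_of_lt_of_le hpos h2
      have hbpos : 0 < b := by linarith
      obtain ⟨ea, ma, hea, hma1, hma2, haeq⟩ := SterbAux.rep_of_mpfr hβ ha hapos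
      obtain ⟨eb, mb, heb, hmb1, hmb2, hbeq⟩ := SterbAux.rep_of_mpfr hβ hb hbpos
      have hee : ea ≤ eb := SterbAux.exp_le hβ haeq hbeq hma1 hmb2 (by linarith)
      obtain ⟨n, hn, hneq⟩ := SterbAux.key hβ haeq hbeq hma2 hee (by linarith) h2
      rw [hneq] at h1 ⊢
      exact SterbAux.mem_mpfr_of_rep hβ emin ea n hea hn (Or.inr h1)
end
end

section
/- For base β = 2: if x ∈ F satisfies x² ≥ ν and fl rounds to nearest, then fl(√(fl(x²))) = |x|; i.e., rounding the square and then the square root recovers |x| exactly. -/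
noncomputable section

/-!
Write `|x| = 2^e m` with `2^μ ≤ m < 2^(μ+1)`. If `m = 2^μ`, then `x²` is itself a float and
nothing is rounded. Otherwise the floats nearest to `|x|` are `|x| ± 2^e`, and since `ν ≤ x²`
the square is rounded in the normal range, so `y = fl(x²)` satisfies `|y - x²| ≤ u x²`.
Hence `|√y - |x|| ≤ u |x| / (2 - u) < 2^(e-1)`, the last step because `m ≤ 2^(μ+1) - 1`,
and `√y` rounds back to `|x|`.
-/

namespace RTN

variable {F : Set ℝ} {fl : ℝ → ℝ}

theorem eq_self (hfl : RTN F fl) {x : ℝ} (hx : x ∈ F) : fl x = x := by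
  have h := (hfl x).2 x hx
  rw [sub_self, abs_zero] at h
  exact sub_eq_zero.mp (abs_nonpos_iff.mp h)

theorem abs_sub_le_of_mem (hfl : RTN F fl) {f : ℝ} (hf : f ∈ F) {z : ℝ} :
    |fl z - z| ≤ |f - z| :=
  (hfl z).2 f hf

theorem eq_of_abs_sub_lt_half (hfl : RTN F fl) {x z d : ℝ} (hx : x ∈ F)
    (hgap : ∀ f ∈ F, f ≠ x → d ≤ |f - x|) (hz : |z - x| < d / 2) : fl z = x := by
  by_contra hne
  have hclose : |fl z - z| ≤ |x - z| := hfl.abs_sub_le_of_mem hx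
  have hfar := hgap _ (hfl z).1 hne
  have htri := abs_sub_le (fl z) z x
  rw [abs_sub_comm x z] at hclose
  linarith

end RTN

theorem mem_Eset_two {μ : ℕ} {e : ℤ} {x : ℝ} :
    x ∈ Eset 2 μ e ↔ ∃ k : ℕ, 2 ^ μ ≤ k ∧ k < 2 ^ (μ + 1) ∧ x = 2 ^ e * k := by
  simp only [Eset, Set.mem_ofPred_eq, Nat.cast_ofNat, Nat.add_one_sub_one, one_mul]
  constructor
  · rintro ⟨r, hr, rfl⟩
    exact ⟨2 ^ μ + r, by omega, by rw [pow_succ]; omega, by push_cast; ring⟩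
  · rintro ⟨k, hk₁, hk₂, rfl⟩
    refine ⟨k - 2 ^ μ, by rw [pow_succ] at hk₂; omega, ?_⟩
    push_cast [Nat.cast_sub hk₁]
    ring

theorem zpow_mul_mem_Eset {μ k : ℕ} (e : ℤ) (hk₁ : 2 ^ μ ≤ k) (hk₂ : k ≤ 2 ^ (μ + 1)) :
    ∃ e', e ≤ e' ∧ (2 : ℝ) ^ e * k ∈ Eset 2 μ e' := by
  rcases hk₂.lt_or_eq with hk₂ | rfl
  · exact ⟨e, le_rfl, mem_Eset_two.mpr ⟨k, hk₁, hk₂, rfl⟩⟩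
  · refine ⟨e + 1, by omega, mem_Eset_two.mpr ⟨2 ^ μ, le_rfl, Nat.pow_lt_pow_succ one_lt_two, ?_⟩⟩
    rw [zpow_add_one₀ two_ne_zero]
    push_cast
    ring

theorem zpow_le_of_mem_Eset {μ : ℕ} {e : ℤ} {x : ℝ} (hx : x ∈ Eset 2 μ e) :
    (2 : ℝ) ^ (e + μ) ≤ x := by
  obtain ⟨k, hk, -, rfl⟩ := mem_Eset_two.mp hx
  rw [zpow_add₀ two_ne_zero, zpow_natCast]
  gcongr
  exact_mod_cast hk

theorem lt_zpow_of_mem_Eset {μ : ℕ} {e : ℤ} {x : ℝ} (hx : x ∈ Eset 2 μ e) :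
    x < (2 : ℝ) ^ (e + μ + 1) := by
  obtain ⟨k, -, hk, rfl⟩ := mem_Eset_two.mp hx
  rw [add_assoc, zpow_add₀ two_ne_zero, ← Nat.cast_succ, zpow_natCast]
  gcongr
  exact_mod_cast hk

theorem pos_of_mem_Eset {μ : ℕ} {e : ℤ} {x : ℝ} (hx : x ∈ Eset 2 μ e) : 0 < x :=
  (zpow_pos two_pos _).trans_le (zpow_le_of_mem_Eset hx)

theorem abs_mem_Eset {μ : ℕ} {e : ℤ} {x : ℝ} (hx : x ∈ Eset 2 μ e ∨ -x ∈ Eset 2 μ e) :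
    |x| ∈ Eset 2 μ e := by
  rcases hx with hx | hx
  · rwa [abs_of_pos (pos_of_mem_Eset hx)]
  · rwa [abs_of_neg (neg_pos.mp (pos_of_mem_Eset hx))]

theorem exists_int_of_mem_Eset {μ : ℕ} {e e' : ℤ} {f : ℝ} (hf : f ∈ Eset 2 μ e')
    (hfe : (2 : ℝ) ^ (e + μ) ≤ f) : ∃ n : ℤ, f = 2 ^ e * n := by
  have hee' : e ≤ e' := by
    have := hfe.trans_lt (lt_zpow_of_mem_Eset hf)
    have := (zpow_lt_zpow_iff_right₀ (one_lt_two (α := ℝ))).mp this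
    omega
  obtain ⟨d, rfl⟩ := Int.le.dest hee'
  obtain ⟨k, -, -, rfl⟩ := mem_Eset_two.mp hf
  refine ⟨2 ^ d * k, ?_⟩
  rw [zpow_add₀ two_ne_zero, zpow_natCast]
  push_cast
  ring

theorem exists_mem_Eset_abs_sub_le {μ : ℕ} {E : ℤ} {z : ℝ} (hz : (2 : ℝ) ^ (E + μ) ≤ z) :
    ∃ e, E ≤ e ∧ ∃ f ∈ Eset 2 μ e, |f - z| ≤ z / 2 ^ (μ + 1) := by
  have hz0 : 0 < z := (zpow_pos two_pos _).trans_le hz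
  set e := Int.log 2 z - μ
  have hlo : (2 : ℝ) ^ (e + μ) ≤ z := by
    simpa [e] using Int.zpow_log_le_self (R := ℝ) one_lt_two hz0
  have hhi : z < (2 : ℝ) ^ (e + μ + 1) := by
    simpa [e] using Int.lt_zpow_succ_log_self (R := ℝ) one_lt_two z
  have hE : E ≤ e := by
    have := (zpow_lt_zpow_iff_right₀ (one_lt_two (α := ℝ))).mp (hz.trans_lt hhi)
    omega
  have hp : (0 : ℝ) < 2 ^ e := zpow_pos two_pos e
  have hpμ : (2 : ℝ) ^ (e + μ) = 2 ^ e * 2 ^ μ := by rw [zpow_add₀ two_ne_zero, zpow_natCast]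
  set w := z / 2 ^ e
  have hzw : z = 2 ^ e * w := (mul_div_cancel₀ z hp.ne').symm
  have hw₁ : (2 : ℝ) ^ μ ≤ w := by
    rw [le_div_iff₀ hp]; linarith
  have hw₂ : w < 2 ^ (μ + 1) := by
    rw [div_lt_iff₀ hp]
    rwa [add_assoc, zpow_add₀ two_ne_zero, ← Nat.cast_succ, zpow_natCast, mul_comm] at hhi
  set k := ⌊w + 1 / 2⌋₊
  have hk₁ : (k : ℝ) ≤ w + 1 / 2 := Nat.floor_le (by positivity)
  have hk₂ : w + 1 / 2 < k + 1 := Nat.lt_floor_add_one _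
  have hkμ : 2 ^ μ ≤ k := Nat.le_floor (by push_cast; linarith)
  have hkμ' : k ≤ 2 ^ (μ + 1) := by
    have : (k : ℝ) < 2 ^ (μ + 1) + 1 := by linarith
    exact_mod_cast Nat.lt_add_one_iff.mp (by exact_mod_cast this)
  obtain ⟨e', he', hf⟩ := zpow_mul_mem_Eset e hkμ hkμ'
  refine ⟨e', hE.trans he', _, hf, ?_⟩
  calc |2 ^ e * (k : ℝ) - z| = 2 ^ e * |k - w| := by
        rw [hzw, ← mul_sub, abs_mul, abs_of_pos hp]
    _ ≤ 2 ^ e * (1 / 2) := by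
        gcongr
        rw [abs_le]; constructor <;> linarith
    _ ≤ z / 2 ^ (μ + 1) := by
        rw [le_div_iff₀ (by positivity), pow_succ]
        nlinarith

theorem abs_sqrt_sub_le {x y u : ℝ} (hx : 0 < x) (hu : u ≤ 1) (hy : |y - x ^ 2| ≤ u * x ^ 2) :
    (2 - u) * |√y - x| ≤ u * x := by
  have hu₀ : 0 ≤ u := nonneg_of_mul_nonneg_left ((abs_nonneg _).trans hy) (by positivity)
  have hy₀ : (1 - u) * x ^ 2 ≤ y := by linarith [(abs_le.mp hy).1]
  have hsqrt : (1 - u) * x ≤ √y :=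
    Real.le_sqrt_of_sq_le (by nlinarith [mul_nonneg hu₀ (sub_nonneg.mpr hu), sq_nonneg x])
  have hfactor : |√y - x| * (√y + x) = |y - x ^ 2| := by
    rw [← abs_of_pos (by positivity : 0 < √y + x), ← abs_mul, mul_comm, ← sq_sub_sq,
      Real.sq_sqrt (by nlinarith)]
  have : x * ((2 - u) * |√y - x|) ≤ x * (u * x) := by
    nlinarith [abs_nonneg (√y - x)]
  exact le_of_mul_le_mul_left this hx

theorem le_abs_sub_of_grid {F : Set ℝ} {μ m : ℕ} {e : ℤ}
    (hgrid : ∀ f ∈ F, (2 : ℝ) ^ (e + μ) ≤ f → ∃ n : ℤ, f = 2 ^ e * n) (hm : 2 ^ μ < m)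
    {f : ℝ} (hf : f ∈ F) (hne : f ≠ 2 ^ e * m) : 2 ^ e ≤ |f - 2 ^ e * m| := by
  have hp : (0 : ℝ) < 2 ^ e := zpow_pos two_pos e
  rcases lt_or_ge f (2 ^ (e + μ)) with hlt | hge
  · have hm' : (2 : ℝ) ^ μ + 1 ≤ m := by exact_mod_cast hm
    rw [zpow_add₀ two_ne_zero, zpow_natCast] at hlt
    rw [abs_sub_comm, abs_of_pos (by nlinarith)]
    nlinarith
  · obtain ⟨n, rfl⟩ := hgrid f hf hge
    have hnm : n ≠ m := fun h ↦ hne (by rw [h, Int.cast_natCast])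
    rw [← mul_sub, abs_mul, abs_of_pos hp]
    refine le_mul_of_one_le_right hp.le ?_
    have : (1 : ℤ) ≤ |n - m| := Int.one_le_abs (sub_ne_zero.mpr hnm)
    exact_mod_cast this

theorem round_sqrt_eq_of_abs_sub_sq_le {F : Set ℝ} {fl : ℝ → ℝ} (hfl : RTN F fl)
    {μ m : ℕ} {e : ℤ}
    (hgrid : ∀ f ∈ F, (2 : ℝ) ^ (e + μ) ≤ f → ∃ n : ℤ, f = 2 ^ e * n)
    (hm₁ : 2 ^ μ < m) (hm₂ : m < 2 ^ (μ + 1)) (hxF : (2 : ℝ) ^ e * m ∈ F) {y : ℝ}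
    (hy : |y - ((2 : ℝ) ^ e * m) ^ 2| ≤ ((2 : ℝ) ^ e * m) ^ 2 / 2 ^ (μ + 1)) :
    fl √y = 2 ^ e * m := by
  refine hfl.eq_of_abs_sub_lt_half hxF (fun f hf hne ↦ le_abs_sub_of_grid hgrid hm₁ hf hne) ?_
  have hU : (m : ℝ) + 1 ≤ 2 ^ (μ + 1) := by exact_mod_cast Nat.succ_le_of_lt hm₂
  set U : ℝ := 2 ^ (μ + 1)
  have hU₁ : 1 ≤ U := one_le_pow₀ one_le_two
  have hp : (0 : ℝ) < 2 ^ e := zpow_pos two_pos e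
  have hm₀ : (0 : ℝ) < m := by exact_mod_cast (Nat.zero_lt_of_lt hm₁)
  have hbound := abs_sqrt_sub_le (x := 2 ^ e * m) (y := y) (by positivity)
    (inv_le_one_of_one_le₀ hU₁) (by rwa [inv_mul_eq_div])
  field_simp at hbound
  -- with `d = |√y - 2^e m|`: `(2U - 1) d ≤ 2^e m ≤ 2^e (U - 1) < (2U - 1) 2^e / 2`
  nlinarith

theorem round_sqrt_round_sq_of_mem_Eset {F : Set ℝ} {fl₁ fl₂ : ℝ → ℝ} (hfl₁ : RTN F fl₁)
    (hfl₂ : RTN F fl₂) {μ : ℕ} {E e : ℤ} (hEset : ∀ e', E ≤ e' → Eset 2 μ e' ⊆ F)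
    (hgrid : ∀ f ∈ F, (2 : ℝ) ^ (e + μ) ≤ f → ∃ n : ℤ, f = 2 ^ e * n)
    {x : ℝ} (hx : x ∈ Eset 2 μ e) (hxF : x ∈ F) (hE : (2 : ℝ) ^ (E + μ) ≤ x ^ 2) :
    fl₂ √(fl₁ (x ^ 2)) = x := by
  obtain ⟨m, hm₁, hm₂, rfl⟩ := mem_Eset_two.mp hx
  rcases hm₁.eq_or_lt with rfl | hm₁
  · have hsq : ((2 : ℝ) ^ e * (2 ^ μ : ℕ)) ^ 2 = 2 ^ (2 * e + μ) * (2 ^ μ : ℕ) := by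
      rw [zpow_add₀ two_ne_zero, zpow_natCast, two_mul, zpow_add₀ two_ne_zero]
      push_cast
      ring
    have hsqE : ((2 : ℝ) ^ e * (2 ^ μ : ℕ)) ^ 2 ∈ Eset 2 μ (2 * e + μ) :=
      hsq ▸ mem_Eset_two.mpr ⟨2 ^ μ, le_rfl, Nat.pow_lt_pow_succ one_lt_two, rfl⟩
    have hEe : E ≤ 2 * e + μ := by
      have := hE.trans_lt (lt_zpow_of_mem_Eset hsqE)
      have := (zpow_lt_zpow_iff_right₀ (one_lt_two (α := ℝ))).mp this
      omega
    rw [hfl₁.eq_self (hEset _ hEe hsqE), Real.sqrt_sq (pos_of_mem_Eset hx).le, hfl₂.eq_self hxF]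
  · obtain ⟨e', he', f, hf, hfx⟩ := exists_mem_Eset_abs_sub_le hE
    exact round_sqrt_eq_of_abs_sub_sq_le hfl₂ hgrid hm₁ hm₂ hxF
      ((hfl₁.abs_sub_le_of_mem (hEset e' he' hf)).trans hfx)

section Systems

variable {β μ : ℕ} {emin e : ℤ}

theorem Eset_subset_PerfectF : Eset β μ e ⊆ PerfectF β μ :=
  fun _ hx ↦ Or.inr ⟨e, Or.inl hx⟩

theorem MPFRF_subset_PerfectF : MPFRF β μ emin ⊆ PerfectF β μ := by
  rintro x (hx | ⟨e, -, hx⟩)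
  exacts [Or.inl hx, Or.inr ⟨e, hx⟩]

theorem Eset_subset_MPFRF (he : emin ≤ e) : Eset β μ e ⊆ MPFRF β μ emin :=
  fun _ hx ↦ Or.inr ⟨e, he, Or.inl hx⟩

theorem MPFRF_subset_IEEEF : MPFRF β μ emin ⊆ IEEEF β μ emin := Set.subset_union_left

end Systems

section Binary

variable {μ : ℕ} {emin e : ℤ} {fl₁ fl₂ : ℝ → ℝ} {x : ℝ}

theorem abs_lt_of_mem_SubN (hx : x ∈ SubN 2 μ emin) : |x| < 2 ^ (emin + μ) := by
  obtain ⟨r, -, hr, hx⟩ := hx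
  have hr' : (r : ℝ) < 2 ^ μ := by exact_mod_cast hr
  have hpos : (0 : ℝ) ≤ 2 ^ emin * r := by positivity
  rw [zpow_add₀ two_ne_zero, zpow_natCast]
  rcases hx with rfl | rfl <;> simp only [Nat.cast_ofNat, abs_neg, abs_of_nonneg hpos] <;>
    gcongr

theorem PerfectF.exists_int_of_zpow_le {f : ℝ} (hf : f ∈ PerfectF 2 μ)
    (hfe : (2 : ℝ) ^ (e + μ) ≤ f) : ∃ n : ℤ, f = 2 ^ e * n := by
  have hf₀ : 0 < f := (zpow_pos two_pos _).trans_le hfe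
  rcases hf with rfl | ⟨e', hf | hf⟩
  · exact absurd hf₀ (lt_irrefl 0)
  · exact exists_int_of_mem_Eset hf hfe
  · exact absurd (pos_of_mem_Eset hf) (by linarith)

theorem IEEEF.exists_int_of_zpow_le (he : emin ≤ e) {f : ℝ} (hf : f ∈ IEEEF 2 μ emin)
    (hfe : (2 : ℝ) ^ (e + μ) ≤ f) : ∃ n : ℤ, f = 2 ^ e * n := by
  rcases hf with hf | hf
  · exact PerfectF.exists_int_of_zpow_le (MPFRF_subset_PerfectF hf) hfe
  · have : (2 : ℝ) ^ (emin + μ) ≤ 2 ^ (e + μ) := zpow_le_zpow_right₀ one_le_two (by omega)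
    linarith [le_abs_self f, abs_lt_of_mem_SubN hf]

theorem PerfectF.exists_abs_mem_Eset (hx : x ∈ PerfectF 2 μ) (hx0 : x ≠ 0) :
    ∃ e, |x| ∈ Eset 2 μ e := by
  rcases hx with hx | ⟨e, hx⟩
  exacts [absurd hx hx0, ⟨e, abs_mem_Eset hx⟩]

theorem MPFRF.exists_abs_mem_Eset (hx : x ∈ MPFRF 2 μ emin) (hx0 : x ≠ 0) :
    ∃ e, emin ≤ e ∧ |x| ∈ Eset 2 μ e := by
  rcases hx with hx | ⟨e, he, hx⟩
  exacts [absurd hx hx0, ⟨e, he, abs_mem_Eset hx⟩]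

theorem IEEEF.exists_abs_mem_Eset (hemin : emin + μ ≤ 0) (hx : x ∈ IEEEF 2 μ emin)
    (hx0 : x ≠ 0) (hν : (2 : ℝ) ^ (emin + μ) ≤ x ^ 2) : ∃ e, emin ≤ e ∧ |x| ∈ Eset 2 μ e := by
  rcases hx with hx | hx
  · exact MPFRF.exists_abs_mem_Eset hx hx0
  -- a subnormal `x` has `x ^ 2 ≤ |x| < ν`, since `ν ≤ 1`
  have hsub := abs_lt_of_mem_SubN hx
  have hν₁ : (2 : ℝ) ^ (emin + μ) ≤ 1 := zpow_le_one_of_nonpos₀ one_le_two hemin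
  have : x ^ 2 ≤ |x| := by
    rw [← sq_abs]; nlinarith [abs_nonneg x]
  linarith

theorem PerfectF.round_sqrt_round_sq (hfl₁ : RTN (PerfectF 2 μ) fl₁)
    (hfl₂ : RTN (PerfectF 2 μ) fl₂) (hx : x ∈ PerfectF 2 μ) (hx0 : x ≠ 0) :
    fl₂ √(fl₁ (x ^ 2)) = |x| := by
  obtain ⟨e, he⟩ := PerfectF.exists_abs_mem_Eset hx hx0
  have hE : (2 : ℝ) ^ (2 * e + μ + μ) ≤ |x| ^ 2 := by
    calc (2 : ℝ) ^ (2 * e + μ + μ) = (2 ^ (e + μ)) ^ 2 := by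
          rw [← zpow_natCast, ← zpow_mul]; ring_nf
      _ ≤ |x| ^ 2 := by gcongr; exact zpow_le_of_mem_Eset he
  rw [← sq_abs]
  exact round_sqrt_round_sq_of_mem_Eset hfl₁ hfl₂ (fun _ _ ↦ Eset_subset_PerfectF)
    (fun _ ↦ PerfectF.exists_int_of_zpow_le) he (Eset_subset_PerfectF he) hE

theorem MPFRF.round_sqrt_round_sq (hfl₁ : RTN (MPFRF 2 μ emin) fl₁)
    (hfl₂ : RTN (MPFRF 2 μ emin) fl₂) (hx : x ∈ MPFRF 2 μ emin) (hx0 : x ≠ 0)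
    (hν : (2 : ℝ) ^ (emin + μ) ≤ x ^ 2) : fl₂ √(fl₁ (x ^ 2)) = |x| := by
  obtain ⟨e, he, hxe⟩ := MPFRF.exists_abs_mem_Eset hx hx0
  rw [← sq_abs] at hν ⊢
  exact round_sqrt_round_sq_of_mem_Eset hfl₁ hfl₂ (fun _ ↦ Eset_subset_MPFRF)
    (fun _ hf ↦ PerfectF.exists_int_of_zpow_le (MPFRF_subset_PerfectF hf)) hxe
    (Eset_subset_MPFRF he hxe) hν

theorem IEEEF.round_sqrt_round_sq (hemin : emin + μ ≤ 0) (hfl₁ : RTN (IEEEF 2 μ emin) fl₁)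
    (hfl₂ : RTN (IEEEF 2 μ emin) fl₂) (hx : x ∈ IEEEF 2 μ emin) (hx0 : x ≠ 0)
    (hν : (2 : ℝ) ^ (emin + μ) ≤ x ^ 2) : fl₂ √(fl₁ (x ^ 2)) = |x| := by
  obtain ⟨e, he, hxe⟩ := IEEEF.exists_abs_mem_Eset hemin hx hx0 hν
  have hEset : ∀ e', emin ≤ e' → Eset 2 μ e' ⊆ IEEEF 2 μ emin :=
    fun _ he' ↦ (Eset_subset_MPFRF he').trans MPFRF_subset_IEEEF
  rw [← sq_abs] at hν ⊢
  exact round_sqrt_round_sq_of_mem_Eset hfl₁ hfl₂ hEset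
    (fun _ ↦ IEEEF.exists_int_of_zpow_le he) hxe (hEset e he hxe) hν

end Binary

theorem stmt6_general (μ : ℕ) (emin : ℤ) (hemin : emin < -(μ : ℤ))
    (F : Set ℝ) (ν : ℝ)
    (hF : (F = PerfectF 2 μ ∧ ν = 0) ∨
          (F = IEEEF 2 μ emin ∧ ν = (2 : ℝ) ^ (emin + μ)) ∨
          (F = MPFRF 2 μ emin ∧ ν = (2 : ℝ) ^ (emin + μ)))
    (fl1 fl2 : ℝ → ℝ) (hfl1 : RTN F fl1) (hfl2 : RTN F fl2)
    (x : ℝ) (hx : x ∈ F) (hx2 : ν ≤ x ^ 2) :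
    fl2 (Real.sqrt (fl1 (x ^ 2))) = |x| := by
  rcases eq_or_ne x 0 with rfl | hx0
  · have h0 : (0 : ℝ) ∈ F := by
      rcases hF with ⟨rfl, -⟩ | ⟨rfl, -⟩ | ⟨rfl, -⟩
      exacts [Or.inl rfl, Or.inl (Or.inl rfl), Or.inl rfl]
    simp [hfl1.eq_self h0, hfl2.eq_self h0]
  rcases hF with ⟨rfl, -⟩ | ⟨rfl, rfl⟩ | ⟨rfl, rfl⟩
  · exact PerfectF.round_sqrt_round_sq hfl1 hfl2 hx hx0
  · exact IEEEF.round_sqrt_round_sq (by omega) hfl1 hfl2 hx hx0 hx2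
  · exact MPFRF.round_sqrt_round_sq hfl1 hfl2 hx hx0 hx2

theorem stmt6 (μ : ℕ) (hμ : 1 ≤ μ) (emin : ℤ) (hemin : emin < -(μ : ℤ))
    (F : Set ℝ) (ν : ℝ)
    (hF : (F = PerfectF 2 μ ∧ ν = 0) ∨
          (F = IEEEF 2 μ emin ∧ ν = (2 : ℝ) ^ (emin + μ)) ∨
          (F = MPFRF 2 μ emin ∧ ν = (2 : ℝ) ^ (emin + μ)))
    (fl1 fl2 : ℝ → ℝ) (hfl1 : RTN F fl1) (hfl2 : RTN F fl2)
    (x : ℝ) (hx : x ∈ F) (hx2 : ν ≤ x ^ 2) :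
    fl2 (Real.sqrt (fl1 (x ^ 2))) = |x| :=
  stmt6_general μ emin hemin F ν hF fl1 fl2 hfl1 hfl2 x hx hx2
end
end

section
/- For any base β ≥ 2: if x ∈ F satisfies x² ≥ ν and all roundings are to nearest, then fl(|x| / fl(√(fl(x²)))) ≤ 1. -/
noncomputable section

/-! Write `m = |x| = β ^ e * M` with `β ^ μ ≤ M < β ^ (μ + 1)` and `s = fl (√(fl (m ^ 2)))`. If
`m ≤ s` there is nothing to prove. Otherwise `s = β ^ e * S` with `β ^ μ ≤ S < M`, and each of the
two roundings errs by at most half a unit in the last place: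
`m ^ 2 - ulp (m ^ 2) / 2 ≤ fl (m ^ 2) ≤ (s + β ^ e / 2) ^ 2`, that is
`4 M ^ 2 ≤ (2 S + 1) ^ 2 + 2 β ^ c β ^ μ`, where `c ∈ {0, 1}` locates `m ^ 2` in its binade.
For `c = 0` this contradicts `S < M`; for `c = 1` an integer argument, using `β β ^ (2 μ) < M ^ 2`,
gives `m / s < 1 + u` with `u = 1 / (2 β ^ μ)`. As the successor of `1` in `F` is `1 + 2 u`,
rounding to nearest sends `m / s` to at most `1`. -/

theorem zpow_add_natCast {a : ℝ} (ha : a ≠ 0) (e : ℤ) (k : ℕ) : a ^ (e + k) = a ^ e * a ^ k := by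
  rw [zpow_add₀ ha, zpow_natCast]

theorem zpow_two_mul_add_natCast {a : ℝ} (ha : a ≠ 0) (e : ℤ) (k : ℕ) :
    a ^ (2 * e + k) = (a ^ e) ^ 2 * a ^ k := by
  rw [zpow_add_natCast ha, two_mul, zpow_add₀ ha, sq]

theorem two_mul_mul_lt_of_sq_le {b P S M : ℤ} (hb : 1 ≤ b) (hbP : b ≤ P) (hP : 2 ≤ P)
    (hPS : P ≤ S) (hSM : S < M) (hM : b * P ^ 2 < M ^ 2)
    (h : 4 * M ^ 2 ≤ (2 * S + 1) ^ 2 + 2 * b * P) :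
    2 * P * M < (2 * P + 1) * S := by
  by_contra! hcon
  obtain ⟨D, hD, rfl⟩ : ∃ D, 1 ≤ D ∧ M = S + D := ⟨M - S, by omega, by ring⟩
  set d := 2 * D - 1
  -- `h` reads `4 M d ≤ d ^ 2 + 2 b P`; with `b P ^ 2 < M ^ 2` this forces `3 d ^ 2 < b`, while
  -- `hcon` gives `2 M ≤ (2 P + 1) (d + 1)`, hence `4 b P ^ 2 < (2 P + 1) ^ 2 (d + 1) ^ 2`.
  have hd1 : 1 ≤ d := by omega
  have h1 : 4 * (S + D) * d ≤ d ^ 2 + 2 * b * P := by nlinarith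
  have h2 : 2 * (S + D) ≤ (2 * P + 1) * (d + 1) := by nlinarith
  have h3 : d ^ 2 < 2 * b * P := by nlinarith
  have h4 : 3 * d ^ 2 < b := by
    by_contra! hb3
    have hd2 : 0 < d ^ 2 := by positivity
    have e1 : 16 * (b * P ^ 2) * d ^ 2 < 16 * (S + D) ^ 2 * d ^ 2 := by nlinarith
    have e2 : (4 * (S + D) * d) ^ 2 ≤ (d ^ 2 + 2 * b * P) ^ 2 :=
      pow_le_pow_left₀ (by nlinarith) h1 2
    have e3 : 4 * b * P ^ 2 * d ^ 2 < d ^ 4 + 4 * b * P * d ^ 2 := by nlinarith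
    have e4 : d ^ 4 < 2 * b * P * d ^ 2 := by nlinarith
    have hbPd : 0 < b * P * d ^ 2 := by positivity
    nlinarith [mul_le_mul_of_nonneg_left hP hbPd.le]
  rcases (by omega : d = 1 ∨ 3 ≤ d) with h5 | h5
  · obtain rfl : D = 1 := by omega
    obtain rfl : S = 2 * P := by nlinarith
    rcases le_or_gt b 4 with hb4 | hb4 <;> nlinarith
  · have e1 : (2 * (S + D)) ^ 2 ≤ ((2 * P + 1) * (d + 1)) ^ 2 := pow_le_pow_left₀ (by omega) h2 2
    have e2 : 4 * (2 * P + 1) ^ 2 ≤ 25 * P ^ 2 := by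
      nlinarith [mul_nonneg (by omega : 0 ≤ P - 2) (by omega : 0 ≤ 9 * P + 2)]
    have e3 : 9 * (d + 1) ^ 2 ≤ 16 * d ^ 2 := by
      nlinarith [mul_nonneg (by omega : 0 ≤ d - 3) (by omega : 0 ≤ 7 * d + 3)]
    have e4 := mul_le_mul e2 e3 (by positivity) (by positivity)
    have e5 := mul_lt_mul_of_pos_right h4 (by positivity : (0 : ℤ) < P ^ 2)
    nlinarith

namespace RTN

variable {F : Set ℝ} {fl : ℝ → ℝ}

theorem le_fl (h : RTN F fl) {f z : ℝ} (hf : f ∈ F) (hfz : f ≤ z) : f ≤ fl z := by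
  have := (h z).2 f hf
  rw [abs_of_nonpos (by linarith : f - z ≤ 0)] at this
  linarith [neg_abs_le (fl z - z)]

theorem fl_le (h : RTN F fl) {f z : ℝ} (hf : f ∈ F) (hzf : z ≤ f) : fl z ≤ f := by
  have := (h z).2 f hf
  rw [abs_of_nonneg (by linarith : 0 ≤ f - z)] at this
  linarith [le_abs_self (fl z - z)]

theorem abs_fl_sub_le_half (h : RTN F fl) {f g z : ℝ} (hf : f ∈ F) (hg : g ∈ F)
    (hfz : f ≤ z) (hzg : z ≤ g) : |fl z - z| ≤ (g - f) / 2 := by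
  have h1 := (h z).2 f hf
  have h2 := (h z).2 g hg
  rw [abs_of_nonpos (by linarith : f - z ≤ 0)] at h1
  rw [abs_of_nonneg (by linarith : 0 ≤ g - z)] at h2
  linarith

theorem le_midpoint (h : RTN F fl) {g z : ℝ} (hg : g ∈ F) (hlt : fl z < g) :
    z ≤ (fl z + g) / 2 := by
  by_contra! hz
  have := (h z).2 g hg
  rw [abs_of_neg (by linarith : fl z - z < 0)] at this
  rcases abs_cases (g - z) with ⟨h', _⟩ | ⟨h', _⟩ <;> linarith

end RTN

section Eset

variable {β μ : ℕ} {e : ℤ} {y : ℝ}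

theorem mem_Eset_iff (hβ : 1 ≤ β) :
    y ∈ Eset β μ e ↔ ∃ n : ℕ, β ^ μ ≤ n ∧ n < β ^ (μ + 1) ∧ y = (β : ℝ) ^ e * n := by
  have hsplit : (β - 1) * β ^ μ + β ^ μ = β ^ (μ + 1) := by
    rw [← Nat.succ_mul, Nat.succ_eq_add_one, Nat.sub_add_cancel hβ, pow_succ']
  constructor
  · rintro ⟨r, hr, rfl⟩
    exact ⟨β ^ μ + r, by omega, by omega, by push_cast; ring⟩
  · rintro ⟨n, h1, h2, rfl⟩
    refine ⟨n - β ^ μ, by omega, ?_⟩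
    rw [Nat.cast_sub h1]
    push_cast
    ring

theorem Eset_bounds (hβ : 1 ≤ β) (hy : y ∈ Eset β μ e) :
    (β : ℝ) ^ (e + μ) ≤ y ∧ y < (β : ℝ) ^ (e + μ + 1) := by
  obtain ⟨n, h1, h2, rfl⟩ := (mem_Eset_iff hβ).1 hy
  have hb : (β : ℝ) ≠ 0 := by positivity
  have he : (0 : ℝ) < (β : ℝ) ^ e := zpow_pos (by positivity) e
  rw [zpow_add_natCast hb, show e + μ + 1 = e + ((μ + 1 : ℕ) : ℤ) by push_cast; ring,
    zpow_add_natCast hb]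
  constructor
  · exact mul_le_mul_of_nonneg_left (by exact_mod_cast h1) he.le
  · exact mul_lt_mul_of_pos_left (by exact_mod_cast h2) he

theorem pos_of_mem_Eset_s7 (hβ : 1 ≤ β) (hy : y ∈ Eset β μ e) : 0 < y :=
  (zpow_pos (by positivity) _).trans_le (Eset_bounds hβ hy).1

theorem eq_of_mem_Eset (hβ : 2 ≤ β) {e' : ℤ} (hy : y ∈ Eset β μ e')
    (h1 : (β : ℝ) ^ (e + μ) ≤ y) (h2 : y < (β : ℝ) ^ (e + μ + 1)) : e' = e := by
  have hb : (1 : ℝ) < β := by exact_mod_cast hβ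
  obtain ⟨h1', h2'⟩ := Eset_bounds (by omega) hy
  have := (zpow_lt_zpow_iff_right₀ hb).1 (h1.trans_lt h2')
  have := (zpow_lt_zpow_iff_right₀ hb).1 (h1'.trans_lt h2)
  omega

theorem one_add_inv_le_of_mem_Eset (hβ : 2 ≤ β) (hy : y ∈ Eset β μ e) (h : 1 < y) :
    1 + ((β : ℝ) ^ μ)⁻¹ ≤ y := by
  have hb : (1 : ℝ) < β := by exact_mod_cast hβ
  have hP : (0 : ℝ) < (β : ℝ) ^ μ := by positivity
  rcases lt_or_ge (e + μ) 0 with hneg | hnn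
  · have h1 : (β : ℝ) ^ (e + μ + 1) ≤ 1 := zpow_le_one_of_nonpos₀ hb.le (by omega)
    linarith [(Eset_bounds (by omega) hy).2]
  obtain ⟨k, hk⟩ := Int.eq_ofNat_of_zero_le hnn
  obtain ⟨n, -, -, rfl⟩ := (mem_Eset_iff (by omega)).1 hy
  have hN : (β : ℝ) ^ e * n * (β : ℝ) ^ μ = ((β ^ k * n : ℕ) : ℝ) := by
    rw [mul_right_comm, ← zpow_add_natCast (by positivity), hk, zpow_natCast]
    push_cast
    ring
  have hlt : β ^ μ < β ^ k * n := by
    have : (β : ℝ) ^ μ < ((β ^ k * n : ℕ) : ℝ) := by rw [← hN]; nlinarith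
    exact_mod_cast this
  have hle : (β : ℝ) ^ μ + 1 ≤ (β : ℝ) ^ e * n * (β : ℝ) ^ μ := by
    rw [hN]
    exact_mod_cast hlt
  rw [show 1 + ((β : ℝ) ^ μ)⁻¹ = ((β : ℝ) ^ μ + 1) / (β : ℝ) ^ μ by field_simp, div_le_iff₀ hP]
  exact hle

end Eset

/-- `F` is symmetric, and its positive elements `y ≥ ν` are exactly the numbers `β ^ e * n`,
`β ^ μ ≤ n < β ^ (μ + 1)`, of the binades `[β ^ (e + μ), β ^ (e + μ + 1))` that lie above `ν`;
`ν` is `0` or the bottom of a binade. -/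
structure FloatSystem (β μ : ℕ) (ν : ℝ) (F : Set ℝ) : Prop where
  neg_mem : ∀ y ∈ F, -y ∈ F
  le_zpow_of_lt : ∀ e : ℤ, ν < (β : ℝ) ^ (e + μ + 1) → ν ≤ (β : ℝ) ^ (e + μ)
  Eset_subset : ∀ e : ℤ, ν ≤ (β : ℝ) ^ (e + μ) → Eset β μ e ⊆ F
  exists_mem_Eset : ∀ y ∈ F, 0 < y → ν ≤ y → ∃ e : ℤ, y ∈ Eset β μ e

namespace FloatSystem

variable {β μ : ℕ} {ν : ℝ} {F : Set ℝ} {fl fl1 fl2 fl3 : ℝ → ℝ}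

theorem mul_mem (hF : FloatSystem β μ ν F) (hβ : 2 ≤ β) {e : ℤ} {n : ℕ}
    (hν : ν ≤ (β : ℝ) ^ (e + μ)) (h1 : β ^ μ ≤ n) (h2 : n ≤ β ^ (μ + 1)) :
    (β : ℝ) ^ e * n ∈ F := by
  rcases h2.lt_or_eq with h2 | rfl
  · exact hF.Eset_subset e hν ((mem_Eset_iff (by omega)).2 ⟨n, h1, h2, rfl⟩)
  have htop : (β : ℝ) ^ e * ((β ^ (μ + 1) : ℕ) : ℝ) = (β : ℝ) ^ (e + 1) * ((β ^ μ : ℕ) : ℝ) := by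
    push_cast
    rw [zpow_add_one₀ (by positivity), pow_succ]
    ring
  rw [htop]
  refine hF.Eset_subset (e + 1) (hν.trans ?_)
    ((mem_Eset_iff (by omega)).2 ⟨β ^ μ, le_rfl, Nat.pow_lt_pow_succ (by omega), rfl⟩)
  exact zpow_le_zpow_right₀ (by exact_mod_cast (by omega : 1 ≤ β)) (by omega)

theorem one_mem (hF : FloatSystem β μ ν F) (hβ : 2 ≤ β) (hν : ν ≤ 1) : (1 : ℝ) ∈ F := by
  have := hF.mul_mem hβ (e := -μ) (n := β ^ μ) (by simpa using hν) le_rfl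
    (Nat.pow_le_pow_right (by omega) (by omega))
  rwa [Nat.cast_pow, zpow_neg, zpow_natCast, inv_mul_cancel₀ (by positivity)] at this

theorem one_add_inv_le (hF : FloatSystem β μ ν F) (hβ : 2 ≤ β) (hν : ν ≤ 1) {f : ℝ}
    (hf : f ∈ F) (h : 1 < f) : 1 + ((β : ℝ) ^ μ)⁻¹ ≤ f := by
  obtain ⟨e, he⟩ := hF.exists_mem_Eset f hf (by linarith) (by linarith)
  exact one_add_inv_le_of_mem_Eset hβ he h

theorem exists_bracket (hF : FloatSystem β μ ν F) (hβ : 2 ≤ β) {z : ℝ} {E : ℤ} (hν : ν ≤ z)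
    (h1 : (β : ℝ) ^ (E + μ) ≤ z) (h2 : z ≤ (β : ℝ) ^ (E + μ + 1)) :
    ∃ f ∈ F, ∃ g ∈ F, (β : ℝ) ^ (E + μ) ≤ f ∧ f ≤ z ∧ z ≤ g ∧ g - f ≤ (β : ℝ) ^ E := by
  have hb : (β : ℝ) ≠ 0 := by positivity
  have hE : (0 : ℝ) < (β : ℝ) ^ E := zpow_pos (by positivity) E
  rcases h2.lt_or_eq with h2 | rfl
  · have hνE := hF.le_zpow_of_lt E (hν.trans_lt h2)
    rw [zpow_add_natCast hb] at h1
    rw [show E + μ + 1 = E + ((μ + 1 : ℕ) : ℤ) by push_cast; ring, zpow_add_natCast hb] at h2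
    have hz : 0 ≤ z / (β : ℝ) ^ E := div_nonneg (le_trans (by positivity) h1) hE.le
    set n := ⌊z / (β : ℝ) ^ E⌋₊
    have hn1 : β ^ μ ≤ n := Nat.le_floor (by rw [le_div_iff₀ hE]; push_cast; linarith)
    have hn2 : n < β ^ (μ + 1) :=
      (Nat.floor_lt hz).2 (by rw [div_lt_iff₀ hE]; push_cast; linarith)
    refine ⟨_, hF.mul_mem hβ hνE hn1 hn2.le, _, hF.mul_mem hβ hνE (n := n + 1) (by omega) hn2,
      ?_, ?_, ?_, by push_cast; linarith⟩
    · rw [zpow_add_natCast hb]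
      exact mul_le_mul_of_nonneg_left (by exact_mod_cast hn1) hE.le
    · rw [← le_div_iff₀' hE]
      exact Nat.floor_le hz
    · rw [← div_le_iff₀' hE]
      exact_mod_cast (Nat.lt_floor_add_one _).le
  · have hz : (β : ℝ) ^ (E + μ + 1) ∈ F := by
      have := hF.mul_mem hβ (e := E + 1) (n := β ^ μ) (by rwa [add_right_comm])
        le_rfl (Nat.pow_le_pow_right (by omega) (by omega))
      rwa [Nat.cast_pow, ← zpow_natCast, ← zpow_add₀ hb, add_right_comm] at this
    exact ⟨_, hz, _, hz, zpow_le_zpow_right₀ (by exact_mod_cast (by omega : 1 ≤ β)) (by omega),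
      le_rfl, le_rfl, by simpa using hE.le⟩

theorem exists_eq_zpow_mul (hF : FloatSystem β μ ν F) (hβ : 2 ≤ β) {y : ℝ} {e : ℤ} (hy : y ∈ F)
    (hν : ν ≤ (β : ℝ) ^ (e + μ)) (h1 : (β : ℝ) ^ (e + μ) ≤ y) (h2 : y < (β : ℝ) ^ (e + μ + 1)) :
    ∃ n : ℕ, β ^ μ ≤ n ∧ n < β ^ (μ + 1) ∧ y = (β : ℝ) ^ e * n := by
  obtain ⟨e', he'⟩ :=
    hF.exists_mem_Eset y hy ((zpow_pos (by positivity) _).trans_le h1) (hν.trans h1)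
  rw [eq_of_mem_Eset hβ he' h1 h2] at he'
  exact (mem_Eset_iff (by omega)).1 he'

theorem zpow_le_fl (hF : FloatSystem β μ ν F) (hβ : 2 ≤ β) (hfl : RTN F fl) {z : ℝ} {E : ℤ}
    (hν : ν ≤ z) (h1 : (β : ℝ) ^ (E + μ) ≤ z) (h2 : z ≤ (β : ℝ) ^ (E + μ + 1)) :
    (β : ℝ) ^ (E + μ) ≤ fl z := by
  obtain ⟨f, hf, g, -, hEf, hfz, -, -⟩ := hF.exists_bracket hβ hν h1 h2
  exact hEf.trans (hfl.le_fl hf hfz)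

theorem abs_fl_sub_le (hF : FloatSystem β μ ν F) (hβ : 2 ≤ β) (hfl : RTN F fl) {z : ℝ} {E : ℤ}
    (hν : ν ≤ z) (h1 : (β : ℝ) ^ (E + μ) ≤ z) (h2 : z ≤ (β : ℝ) ^ (E + μ + 1)) :
    |fl z - z| ≤ (β : ℝ) ^ E / 2 := by
  obtain ⟨f, hf, g, hg, -, hfz, hzg, hgf⟩ := hF.exists_bracket hβ hν h1 h2
  exact (hfl.abs_fl_sub_le_half hf hg hfz hzg).trans (by linarith)

theorem four_sq_le (hF : FloatSystem β μ ν F) (hβ : 2 ≤ β) (hfl1 : RTN F fl1) (hfl2 : RTN F fl2)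
    {m : ℝ} {e E : ℤ} {S : ℕ} (hνm : ν ≤ m ^ 2) (h1 : (β : ℝ) ^ (E + μ) ≤ m ^ 2)
    (h2 : m ^ 2 ≤ (β : ℝ) ^ (E + μ + 1)) (hνe : ν ≤ (β : ℝ) ^ (e + μ)) (hPS : β ^ μ ≤ S)
    (hS : S < β ^ (μ + 1)) (hs : fl2 (√(fl1 (m ^ 2))) = (β : ℝ) ^ e * S) :
    4 * m ^ 2 ≤ ((β : ℝ) ^ e * (2 * S + 1)) ^ 2 + 2 * (β : ℝ) ^ E := by
  set t := fl1 (m ^ 2)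
  have ht0 : 0 ≤ t := (zpow_pos (by positivity) _).le.trans (hF.zpow_le_fl hβ hfl1 hνm h1 h2)
  have ht : m ^ 2 - (β : ℝ) ^ E / 2 ≤ t := by
    linarith [(abs_le.1 (hF.abs_fl_sub_le hβ hfl1 hνm h1 h2)).1]
  have hsqrt : √t ≤ (β : ℝ) ^ e * (2 * S + 1) / 2 := by
    have hg := hF.mul_mem hβ hνe (n := S + 1) (by omega) hS
    have := hfl2.le_midpoint hg (by rw [hs]; gcongr; exact_mod_cast S.lt_succ_self)
    rw [hs] at this
    push_cast at this
    linarith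
  have := pow_le_pow_left₀ (Real.sqrt_nonneg t) hsqrt 2
  rw [Real.sq_sqrt ht0] at this
  linarith

theorem exists_fl_sqrt_eq (hF : FloatSystem β μ ν F) (hβ : 2 ≤ β) (hfl1 : RTN F fl1)
    (hfl2 : RTN F fl2) {e : ℤ} {M c : ℕ} (hνe : ν ≤ (β : ℝ) ^ (e + μ))
    (hνm : ν ≤ ((β : ℝ) ^ e * M) ^ 2) (hlo : β ^ (c + 2 * μ) ≤ M ^ 2)
    (hhi : M ^ 2 ≤ β ^ (c + 2 * μ + 1)) (hM : M < β ^ (μ + 1))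
    (hlt : fl2 (√(fl1 (((β : ℝ) ^ e * M) ^ 2))) < (β : ℝ) ^ e * M) :
    ∃ S : ℕ, β ^ μ ≤ S ∧ S < M ∧ fl2 (√(fl1 (((β : ℝ) ^ e * M) ^ 2))) = (β : ℝ) ^ e * S ∧
      4 * M ^ 2 ≤ (2 * S + 1) ^ 2 + 2 * β ^ c * β ^ μ := by
  have hb : (β : ℝ) ≠ 0 := by positivity
  have hb1 : (1 : ℝ) ≤ β := by exact_mod_cast (by omega : 1 ≤ β)
  have hw : (0 : ℝ) < (β : ℝ) ^ e := zpow_pos (by positivity) e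
  have h1 : (β : ℝ) ^ (2 * e + (c + μ : ℕ) + μ) ≤ ((β : ℝ) ^ e * M) ^ 2 := by
    rw [show 2 * e + ((c + μ : ℕ) : ℤ) + μ = 2 * e + ((c + 2 * μ : ℕ) : ℤ) by push_cast; ring,
      zpow_two_mul_add_natCast hb, mul_pow]
    gcongr
    exact_mod_cast hlo
  have h2 : ((β : ℝ) ^ e * M) ^ 2 ≤ (β : ℝ) ^ (2 * e + (c + μ : ℕ) + μ + 1) := by
    rw [show 2 * e + ((c + μ : ℕ) : ℤ) + μ + 1 = 2 * e + ((c + 2 * μ + 1 : ℕ) : ℤ) by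
      push_cast; ring, zpow_two_mul_add_natCast hb, mul_pow]
    gcongr
    exact_mod_cast hhi
  set s := fl2 (√(fl1 (((β : ℝ) ^ e * M) ^ 2)))
  have hsqrt : (β : ℝ) ^ (e + μ) ≤ √(fl1 (((β : ℝ) ^ e * M) ^ 2)) := by
    refine Real.le_sqrt_of_sq_le (le_trans ?_ (hF.zpow_le_fl hβ hfl1 hνm h1 h2))
    rw [← zpow_natCast, ← zpow_mul]
    exact zpow_le_zpow_right₀ hb1 (by push_cast; omega)
  have hs1 : (β : ℝ) ^ (e + μ) ≤ s := by
    rw [zpow_add_natCast hb] at hsqrt ⊢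
    have hP := hF.mul_mem hβ hνe le_rfl (Nat.pow_le_pow_right (by omega) (by omega))
    exact_mod_cast hfl2.le_fl hP (by exact_mod_cast hsqrt)
  have hs2 : s < (β : ℝ) ^ (e + μ + 1) := by
    rw [show e + μ + 1 = e + ((μ + 1 : ℕ) : ℤ) by push_cast; ring, zpow_add_natCast hb]
    exact hlt.trans (mul_lt_mul_of_pos_left (by exact_mod_cast hM) hw)
  obtain ⟨S, hPS, -, hs⟩ := hF.exists_eq_zpow_mul (y := s) hβ (hfl2 _).1 hνe hs1 hs2
  have hSM : S < M := by
    rw [hs] at hlt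
    exact_mod_cast lt_of_mul_lt_mul_left hlt hw.le
  refine ⟨S, hPS, hSM, hs, ?_⟩
  have key := hF.four_sq_le hβ hfl1 hfl2 hνm h1 h2 hνe hPS (hSM.trans hM) hs
  rw [zpow_two_mul_add_natCast hb] at key
  have : ((β : ℝ) ^ e) ^ 2 * (4 * M ^ 2) ≤
      ((β : ℝ) ^ e) ^ 2 * ((2 * S + 1) ^ 2 + 2 * β ^ (c + μ)) := by
    linarith
  rw [mul_assoc, ← pow_add]
  exact_mod_cast le_of_mul_le_mul_left this (by positivity)

theorem two_pow_mul_lt_of_fl_sqrt_lt (hF : FloatSystem β μ ν F) (hβ : 2 ≤ β) (hμ : 1 ≤ μ)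
    (hν : ν ≤ 1) (hfl1 : RTN F fl1) (hfl2 : RTN F fl2) {m : ℝ} (hm : m ∈ F) (hm0 : 0 < m)
    (hνm : ν ≤ m ^ 2) (hlt : fl2 (√(fl1 (m ^ 2))) < m) :
    2 * (β : ℝ) ^ μ * m < (2 * (β : ℝ) ^ μ + 1) * fl2 (√(fl1 (m ^ 2))) := by
  have hνm' : ν ≤ m := by nlinarith
  obtain ⟨e, hme⟩ := hF.exists_mem_Eset m hm hm0 hνm'
  have hνe := hF.le_zpow_of_lt e (hνm'.trans_lt (Eset_bounds (by omega) hme).2)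
  obtain ⟨M, hPM, hM, rfl⟩ := (mem_Eset_iff (by omega)).1 hme
  -- On the boundary `M ^ 2 = β ^ (2 μ + 1)` we take `c = 0`, so that `c = 1` comes with the strict
  -- bound `β β ^ (2 μ) < M ^ 2` that the integer argument needs.
  obtain ⟨c, hc, hlo, hhi, hstrict⟩ : ∃ c : ℕ, c ≤ 1 ∧ β ^ (c + 2 * μ) ≤ M ^ 2 ∧
      M ^ 2 ≤ β ^ (c + 2 * μ + 1) ∧ (c = 0 ∨ β ^ (c + 2 * μ) < M ^ 2) := by
    rcases le_or_gt (M ^ 2) (β ^ (2 * μ + 1)) with h | h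
    · refine ⟨0, zero_le_one, ?_, by rwa [zero_add], Or.inl rfl⟩
      rw [zero_add, pow_mul']
      exact Nat.pow_le_pow_left hPM 2
    · refine ⟨1, le_rfl, by rw [add_comm 1]; exact h.le, ?_, Or.inr (by rwa [add_comm 1])⟩
      rw [show 1 + 2 * μ + 1 = 2 * (μ + 1) by ring, pow_mul']
      exact (Nat.pow_lt_pow_left hM two_ne_zero).le
  obtain ⟨S, hPS, hSM, hs, hstar⟩ := hF.exists_fl_sqrt_eq hβ hfl1 hfl2 hνe hνm hlo hhi hM hlt
  have hbM : β ^ c * (β ^ μ) ^ 2 < M ^ 2 := by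
    rw [← pow_mul', ← pow_add]
    rcases hstrict with rfl | h
    · rw [zero_add, pow_mul']
      exact Nat.pow_lt_pow_left (hPS.trans_lt hSM) two_ne_zero
    · exact h
  have key : 2 * β ^ μ * M < (2 * β ^ μ + 1) * S := by
    have := two_mul_mul_lt_of_sq_le (b := β ^ c) (P := β ^ μ) (S := S) (M := M)
      (by exact_mod_cast Nat.one_le_pow _ _ (by omega))
      (by exact_mod_cast Nat.pow_le_pow_right (by omega) (hc.trans hμ))
      (by exact_mod_cast hβ.trans (Nat.le_self_pow (by omega) β)) (by exact_mod_cast hPS)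
      (by exact_mod_cast hSM) (by exact_mod_cast hbM) (by exact_mod_cast hstar)
    exact_mod_cast this
  have hw : (0 : ℝ) < (β : ℝ) ^ e := zpow_pos (by positivity) e
  rw [hs]
  have : (2 * (β : ℝ) ^ μ * M) < (2 * (β : ℝ) ^ μ + 1) * S := by exact_mod_cast key
  nlinarith

theorem fl_le_one_of_two_pow_mul_lt (hF : FloatSystem β μ ν F) (hβ : 2 ≤ β) (hν : ν ≤ 1)
    (hfl : RTN F fl) {z : ℝ} (hz : 2 * (β : ℝ) ^ μ * z < 2 * (β : ℝ) ^ μ + 1) : fl z ≤ 1 := by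
  by_contra! h
  have hone := hF.one_mem hβ hν
  have h1 := hF.one_add_inv_le hβ hν (hfl z).1 h
  have h2 : fl z ≤ 2 * z - 1 := by
    rcases le_or_gt z 1 with hz1 | hz1
    · linarith [hfl.fl_le hone hz1]
    have := (hfl z).2 1 hone
    rw [abs_of_neg (by linarith : 1 - z < 0)] at this
    linarith [le_abs_self (fl z - z)]
  have h3 : (β : ℝ) ^ μ * (1 + ((β : ℝ) ^ μ)⁻¹) = (β : ℝ) ^ μ + 1 := by
    field_simp
  have hP : (0 : ℝ) < (β : ℝ) ^ μ := by positivity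
  nlinarith

theorem fl_div_fl_sqrt_le_one (hF : FloatSystem β μ ν F) (hβ : 2 ≤ β) (hμ : 1 ≤ μ) (hν : ν ≤ 1)
    (hfl1 : RTN F fl1) (hfl2 : RTN F fl2) (hfl3 : RTN F fl3) {x : ℝ} (hx : x ∈ F)
    (hx2 : ν ≤ x ^ 2) : fl3 (|x| / fl2 (√(fl1 (x ^ 2)))) ≤ 1 := by
  rw [← sq_abs x] at hx2 ⊢
  set s := fl2 (√(fl1 (|x| ^ 2)))
  rcases le_or_gt (|x| / s) 1 with hz | hz
  · exact hfl3.fl_le (hF.one_mem hβ hν) hz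
  have hs : 0 < s := by
    by_contra! hs
    exact hz.not_ge ((div_nonpos_of_nonneg_of_nonpos (abs_nonneg x) hs).trans zero_le_one)
  have hlt : s < |x| := (one_lt_div hs).1 hz
  have habs : |x| ∈ F := by
    rcases abs_choice x with h | h <;> rw [h]
    exacts [hx, hF.neg_mem x hx]
  have key := hF.two_pow_mul_lt_of_fl_sqrt_lt hβ hμ hν hfl1 hfl2 habs (hs.trans hlt) hx2 hlt
  refine hF.fl_le_one_of_two_pow_mul_lt hβ hν hfl3 ?_
  rw [mul_div_assoc', div_lt_iff₀ hs]
  exact key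

end FloatSystem

section Instances

variable {β μ : ℕ}

theorem floatSystem_PerfectF (hβ : 2 ≤ β) : FloatSystem β μ 0 (PerfectF β μ) where
  neg_mem := by
    rintro y (rfl | ⟨e, hy | hy⟩)
    · exact Or.inl neg_zero
    · exact Or.inr ⟨e, Or.inr (by rwa [neg_neg])⟩
    · exact Or.inr ⟨e, Or.inl hy⟩
  le_zpow_of_lt _ _ := (zpow_pos (by positivity) _).le
  Eset_subset e _ _ hy := Or.inr ⟨e, Or.inl hy⟩
  exists_mem_Eset := by
    rintro y (rfl | ⟨e, hy | hy⟩) hy0 -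
    · exact absurd hy0 (lt_irrefl 0)
    · exact ⟨e, hy⟩
    · linarith [pos_of_mem_Eset_s7 (by omega) hy]

theorem floatSystem_MPFRF (hβ : 2 ≤ β) (emin : ℤ) :
    FloatSystem β μ ((β : ℝ) ^ (emin + μ)) (MPFRF β μ emin) := by
  have hb : (1 : ℝ) < β := by exact_mod_cast hβ
  refine ⟨?_, fun e he => ?_, fun e he y hy => ?_, ?_⟩
  · rintro y (rfl | ⟨e, he, hy | hy⟩)
    · exact Or.inl neg_zero
    · exact Or.inr ⟨e, he, Or.inr (by rwa [neg_neg])⟩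
    · exact Or.inr ⟨e, he, Or.inl hy⟩
  · have := (zpow_lt_zpow_iff_right₀ hb).1 he
    exact zpow_le_zpow_right₀ hb.le (by omega)
  · have := (zpow_le_zpow_iff_right₀ hb).1 he
    exact Or.inr ⟨e, by omega, Or.inl hy⟩
  · rintro y (rfl | ⟨e, -, hy | hy⟩) hy0 -
    · exact absurd hy0 (lt_irrefl 0)
    · exact ⟨e, hy⟩
    · linarith [pos_of_mem_Eset_s7 (by omega) hy]

theorem floatSystem_IEEEF (hβ : 2 ≤ β) (emin : ℤ) :
    FloatSystem β μ ((β : ℝ) ^ (emin + μ)) (IEEEF β μ emin) := by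
  have hM := floatSystem_MPFRF (μ := μ) hβ emin
  refine ⟨?_, hM.le_zpow_of_lt, fun e he => (hM.Eset_subset e he).trans Set.subset_union_left, ?_⟩
  · rintro y (hy | ⟨r, h1, h2, rfl | rfl⟩)
    · exact Or.inl (hM.neg_mem y hy)
    · exact Or.inr ⟨r, h1, h2, Or.inr rfl⟩
    · exact Or.inr ⟨r, h1, h2, Or.inl (neg_neg _)⟩
  · rintro y (hy | ⟨r, h1, h2, rfl | rfl⟩) hy0 hν
    · exact hM.exists_mem_Eset y hy hy0 hν
    · have : (r : ℝ) < (β : ℝ) ^ μ := by exact_mod_cast h2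
      rw [zpow_add_natCast (by positivity)] at hν
      nlinarith [zpow_pos (by positivity : (0 : ℝ) < β) emin]
    · have : (0 : ℝ) < r := by exact_mod_cast h1
      nlinarith [zpow_pos (by positivity : (0 : ℝ) < β) emin]

end Instances

theorem stmt7 (β μ : ℕ) (hβ : 2 ≤ β) (hμ : 1 ≤ μ) (emin : ℤ)
    (hemin : emin < -(μ : ℤ))
    (F : Set ℝ) (ν : ℝ)
    (hF : (F = PerfectF β μ ∧ ν = 0) ∨
          (F = IEEEF β μ emin ∧ ν = (β : ℝ) ^ (emin + μ)) ∨
          (F = MPFRF β μ emin ∧ ν = (β : ℝ) ^ (emin + μ)))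
    (fl1 fl2 fl3 : ℝ → ℝ) (hfl1 : RTN F fl1) (hfl2 : RTN F fl2) (hfl3 : RTN F fl3)
    (x : ℝ) (hx : x ∈ F) (hx2 : ν ≤ x ^ 2) :
    fl3 (|x| / fl2 (Real.sqrt (fl1 (x ^ 2)))) ≤ 1 := by
  have hν : (β : ℝ) ^ (emin + μ) ≤ 1 :=
    zpow_le_one_of_nonpos₀ (by exact_mod_cast (by omega : 1 ≤ β)) (by omega)
  rcases hF with ⟨rfl, rfl⟩ | ⟨rfl, rfl⟩ | ⟨rfl, rfl⟩
  · exact (floatSystem_PerfectF hβ).fl_div_fl_sqrt_le_one hβ hμ zero_le_one hfl1 hfl2 hfl3 hx hx2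
  · exact (floatSystem_IEEEF hβ emin).fl_div_fl_sqrt_le_one hβ hμ hν hfl1 hfl2 hfl3 hx hx2
  · exact (floatSystem_MPFRF hβ emin).fl_div_fl_sqrt_le_one hβ hμ hν hfl1 hfl2 hfl3 hx hx2
end
end

section
/- Sharpness of the norm-one bound: in the perfect binary system, if fl rounds to nearest breaking ties downward, x_0 = 1 and x_k = u for k = 1,…,n, then the recursively rounded sum equals 1, so the error is exactly nu = (nu/(1+nu))·Σ_{k=0}^n x_k. If instead ties are broken upward and 2nu < 1, the rounded sum equals 1 + 2nu, with error exactly nu. -/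
noncomputable section

lemma memF (μ : ℕ) (u : ℝ) (hu : u = 1 / (2 * (2 : ℝ) ^ μ)) (r : ℕ) (hr : r < 2 ^ μ) :
    (1 + 2 * (r : ℝ) * u) ∈ PerfectF 2 μ := by
  refine Or.inr ⟨-(μ : ℤ), Or.inl ⟨r, by simpa using hr, ?_⟩⟩
  have h2 : (2 : ℝ) ^ μ ≠ 0 := by positivity
  rw [hu]
  push_cast [zpow_neg, zpow_natCast]
  field_simp

lemma charF (μ : ℕ) (u : ℝ) (hu : u = 1 / (2 * (2 : ℝ) ^ μ)) (y : ℝ)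
    (hy : y ∈ PerfectF 2 μ) (h1 : 1 ≤ y) (h2 : y < 2) :
    ∃ r : ℕ, r < 2 ^ μ ∧ y = 1 + 2 * (r : ℝ) * u := by
  have h2μ : (0:ℝ) < (2:ℝ) ^ μ := by positivity
  rcases hy with h0 | ⟨e, he | he⟩
  · linarith
  · obtain ⟨r, hr, hyv⟩ := he
    have hrR : (r : ℝ) < (2:ℝ) ^ μ := by
      have : r < 2 ^ μ := by simpa using hr
      calc (r:ℝ) < ((2^μ : ℕ):ℝ) := by exact_mod_cast this
        _ = (2:ℝ)^μ := by push_cast; ring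
    push_cast at hyv
    have hepos : (0:ℝ) < (2:ℝ) ^ e := zpow_pos (by norm_num) e
    have hlow : (2:ℝ) ^ (e + μ) ≤ y := by
      rw [zpow_add₀ (by norm_num : (2:ℝ) ≠ 0), zpow_natCast, hyv]
      nlinarith [(Nat.cast_nonneg r : (0:ℝ) ≤ r)]
    have hhigh : y < (2:ℝ) ^ (e + μ + 1) := by
      rw [zpow_add₀ (by norm_num : (2:ℝ) ≠ 0), zpow_add₀ (by norm_num : (2:ℝ) ≠ 0),
        zpow_natCast, zpow_one, hyv]
      nlinarith
    have he1 : e + μ < 1 := by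
      have : (2:ℝ) ^ (e + μ) < (2:ℝ) ^ (1:ℤ) := by
        rw [zpow_one]; linarith
      exact (zpow_lt_zpow_iff_right₀ (by norm_num)).mp this
    have he2 : (0:ℤ) < e + μ + 1 := by
      have : (2:ℝ) ^ (0:ℤ) < (2:ℝ) ^ (e + μ + 1) := by
        rw [zpow_zero]; linarith
      exact (zpow_lt_zpow_iff_right₀ (by norm_num)).mp this
    have hee : e = -(μ:ℤ) := by omega
    refine ⟨r, by simpa using hr, ?_⟩
    rw [hyv, hee, hu, zpow_neg, zpow_natCast]
    field_simp
  · obtain ⟨r, hr, hyv⟩ := he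
    push_cast at hyv
    have hepos : (0:ℝ) < (2:ℝ) ^ e := zpow_pos (by norm_num) e
    nlinarith [(Nat.cast_nonneg r : (0:ℝ) ≤ r)]

/-- Core midpoint analysis: the rounded value is either the float below or above,
and the distance is exactly u. -/
lemma midKey (μ : ℕ) (u : ℝ) (hu : u = 1 / (2 * (2 : ℝ) ^ μ))
    (fl : ℝ → ℝ) (hfl : RTN (PerfectF 2 μ) fl)
    (k : ℕ) (hk : 1 ≤ k) (hkb : 2 * (k : ℝ) * u < 1) :
    (fl (1 + 2 * (k : ℝ) * u - u) = 1 + 2 * ((k : ℝ) - 1) * u ∨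
      fl (1 + 2 * (k : ℝ) * u - u) = 1 + 2 * (k : ℝ) * u) ∧
    |fl (1 + 2 * (k : ℝ) * u - u) - (1 + 2 * (k : ℝ) * u - u)| = u ∧
    (1 + 2 * ((k : ℝ) - 1) * u) ∈ PerfectF 2 μ ∧ (1 + 2 * (k : ℝ) * u) ∈ PerfectF 2 μ := by
  have h2μ : (0:ℝ) < (2:ℝ) ^ μ := by positivity
  have hupos : 0 < u := by rw [hu]; positivity
  set z := 1 + 2 * (k : ℝ) * u - u with hz
  have hkR : (k : ℝ) < (2:ℝ) ^ μ := by
    rw [hu] at hkb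
    have := mul_lt_mul_of_pos_right hkb (by positivity : (0:ℝ) < 2 * 2 ^ μ)
    rw [one_mul, mul_assoc, one_div, inv_mul_cancel₀ (by positivity : (2 * (2:ℝ) ^ μ) ≠ 0),
      mul_one] at this
    linarith
  have hkN : k < 2 ^ μ := by
    have : ((k:ℕ):ℝ) < ((2^μ : ℕ):ℝ) := by push_cast; linarith
    exact_mod_cast this
  have hcast : ((k - 1 : ℕ) : ℝ) = (k : ℝ) - 1 := by
    push_cast [Nat.cast_sub hk]; ring
  have ha : (1 + 2 * ((k : ℝ) - 1) * u) ∈ PerfectF 2 μ := by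
    have := memF μ u hu (k - 1) (by omega)
    rwa [hcast] at this
  have hb : (1 + 2 * (k : ℝ) * u) ∈ PerfectF 2 μ := memF μ u hu k hkN
  have hda : |(1 + 2 * ((k : ℝ) - 1) * u) - z| = u := by
    have : (1 + 2 * ((k : ℝ) - 1) * u) - z = -u := by rw [hz]; ring
    rw [this, abs_neg, abs_of_pos hupos]
  have hdist : |fl z - z| ≤ u := by
    have := (hfl z).2 _ ha; rwa [hda] at this
  have hlb : z - u ≤ fl z := by
    have := abs_le.mp hdist; linarith [this.2]
  have hub : fl z ≤ z + u := by
    have := abs_le.mp hdist; linarith [(abs_le.mp hdist).1]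
  have hk1 : (1:ℝ) ≤ (k:ℝ) := by exact_mod_cast hk
  have h1f : 1 ≤ fl z := by
    have : z - u = 1 + 2 * ((k:ℝ) - 1) * u := by rw [hz]; ring
    nlinarith
  have h2f : fl z < 2 := by
    have : z + u = 1 + 2 * (k:ℝ) * u := by rw [hz]; ring
    nlinarith
  obtain ⟨r, hr, hflz⟩ := charF μ u hu (fl z) (hfl z).1 h1f h2f
  have hrlb : (k : ℝ) - 1 ≤ (r : ℝ) := by
    have : z - u = 1 + 2 * ((k:ℝ) - 1) * u := by rw [hz]; ring
    nlinarith [hlb, hflz]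
  have hrub : (r : ℝ) ≤ (k : ℝ) := by
    have : z + u = 1 + 2 * (k:ℝ) * u := by rw [hz]; ring
    nlinarith [hub, hflz]
  have : r = k - 1 ∨ r = k := by
    have h1 : k - 1 ≤ r := by exact_mod_cast (by push_cast [Nat.cast_sub hk]; linarith :
      ((k - 1 : ℕ):ℝ) ≤ (r:ℝ))
    have h2 : r ≤ k := by exact_mod_cast hrub
    omega
  rcases this with hrk | hrk
  · have heq : fl z = 1 + 2 * ((k : ℝ) - 1) * u := by rw [hflz, hrk, hcast]
    refine ⟨Or.inl heq, ?_, ha, hb⟩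
    rw [heq]; rw [show (1 + 2 * ((k : ℝ) - 1) * u) - z = -u by rw [hz]; ring,
      abs_neg, abs_of_pos hupos]
  · have heq : fl z = 1 + 2 * (k : ℝ) * u := by rw [hflz, hrk]
    refine ⟨Or.inr heq, ?_, ha, hb⟩
    rw [heq, show (1 + 2 * (k : ℝ) * u) - z = u by rw [hz]; ring, abs_of_pos hupos]

lemma midDown (μ : ℕ) (u : ℝ) (hu : u = 1 / (2 * (2 : ℝ) ^ μ))
    (fl : ℝ → ℝ) (hfl : RTN (PerfectF 2 μ) fl) (hdown : BreaksTiesDown (PerfectF 2 μ) fl)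
    (k : ℕ) (hk : 1 ≤ k) (hkb : 2 * (k : ℝ) * u < 1) :
    fl (1 + 2 * (k : ℝ) * u - u) = 1 + 2 * ((k : ℝ) - 1) * u := by
  have hupos : 0 < u := by rw [hu]; positivity
  obtain ⟨hor, hdist, ha, _⟩ := midKey μ u hu fl hfl k hk hkb
  have hle := hdown _ _ ha (by
    rw [hdist, show (1 + 2 * ((k : ℝ) - 1) * u) - (1 + 2 * (k : ℝ) * u - u) = -u by ring,
      abs_neg, abs_of_pos hupos])
  rcases hor with h | h
  · exact h
  · exfalso; rw [h] at hle; nlinarith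

lemma midUp (μ : ℕ) (u : ℝ) (hu : u = 1 / (2 * (2 : ℝ) ^ μ))
    (fl : ℝ → ℝ) (hfl : RTN (PerfectF 2 μ) fl) (hup : BreaksTiesUp (PerfectF 2 μ) fl)
    (k : ℕ) (hk : 1 ≤ k) (hkb : 2 * (k : ℝ) * u < 1) :
    fl (1 + 2 * (k : ℝ) * u - u) = 1 + 2 * (k : ℝ) * u := by
  have hupos : 0 < u := by rw [hu]; positivity
  obtain ⟨hor, hdist, _, hb⟩ := midKey μ u hu fl hfl k hk hkb
  have hle := hup _ _ hb (by
    rw [hdist, show (1 + 2 * (k : ℝ) * u) - (1 + 2 * (k : ℝ) * u - u) = u by ring,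
      abs_of_pos hupos])
  rcases hor with h | h
  · exfalso; rw [h] at hle; nlinarith
  · exact h

theorem stmt9 (μ n : ℕ) (hμ : 1 ≤ μ) (hn : 1 ≤ n)
    (u : ℝ) (hu : u = 1 / (2 * (2 : ℝ) ^ μ))
    (x : ℕ → ℝ) (hx0 : x 0 = 1) (hxk : ∀ k, 1 ≤ k → k ≤ n → x k = u)
    (fld flu : ℝ → ℝ)
    (hfld : RTN (PerfectF 2 μ) fld) (hdown : BreaksTiesDown (PerfectF 2 μ) fld)
    (hflu : RTN (PerfectF 2 μ) flu) (hup : BreaksTiesUp (PerfectF 2 μ) flu) :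
    rsum (fun _ => fld) x n = 1 ∧
    (2 * (n : ℝ) * u < 1 → rsum (fun _ => flu) x n = 1 + 2 * (n : ℝ) * u) := by
  have h2μ : (0:ℝ) < (2:ℝ) ^ μ := by positivity
  have hupos : 0 < u := by rw [hu]; positivity
  have h2u : 2 * ((1:ℕ):ℝ) * u < 1 := by
    have h1 : (2:ℝ) ≤ (2:ℝ) ^ μ := by
      calc (2:ℝ) = 2 ^ 1 := (pow_one 2).symm
      _ ≤ 2 ^ μ := pow_le_pow_right₀ (by norm_num) hμ
    rw [hu]
    push_cast
    rw [mul_one, one_div, mul_inv_lt_iff₀ (by positivity), one_mul]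
    linarith
  constructor
  · -- ties down: sum stays 1
    have key : ∀ k, k ≤ n → rsum (fun _ => fld) x k = 1 := by
      intro k hk
      induction k with
      | zero => simpa [rsum] using hx0
      | succ m ih =>
        have hm : m ≤ n := Nat.le_of_succ_le hk
        have hx : x (m + 1) = u := hxk (m + 1) (Nat.le_add_left 1 m) hk
        have hmid := midDown μ u hu fld hfld hdown 1 le_rfl h2u
        simp only [rsum, ih hm, hx]
        have e1 : (1:ℝ) + u = 1 + 2 * ((1:ℕ):ℝ) * u - u := by push_cast; ring
        rw [e1, hmid]
        norm_num
    exact key n le_rfl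
  · intro hbound
    have key : ∀ k, k ≤ n → rsum (fun _ => flu) x k = 1 + 2 * (k : ℝ) * u := by
      intro k hk
      induction k with
      | zero => simp [rsum, hx0]
      | succ m ih =>
        have hm : m ≤ n := Nat.le_of_succ_le hk
        have hx : x (m + 1) = u := hxk (m + 1) (Nat.le_add_left 1 m) hk
        have hmn : ((m:ℝ) + 1) ≤ (n:ℝ) := by exact_mod_cast hk
        have hb : 2 * ((m + 1 : ℕ) : ℝ) * u < 1 := by
          push_cast
          calc 2 * ((m:ℝ) + 1) * u ≤ 2 * (n:ℝ) * u := by nlinarith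
          _ < 1 := hbound
        have hmid := midUp μ u hu flu hflu hup (m + 1) (Nat.le_add_left 1 m) hb
        simp only [rsum, ih hm, hx]
        have e1 : 1 + 2 * (m:ℝ) * u + u = 1 + 2 * ((m + 1 : ℕ):ℝ) * u - u := by
          push_cast; ring
        rw [e1, hmid]
    exact key n le_rfl
end
end

section
/- Convexity/concavity lemma: for positive reals n_1,…,n_k, define f_k(u) = Π_{i=1}^k (1+2n_i u)/(1+n_i u) and g_k(u) = Π_{i=1}^k 1/(1+n_i u) on (0,∞). Then g_k is convex for every k, f_k is strictly concave for k = 1, 2, 3, and consequently for k ≤ 3 one has 1 − (Σ n_i)u ≤ g_k(u) ≤ f_k(u) ≤ 1 + (Σ n_i)u. -/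
noncomputable section

/-!
Each factor `u ↦ (1 + a u)⁻¹` of `g_k` is nonnegative, antitone and convex on `(0, ∞)`, and a
product of such functions is convex, since antitone functions are similarly ordered.

The factors `φ_a u = (1 + 2 a u) / (1 + a u)` of `f_k` (`fFactor a`) have logarithmic derivative
`ρ_a = a / ((1 + a u) (1 + 2 a u))` (`fFactorLogDeriv a`) and `φ_a'' = -2 ρ_a² e_a φ_a`, where
`e_a = 1 + 2 a u`. Hence for `F = φ_a φ_b φ_c`
`F'' / F = 2 (ρ_a ρ_b + ρ_a ρ_c + ρ_b ρ_c) - 2 (ρ_a² e_a + ρ_b² e_b + ρ_c² e_c)`,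
which is negative because `pq + pr + qr ≤ p² + q² + r²` and `e_a > 1`, `e_b, e_c ≥ 1`; with more
than three factors the cross terms can win. As `φ_0 = 1`, three factors cover every `k ≤ 3`.

The lower bound comes from `∏ (1 + t_i) ≤ exp (∑ t_i)` and `1 - s ≤ exp (-s)`, the middle one
holds factorwise, and the upper one is a polynomial inequality in `a u, b u, c u`.
-/

open Set Filter Topology

theorem strictConcaveOn_of_hasDerivAt2_neg {s : Set ℝ} (hs : IsOpen s) (hconv : Convex ℝ s)
    {f f' f'' : ℝ → ℝ} (hf : ∀ x ∈ s, HasDerivAt f (f' x) x)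
    (hf' : ∀ x ∈ s, HasDerivAt f' (f'' x) x) (hf'' : ∀ x ∈ s, f'' x < 0) :
    StrictConcaveOn ℝ s f := by
  refine strictConcaveOn_of_deriv2_neg hconv
    (fun x hx => (hf x hx).continuousAt.continuousWithinAt) ?_
  rw [hs.interior_eq]
  intro x hx
  have hderiv : deriv f =ᶠ[𝓝 x] f' :=
    eventually_of_mem (hs.mem_nhds hx) fun y hy => (hf y hy).deriv
  rw [Function.iterate_succ_apply, Function.iterate_one, hderiv.deriv_eq, (hf' x hx).deriv]
  exact hf'' x hx

theorem ConvexOn.finset_prod_of_antitoneOn {ι 𝕜 : Type*} [Field 𝕜] [LinearOrder 𝕜]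
    [IsStrictOrderedRing 𝕜] {s : Set 𝕜} (hs : Convex 𝕜 s) (t : Finset ι) {f : ι → 𝕜 → 𝕜}
    (hconv : ∀ i ∈ t, ConvexOn 𝕜 s (f i)) (hanti : ∀ i ∈ t, AntitoneOn (f i) s)
    (hnonneg : ∀ i ∈ t, ∀ x ∈ s, 0 ≤ f i x) : ConvexOn 𝕜 s (fun x => ∏ i ∈ t, f i x) := by
  induction t using Finset.cons_induction with
  | empty => simpa using convexOn_const 1 hs
  | cons j t hj ih =>
    simp only [Finset.forall_mem_cons] at hconv hanti hnonneg
    simp only [Finset.prod_cons]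
    have hprod_anti : AntitoneOn (fun x => ∏ i ∈ t, f i x) s := fun x hx y hy hxy =>
      Finset.prod_le_prod (fun i hi => hnonneg.2 i hi y hy) fun i hi => hanti.2 i hi hx hy hxy
    exact hconv.1.mul (ih hconv.2 hanti.2 hnonneg.2) hnonneg.1
      (fun x hx => Finset.prod_nonneg fun i hi => hnonneg.2 i hi x hx)
      (hanti.1.monovaryOn hprod_anti)

theorem convexOn_inv_one_add_mul {a : ℝ} (ha : 0 ≤ a) :
    ConvexOn ℝ (Ioi 0) (fun u => (1 + a * u)⁻¹) := by
  have h := (convexOn_zpow (𝕜 := ℝ) (-1)).comp_affineMap (AffineMap.lineMap 1 (1 + a))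
  refine (h.subset (fun u (hu : 0 < u) => ?_) (convex_Ioi 0)).congr fun u _ => ?_
  · simp only [mem_preimage, AffineMap.lineMap_apply_ring', add_sub_cancel_left, mem_Ioi]
    positivity
  · simp only [Function.comp_apply, AffineMap.lineMap_apply_ring', add_sub_cancel_left,
      zpow_neg, zpow_one]
    ring_nf

theorem antitoneOn_inv_one_add_mul {a : ℝ} (ha : 0 ≤ a) :
    AntitoneOn (fun u => (1 + a * u)⁻¹) (Ioi 0) := fun x hx y _ hxy => by
  have : 0 < 1 + a * x := by have : (0:ℝ) < x := hx; positivity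
  dsimp only
  gcongr

theorem one_sub_sum_le_prod_inv_one_add {ι : Type*} (s : Finset ι) {t : ι → ℝ}
    (ht : ∀ i, 0 ≤ t i) : 1 - ∑ i ∈ s, t i ≤ ∏ i ∈ s, (1 + t i)⁻¹ := by
  rw [Finset.prod_inv_distrib]
  calc 1 - ∑ i ∈ s, t i ≤ Real.exp (-∑ i ∈ s, t i) := by
        linarith [Real.add_one_le_exp (-∑ i ∈ s, t i)]
    _ = (Real.exp (∑ i ∈ s, t i))⁻¹ := Real.exp_neg _
    _ ≤ (∏ i ∈ s, (1 + t i))⁻¹ := by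
      gcongr
      · exact Finset.prod_pos fun i _ => by linarith [ht i]
      · exact Real.prod_one_add_le_exp_sum s ht

def fFactor (a u : ℝ) : ℝ := (1 + 2 * a * u) / (1 + a * u)

def fFactorLogDeriv (a u : ℝ) : ℝ := a / ((1 + a * u) * (1 + 2 * a * u))

theorem hasDerivAt_one_add_mul (c u : ℝ) : HasDerivAt (fun u => 1 + c * u) c u := by
  simpa using ((hasDerivAt_id u).const_mul c).const_add 1

theorem hasDerivAt_fFactor {a u : ℝ} (h : 1 + a * u ≠ 0) :
    HasDerivAt (fFactor a) (a / (1 + a * u) ^ 2) u := by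
  exact ((hasDerivAt_one_add_mul (2 * a) u).div (hasDerivAt_one_add_mul a u) h).congr_deriv
    (by ring)

theorem hasDerivAt_div_one_add_mul_sq {a u : ℝ} (h : 1 + a * u ≠ 0) :
    HasDerivAt (fun u => a / (1 + a * u) ^ 2) (-2 * a ^ 2 / (1 + a * u) ^ 3) u := by
  refine ((hasDerivAt_const u a).div ((hasDerivAt_one_add_mul a u).pow 2)
    (pow_ne_zero 2 h)).congr_deriv ?_
  simp only [Pi.pow_apply]
  field_simp
  ring

theorem div_sq_eq_fFactorLogDeriv_mul {a u : ℝ} (h₁ : 1 + a * u ≠ 0)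
    (h₂ : 1 + 2 * a * u ≠ 0) :
    a / (1 + a * u) ^ 2 = fFactorLogDeriv a u * fFactor a u := by
  unfold fFactorLogDeriv fFactor
  rw [div_mul_div_comm, div_eq_div_iff (pow_ne_zero 2 h₁) (mul_ne_zero (mul_ne_zero h₁ h₂) h₁)]
  ring

theorem div_cube_eq_fFactorLogDeriv_sq_mul {a u : ℝ} (h₁ : 1 + a * u ≠ 0)
    (h₂ : 1 + 2 * a * u ≠ 0) :
    -2 * a ^ 2 / (1 + a * u) ^ 3 =
      -2 * fFactorLogDeriv a u ^ 2 * (1 + 2 * a * u) * fFactor a u := by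
  unfold fFactorLogDeriv fFactor
  field_simp

theorem mul_add_mul_add_mul_lt {p q r e f g : ℝ} (hp : p ≠ 0) (he : 1 < e) (hf : 1 ≤ f)
    (hg : 1 ≤ g) :
    p * q + p * r + q * r < p ^ 2 * e + q ^ 2 * f + r ^ 2 * g := by
  calc p * q + p * r + q * r ≤ p ^ 2 + q ^ 2 + r ^ 2 := by
        nlinarith [sq_nonneg (p - q), sq_nonneg (q - r), sq_nonneg (r - p)]
    _ < p ^ 2 * e + q ^ 2 * f + r ^ 2 * g := by
      have := lt_mul_of_one_lt_right (by positivity : 0 < p ^ 2) he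
      have := le_mul_of_one_le_right (sq_nonneg q) hf
      have := le_mul_of_one_le_right (sq_nonneg r) hg
      linarith

theorem strictConcaveOn_fFactor_mul_three {a b c : ℝ} (ha : 0 < a) (hb : 0 ≤ b) (hc : 0 ≤ c) :
    StrictConcaveOn ℝ (Ioi 0) (fun u => fFactor a u * fFactor b u * fFactor c u) := by
  let φ' (d u : ℝ) : ℝ := d / (1 + d * u) ^ 2
  let φ'' (d u : ℝ) : ℝ := -2 * d ^ 2 / (1 + d * u) ^ 3
  have hden {d u : ℝ} (hd : 0 ≤ d) (hu : u ∈ Ioi (0 : ℝ)) : 0 < 1 + d * u := by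
    have : (0 : ℝ) < u := hu; positivity
  have hφ {d u : ℝ} (hd : 0 ≤ d) (hu : u ∈ Ioi (0 : ℝ)) : HasDerivAt (fFactor d) (φ' d u) u :=
    hasDerivAt_fFactor (hden hd hu).ne'
  have hφ' {d u : ℝ} (hd : 0 ≤ d) (hu : u ∈ Ioi (0 : ℝ)) : HasDerivAt (φ' d) (φ'' d u) u :=
    hasDerivAt_div_one_add_mul_sq (hden hd hu).ne'
  refine strictConcaveOn_of_hasDerivAt2_neg (f' := fun x => φ' a x * fFactor b x * fFactor c x
      + fFactor a x * φ' b x * fFactor c x + fFactor a x * fFactor b x * φ' c x)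
    (f'' := fun x => φ'' a x * fFactor b x * fFactor c x + fFactor a x * φ'' b x * fFactor c x
      + fFactor a x * fFactor b x * φ'' c x + 2 * (φ' a x * φ' b x * fFactor c x
        + φ' a x * fFactor b x * φ' c x + fFactor a x * φ' b x * φ' c x))
    isOpen_Ioi (convex_Ioi 0) (fun x hx => ?_) (fun x hx => ?_) fun x hx => ?_
  · exact (((hφ ha.le hx).mul (hφ hb hx)).mul (hφ hc hx)).congr_deriv
      (by simp only [Pi.mul_apply]; ring)
  · exact (((((hφ' ha.le hx).mul (hφ hb hx)).mul (hφ hc hx)).add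
      (((hφ ha.le hx).mul (hφ' hb hx)).mul (hφ hc hx))).add
      (((hφ ha.le hx).mul (hφ hb hx)).mul (hφ' hc hx))).congr_deriv
      (by simp only [Pi.mul_apply]; ring)
  have hx' : (0 : ℝ) < x := hx
  have hA := hden ha.le hx
  have hB := hden hb hx
  have hC := hden hc hx
  have hA₂ : 0 < 1 + 2 * a * x := by positivity
  have hB₂ : 0 < 1 + 2 * b * x := by positivity
  have hC₂ : 0 < 1 + 2 * c * x := by positivity
  simp only [φ', φ'', div_sq_eq_fFactorLogDeriv_mul hA.ne' hA₂.ne',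
    div_sq_eq_fFactorLogDeriv_mul hB.ne' hB₂.ne', div_sq_eq_fFactorLogDeriv_mul hC.ne' hC₂.ne',
    div_cube_eq_fFactorLogDeriv_sq_mul hA.ne' hA₂.ne',
    div_cube_eq_fFactorLogDeriv_sq_mul hB.ne' hB₂.ne',
    div_cube_eq_fFactorLogDeriv_sq_mul hC.ne' hC₂.ne']
  have hF : 0 < fFactor a x * fFactor b x * fFactor c x := by unfold fFactor; positivity
  have hp : fFactorLogDeriv a x ≠ 0 := by unfold fFactorLogDeriv; positivity
  set p := fFactorLogDeriv a x
  set q := fFactorLogDeriv b x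
  set r := fFactorLogDeriv c x
  have hkey : p * q + p * r + q * r < p ^ 2 * (1 + 2 * a * x) + q ^ 2 * (1 + 2 * b * x)
      + r ^ 2 * (1 + 2 * c * x) :=
    mul_add_mul_add_mul_lt hp (lt_add_of_pos_right 1 (by positivity))
      (le_add_of_nonneg_right (by positivity)) (le_add_of_nonneg_right (by positivity))
  calc _ = 2 * (fFactor a x * fFactor b x * fFactor c x) * (p * q + p * r + q * r
        - (p ^ 2 * (1 + 2 * a * x) + q ^ 2 * (1 + 2 * b * x) + r ^ 2 * (1 + 2 * c * x))) := by
        ring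
    _ < 0 := mul_neg_of_pos_of_neg (by positivity) (sub_neg.2 hkey)

theorem fFactor_zero_left (u : ℝ) : fFactor 0 u = 1 := by simp [fFactor]

theorem exists_prod_fFactor_eq_mul_three {k : ℕ} (hk₁ : 1 ≤ k) (hk₃ : k ≤ 3) {n : Fin k → ℝ}
    (hn : ∀ i, 0 < n i) : ∃ a b c, 0 < a ∧ 0 ≤ b ∧ 0 ≤ c ∧ ∑ i, n i = a + b + c ∧
      ∀ u, ∏ i, fFactor (n i) u = fFactor a u * fFactor b u * fFactor c u := by
  interval_cases k
  · exact ⟨n 0, 0, 0, hn 0, le_rfl, le_rfl, by simp, fun u => by simp [fFactor_zero_left]⟩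
  · exact ⟨n 0, n 1, 0, hn 0, (hn 1).le, le_rfl, by simp, fun u => by simp [fFactor_zero_left]⟩
  · exact ⟨n 0, n 1, n 2, hn 0, (hn 1).le, (hn 2).le, Fin.sum_univ_three n,
      fun u => Fin.prod_univ_three _⟩

theorem one_add_two_mul_mul_three_le {A B C : ℝ} (hA : 0 ≤ A) (hB : 0 ≤ B) (hC : 0 ≤ C) :
    (1 + 2 * A) * (1 + 2 * B) * (1 + 2 * C) ≤
      (1 + (A + B + C)) * ((1 + A) * (1 + B) * (1 + C)) := by
  nlinarith [sq_nonneg (A - B), sq_nonneg (B - C), sq_nonneg (A - C),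
    mul_nonneg hC (sq_nonneg (A - B)), mul_nonneg hA (sq_nonneg (B - C)),
    mul_nonneg hB (sq_nonneg (A - C)), mul_nonneg (mul_nonneg hA hB) hC]

theorem fFactor_mul_three_le {a b c u : ℝ} (ha : 0 ≤ a) (hb : 0 ≤ b) (hc : 0 ≤ c) (hu : 0 ≤ u) :
    fFactor a u * fFactor b u * fFactor c u ≤ 1 + (a + b + c) * u := by
  have hA : 0 ≤ a * u := mul_nonneg ha hu
  have hB : 0 ≤ b * u := mul_nonneg hb hu
  have hC : 0 ≤ c * u := mul_nonneg hc hu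
  unfold fFactor
  rw [div_mul_div_comm, div_mul_div_comm, div_le_iff₀ (by positivity)]
  simpa only [mul_assoc, add_mul] using one_add_two_mul_mul_three_le hA hB hC

theorem stmt11 (k : ℕ) (hk : 1 ≤ k) (n : Fin k → ℝ) (hn : ∀ i, 0 < n i) :
    ConvexOn ℝ (Set.Ioi (0 : ℝ)) (fun u => ∏ i, 1 / (1 + n i * u)) ∧
    (k ≤ 3 →
      StrictConcaveOn ℝ (Set.Ioi (0 : ℝ)) (fun u => ∏ i, (1 + 2 * n i * u) / (1 + n i * u)) ∧
      ∀ u : ℝ, 0 < u →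
        1 - (∑ i, n i) * u ≤ ∏ i, 1 / (1 + n i * u) ∧
        (∏ i, 1 / (1 + n i * u)) ≤ ∏ i, (1 + 2 * n i * u) / (1 + n i * u) ∧
        (∏ i, (1 + 2 * n i * u) / (1 + n i * u)) ≤ 1 + (∑ i, n i) * u) := by
  have hnu {u : ℝ} (hu : 0 < u) (i : Fin k) : 0 ≤ n i * u := (mul_pos (hn i) hu).le
  refine ⟨?_, fun hk₃ => ?_⟩
  · simpa only [one_div] using ConvexOn.finset_prod_of_antitoneOn (convex_Ioi 0) Finset.univ
      (fun i _ => convexOn_inv_one_add_mul (hn i).le)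
      (fun i _ => antitoneOn_inv_one_add_mul (hn i).le)
      (fun i _ x hx => inv_nonneg.2 (add_nonneg zero_le_one (hnu hx i)))
  obtain ⟨a, b, c, ha, hb, hc, hsum, hprod⟩ := exists_prod_fFactor_eq_mul_three hk hk₃ hn
  refine ⟨?_, fun u hu => ⟨?_, ?_, ?_⟩⟩
  · exact (funext hprod : (fun u => ∏ i, fFactor (n i) u) = _) ▸
      strictConcaveOn_fFactor_mul_three ha hb hc
  · simpa only [one_div, Finset.sum_mul] using
      one_sub_sum_le_prod_inv_one_add Finset.univ (hnu hu)
  · refine Finset.prod_le_prod (fun i _ => by have := hnu hu i; positivity) fun i _ => ?_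
    have := hnu hu i
    gcongr
    linarith
  · rw [hsum]
    exact (hprod u).trans_le (fFactor_mul_three_le ha.le hb hc hu.le)
end
end

section
/- Positive cumulative bound (lower part): if fl_1,…,fl_n round to nearest in a perfect system with unit roundoff u, and y_0,…,y_n ≥ 0, then the recursively rounded sum ŝ_n satisfies ŝ_n − Σ_{k=0}^n y_k ≥ −(u/(1+u))·Σ_{k=1}^n Σ_{i=0}^k y_i. -/
/-!
A nonnegative `z` lies in a binade `[β^(d+μ), β^(d+μ+1))` on which the floats are the multiples
of `β^d`; rounding to nearest moves `z` by at most half a grid step, `u β^(d+μ)`, and cannot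
go below the float `β^(d+μ) ≤ z`, so `z ≤ (1 + u) fl z`, i.e. `fl z ≥ (1 - u/(1+u)) z`.
Writing `ε = u/(1+u)`, induction on `k` then gives `ŝ_k ≥ s_k - ε (s_1 + ⋯ + s_k)` for the
exact partial sums `s_k`: the new rounding loses at most `ε s_{k+1}` against the exact sum,
and it shrinks the error inherited from `ŝ_k` by the factor `1 - ε ≤ 1`.
-/
noncomputable section

namespace RTN

variable {F : Set ℝ} {fl : ℝ → ℝ}

theorem le_of_mem_of_le (hfl : RTN F fl) {a z : ℝ} (ha : a ∈ F) (haz : a ≤ z) : a ≤ fl z := by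
  have h := (hfl z).2 a ha
  rw [abs_of_nonpos (sub_nonpos.2 haz)] at h
  linarith [neg_abs_le (fl z - z)]

theorem abs_sub_le_half (hfl : RTN F fl) {a b z : ℝ} (ha : a ∈ F) (hb : b ∈ F)
    (haz : a ≤ z) (hzb : z ≤ b) : |fl z - z| ≤ (b - a) / 2 := by
  have hda := (hfl z).2 a ha
  have hdb := (hfl z).2 b hb
  rw [abs_of_nonpos (sub_nonpos.2 haz)] at hda
  rw [abs_of_nonneg (sub_nonneg.2 hzb)] at hdb
  rcases le_total (z - a) (b - z) with h | h <;> linarith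

end RTN

theorem zpow_mul_natCast_mem_perfectF {β μ : ℕ} (hβ : 2 ≤ β) (d : ℤ) {m : ℕ}
    (hm₁ : β ^ μ ≤ m) (hm₂ : m ≤ β ^ (μ + 1)) : (β : ℝ) ^ d * m ∈ PerfectF β μ := by
  have hβ₀ : (β : ℝ) ≠ 0 := by positivity
  have hstep : (β - 1) * β ^ μ + β ^ μ = β ^ (μ + 1) := by
    rw [pow_succ, ← Nat.succ_mul, Nat.succ_eq_add_one, Nat.sub_add_cancel (by omega), mul_comm]
  rcases hm₂.lt_or_eq with hlt | rfl
  · refine Or.inr ⟨d, Or.inl ⟨m - β ^ μ, by omega, ?_⟩⟩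
    rw [Nat.cast_sub hm₁]
    push_cast
    ring
  · -- the top of the grid is the first float of the next binade
    refine Or.inr ⟨d + 1, Or.inl ⟨0, Nat.mul_pos (by omega) (by positivity), ?_⟩⟩
    rw [zpow_add_one₀ hβ₀]
    push_cast
    ring

theorem exists_perfectF_grid {β : ℕ} (hβ : 2 ≤ β) (μ : ℕ) {z : ℝ} (hz : 0 < z) :
    ∃ (d : ℤ) (m : ℕ), β ^ μ ≤ m ∧ m < β ^ (μ + 1) ∧
      (β : ℝ) ^ d * m ≤ z ∧ z < (β : ℝ) ^ d * (m + 1) := by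
  have hβ₁ : (1 : ℝ) < β := by exact_mod_cast hβ
  have hβμ : (0 : ℝ) < (β : ℝ) ^ μ := by positivity
  obtain ⟨d, hd₁, hd₂⟩ := exists_mem_Ico_zpow (div_pos hz hβμ) hβ₁
  have hβd : (0 : ℝ) < (β : ℝ) ^ d := by positivity
  set q := z / (β : ℝ) ^ d
  have hq₁ : ((β ^ μ : ℕ) : ℝ) ≤ q := by
    rw [le_div_iff₀ hβd]
    push_cast
    rw [le_div_iff₀ hβμ] at hd₁
    linarith
  have hq₂ : q < ((β ^ (μ + 1) : ℕ) : ℝ) := by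
    rw [div_lt_iff₀ hβd]
    rw [div_lt_iff₀ hβμ, zpow_add_one₀ (by positivity)] at hd₂
    push_cast
    linarith [show (β : ℝ) ^ (μ + 1) * (β : ℝ) ^ d = (β : ℝ) ^ d * β * (β : ℝ) ^ μ by ring]
  have hq₀ : 0 ≤ q := by positivity
  refine ⟨d, ⌊q⌋₊, Nat.le_floor hq₁, (Nat.floor_lt hq₀).2 hq₂, ?_, ?_⟩
  · rw [← le_div_iff₀' hβd]
    exact Nat.floor_le hq₀
  · rw [← div_lt_iff₀' hβd]
    exact Nat.lt_floor_add_one q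

theorem RTN.le_one_add_mul_perfectF {β μ : ℕ} (hβ : 2 ≤ β) {fl : ℝ → ℝ}
    (hfl : RTN (PerfectF β μ) fl) {z : ℝ} (hz : 0 ≤ z) :
    z ≤ (1 + 1 / (2 * (β : ℝ) ^ μ)) * fl z := by
  rcases hz.eq_or_lt with rfl | hz
  · have := hfl.le_of_mem_of_le (Or.inl rfl) le_rfl
    positivity
  obtain ⟨d, m, hm₁, hm₂, hlo, hhi⟩ := exists_perfectF_grid hβ μ hz
  have hβd : (0 : ℝ) < (β : ℝ) ^ d := by positivity
  have mem (k : ℕ) (hk₁ : β ^ μ ≤ k) (hk₂ : k ≤ β ^ (μ + 1)) :=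
    zpow_mul_natCast_mem_perfectF hβ d hk₁ hk₂
  have hbinade : (β : ℝ) ^ d * (β : ℝ) ^ μ ≤ fl z := by
    have hmμ : ((β ^ μ : ℕ) : ℝ) ≤ m := by exact_mod_cast hm₁
    have := hfl.le_of_mem_of_le (mem (β ^ μ) le_rfl (Nat.pow_le_pow_right (by omega) (by omega)))
      (le_trans (mul_le_mul_of_nonneg_left hmμ hβd.le) hlo)
    exact_mod_cast this
  have herr : |fl z - z| ≤ (β : ℝ) ^ d / 2 := by
    have := hfl.abs_sub_le_half (mem m hm₁ hm₂.le) (mem (m + 1) (by omega) hm₂) hlo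
      (by push_cast; exact hhi.le)
    push_cast at this
    linarith
  have hulp : (β : ℝ) ^ d / 2 = 1 / (2 * (β : ℝ) ^ μ) * ((β : ℝ) ^ d * (β : ℝ) ^ μ) := by
    field_simp
  have : 1 / (2 * (β : ℝ) ^ μ) * ((β : ℝ) ^ d * (β : ℝ) ^ μ) ≤ 1 / (2 * (β : ℝ) ^ μ) * fl z :=
    mul_le_mul_of_nonneg_left hbinade (by positivity)
  linarith [neg_abs_le (fl z - z)]

section RecursiveSum

variable {n : ℕ} {fl : ℕ → ℝ → ℝ} {y : ℕ → ℝ} {ε : ℝ}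

theorem rsum_nonneg (hε : ε ≤ 1) (hfl : ∀ k, 1 ≤ k → k ≤ n → ∀ z, 0 ≤ z → (1 - ε) * z ≤ fl k z)
    (hy : ∀ k, k ≤ n → 0 ≤ y k) : ∀ k, k ≤ n → 0 ≤ rsum fl y k
  | 0, _ => hy 0 (Nat.zero_le n)
  | k + 1, hk => by
    have hz : 0 ≤ rsum fl y k + y (k + 1) :=
      add_nonneg (rsum_nonneg hε hfl hy k (by omega)) (hy _ hk)
    exact le_trans (mul_nonneg (sub_nonneg.2 hε) hz) (hfl (k + 1) (by omega) hk _ hz)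

theorem sum_sub_le_rsum (hε₀ : 0 ≤ ε) (hε₁ : ε ≤ 1)
    (hfl : ∀ k, 1 ≤ k → k ≤ n → ∀ z, 0 ≤ z → (1 - ε) * z ≤ fl k z)
    (hy : ∀ k, k ≤ n → 0 ≤ y k) : ∀ k, k ≤ n →
      ∑ i ∈ Finset.range (k + 1), y i -
        ε * ∑ j ∈ Finset.Icc 1 k, ∑ i ∈ Finset.range (j + 1), y i ≤ rsum fl y k
  | 0, _ => by simp [rsum]
  | k + 1, hk => by
    have ih := sum_sub_le_rsum hε₀ hε₁ hfl hy k (by omega)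
    set S := ∑ i ∈ Finset.range (k + 1), y i
    set A := ∑ j ∈ Finset.Icc 1 k, ∑ i ∈ Finset.range (j + 1), y i
    have hA : 0 ≤ A := Finset.sum_nonneg fun j hj => Finset.sum_nonneg fun i hi => hy i <| by
      simp only [Finset.mem_Icc, Finset.mem_range] at hj hi; omega
    have hz : 0 ≤ rsum fl y k + y (k + 1) :=
      add_nonneg (rsum_nonneg hε₁ hfl hy k (by omega)) (hy _ hk)
    have hround : (1 - ε) * (rsum fl y k + y (k + 1)) ≤ rsum fl y (k + 1) :=
      hfl (k + 1) (by omega) hk _ hz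
    rw [Finset.sum_Icc_succ_top (by omega), Finset.sum_range_succ _ (k + 1)]
    have : (1 - ε) * (S + y (k + 1) - ε * A) ≤ (1 - ε) * (rsum fl y k + y (k + 1)) :=
      mul_le_mul_of_nonneg_left (by linarith) (sub_nonneg.2 hε₁)
    nlinarith [mul_nonneg hε₀ (mul_nonneg hε₀ hA)]

end RecursiveSum

theorem stmt13_general (β μ n : ℕ) (hβ : 2 ≤ β)
    (u : ℝ) (hu : u = 1 / (2 * (β : ℝ) ^ μ))
    (fl : ℕ → ℝ → ℝ) (hfl : ∀ k, 1 ≤ k → k ≤ n → RTN (PerfectF β μ) (fl k))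
    (y : ℕ → ℝ) (hy : ∀ k, k ≤ n → 0 ≤ y k) :
    -(u / (1 + u)) * ∑ k ∈ Finset.Icc 1 n, ∑ i ∈ Finset.range (k + 1), y i ≤
      rsum fl y n - ∑ k ∈ Finset.range (n + 1), y k := by
  have hu₀ : 0 ≤ u := by rw [hu]; positivity
  have hε₀ : 0 ≤ u / (1 + u) := by positivity
  have hε₁ : u / (1 + u) ≤ 1 := (div_le_one (by positivity)).2 (by linarith)
  have hrel : ∀ k, 1 ≤ k → k ≤ n → ∀ z, 0 ≤ z → (1 - u / (1 + u)) * z ≤ fl k z := by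
    intro k hk₁ hk₂ z hz
    have := (hfl k hk₁ hk₂).le_one_add_mul_perfectF hβ hz
    rw [← hu] at this
    rw [one_sub_div (by positivity), add_sub_cancel_right, one_div_mul_eq_div,
      div_le_iff₀' (by positivity)]
    exact this
  linarith [sum_sub_le_rsum hε₀ hε₁ hrel hy n le_rfl]

theorem stmt13 (β μ n : ℕ) (hβ : 2 ≤ β) (hμ : 1 ≤ μ) (hn : 1 ≤ n)
    (u : ℝ) (hu : u = 1 / (2 * (β : ℝ) ^ μ))
    (fl : ℕ → ℝ → ℝ) (hfl : ∀ k, 1 ≤ k → k ≤ n → RTN (PerfectF β μ) (fl k))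
    (y : ℕ → ℝ) (hy : ∀ k, k ≤ n → 0 ≤ y k) :
    -(u / (1 + u)) * ∑ k ∈ Finset.Icc 1 n, ∑ i ∈ Finset.range (k + 1), y i ≤
      rsum fl y n - ∑ k ∈ Finset.range (n + 1), y k :=
  stmt13_general β μ n hβ u hu fl hfl y hy
end
end

section
/- Signed cumulative bound: if fl_1,…,fl_n round to nearest in a perfect system with unit roundoff u and 20nu < 1, then for arbitrary real y_0,…,y_n the recursively rounded sum satisfies |ŝ_n − Σ_{k=0}^n y_k| ≤ (u/(1 − (n−2)u))·Σ_{k=1}^n |Σ_{i=0}^k y_i|. -/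
noncomputable section

/-!
Near a positive real `z` with `β ^ e ≤ z < β ^ (e + 1)` the floating point numbers form the grid
`β ^ e + r h`, `h = β ^ (e - μ)`. If `z ≤ β ^ e + h / 2`, the float `β ^ e` is within
`z - β ^ e ≤ z / (2 β ^ μ + 1)` of `z`; otherwise the nearest grid point is within
`h / 2 < z / (2 β ^ μ + 1)`. So rounding to nearest has relative error at most
`v = u / (1 + u)`, sharper than `u`.

Writing `e_k = ŝ_k - s_k` for the partial sums `s_k`, the `k`-th rounding perturbs `s_k + e_{k-1}`,
so `|e_k| ≤ (1 + v) |e_{k-1}| + v |s_k|` and `|e_n| ≤ v ∑ (1 + v) ^ (n - k) |s_k|`. Finally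
`v (1 + v) ^ (n - 1) ≤ v / (1 - (n - 1) v) = u / (1 - (n - 2) u)`.
-/

namespace PerfectF

variable {β μ : ℕ}

theorem zero_mem : (0 : ℝ) ∈ PerfectF β μ := Or.inl rfl

theorem neg_mem {x : ℝ} (hx : x ∈ PerfectF β μ) : -x ∈ PerfectF β μ := by
  rcases hx with rfl | ⟨e, h | h⟩
  · simpa using zero_mem
  · exact Or.inr ⟨e, Or.inr (by simpa using h)⟩
  · exact Or.inr ⟨e, Or.inl h⟩

/-- The endpoint `r = (β - 1) β ^ μ` is the float `β ^ (e + 1)`. -/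
theorem zpow_mul_add_mem (hβ : 2 ≤ β) (e : ℤ) {r : ℕ} (hr : r ≤ (β - 1) * β ^ μ) :
    (β : ℝ) ^ e * ((β : ℝ) ^ μ + r) ∈ PerfectF β μ := by
  rcases hr.lt_or_eq with hr | rfl
  · exact Or.inr ⟨e, Or.inl ⟨r, hr, rfl⟩⟩
  · refine Or.inr ⟨e + 1, Or.inl ⟨0, Nat.mul_pos (by omega) (by positivity), ?_⟩⟩
    rw [zpow_add_one₀ (by positivity)]
    push_cast [Nat.cast_sub (by omega : 1 ≤ β)]
    ring

theorem exists_abs_sub_le_of_pos (hβ : 2 ≤ β) {z : ℝ} (hz : 0 < z) :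
    ∃ x ∈ PerfectF β μ, |x - z| ≤ z / (2 * (β : ℝ) ^ μ + 1) := by
  have hβ1 : 1 < β := hβ
  have hβ0 : (β : ℝ) ≠ 0 := by positivity
  set B : ℝ := (β : ℝ) ^ μ
  set h : ℝ := (β : ℝ) ^ (Int.log β z - μ)
  have hB : 1 ≤ B := one_le_pow₀ (by exact_mod_cast hβ1.le)
  have hh : 0 < h := by positivity
  have hE : (β : ℝ) ^ Int.log β z = h * B := by
    simp only [h, B]
    rw [zpow_sub₀ hβ0, zpow_natCast, div_mul_cancel₀ _ (by positivity)]
  have hlo : h * B ≤ z := hE ▸ Int.zpow_log_le_self hβ1 hz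
  have hhi : z < β * (h * B) := by
    rw [← hE, mul_comm, ← zpow_add_one₀ hβ0]
    exact Int.lt_zpow_succ_log_self hβ1 z
  by_cases hnear : z ≤ h * B + h / 2
  · have hE_mem := zpow_mul_add_mem (μ := μ) hβ (Int.log β z - μ) (Nat.zero_le _)
    refine ⟨h * B, by simpa using hE_mem, ?_⟩
    rw [abs_of_nonpos (by linarith), le_div_iff₀ (by positivity)]
    nlinarith
  · push Not at hnear
    set w := (z - h * B) / h
    have hw : |w - round w| ≤ 1 / 2 := abs_sub_round w
    have hwB : w < (β - 1) * B := by
      rw [div_lt_iff₀ hh]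
      nlinarith
    obtain ⟨r, hr⟩ : ∃ r : ℕ, round w = r := by
      refine Int.eq_ofNat_of_zero_le ?_
      have : 1 / 2 < w := by rw [lt_div_iff₀ hh]; linarith
      have : (0 : ℝ) ≤ round w := by linarith [(abs_le.mp hw).2]
      exact_mod_cast this
    rw [hr, Int.cast_natCast] at hw
    have hrB : r ≤ (β - 1) * β ^ μ := by
      have : (r : ℝ) < ((β - 1) * β ^ μ : ℕ) + 1 := by
        push_cast [Nat.cast_sub hβ1.le]
        linarith [(abs_le.mp hw).1]
      exact Nat.lt_succ_iff.mp (by exact_mod_cast this)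
    refine ⟨_, zpow_mul_add_mem hβ (Int.log β z - μ) hrB, ?_⟩
    have hzw : z = h * B + w * h := by
      simp only [w]
      rw [div_mul_cancel₀ _ hh.ne']
      ring
    calc |h * (B + r) - z| = h * |w - r| := by
          rw [hzw, show h * (B + r) - (h * B + w * h) = h * (r - w) by ring, abs_mul,
            abs_of_pos hh, abs_sub_comm]
      _ ≤ h * (1 / 2) := by gcongr
      _ ≤ z / (2 * B + 1) := by
          rw [le_div_iff₀ (by positivity)]
          nlinarith

theorem exists_abs_sub_le (hβ : 2 ≤ β) (z : ℝ) :
    ∃ x ∈ PerfectF β μ, |x - z| ≤ |z| / (2 * (β : ℝ) ^ μ + 1) := by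
  rcases lt_trichotomy z 0 with hz | rfl | hz
  · obtain ⟨x, hx, hxz⟩ := exists_abs_sub_le_of_pos (μ := μ) hβ (neg_pos.mpr hz)
    refine ⟨-x, neg_mem hx, ?_⟩
    rwa [abs_of_neg hz, show -x - z = -(x - -z) by ring, abs_neg]
  · exact ⟨0, zero_mem, by simp⟩
  · simpa [abs_of_pos hz] using exists_abs_sub_le_of_pos hβ hz

end PerfectF

theorem RTN.abs_sub_le_perfectF {β μ : ℕ} (hβ : 2 ≤ β) {fl : ℝ → ℝ}
    (hfl : RTN (PerfectF β μ) fl) (z : ℝ) :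
    |fl z - z| ≤ |z| / (2 * (β : ℝ) ^ μ + 1) := by
  obtain ⟨x, hx, hxz⟩ := PerfectF.exists_abs_sub_le hβ z
  exact ((hfl z).2 x hx).trans hxz

theorem sum_Icc_one_pow_sub_mul_succ {R : Type*} [CommSemiring R] (a : R) (f : ℕ → R)
    (n : ℕ) :
    ∑ j ∈ Finset.Icc 1 (n + 1), a ^ (n + 1 - j) * f j =
      a * ∑ j ∈ Finset.Icc 1 n, a ^ (n - j) * f j + f (n + 1) := by
  rw [Finset.sum_Icc_succ_top (by omega), Nat.sub_self, pow_zero, one_mul, Finset.mul_sum]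
  congr 1
  refine Finset.sum_congr rfl fun j hj => ?_
  rw [Nat.sub_add_comm (Finset.mem_Icc.mp hj).2, pow_succ]
  ring

theorem abs_rsum_sub_sum_le {fl : ℕ → ℝ → ℝ} {v : ℝ} (hv : 0 ≤ v) {n : ℕ}
    (hfl : ∀ k, 1 ≤ k → k ≤ n → ∀ z, |fl k z - z| ≤ v * |z|) (y : ℕ → ℝ) :
    |rsum fl y n - ∑ i ∈ Finset.range (n + 1), y i| ≤
      v * ∑ j ∈ Finset.Icc 1 n, (1 + v) ^ (n - j) * |∑ i ∈ Finset.range (j + 1), y i| := by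
  induction n with
  | zero => simp [rsum]
  | succ n ih =>
    set s := ∑ i ∈ Finset.range (n + 2), y i
    set e := rsum fl y n - ∑ i ∈ Finset.range (n + 1), y i
    have he := ih fun k hk1 hkn => hfl k hk1 (by omega)
    have hz : rsum fl y n + y (n + 1) = s + e := by
      simp only [s, e, Finset.sum_range_succ _ (n + 1)]
      ring
    have hround := hfl (n + 1) (by omega) le_rfl (rsum fl y n + y (n + 1))
    rw [hz] at hround
    rw [sum_Icc_one_pow_sub_mul_succ]
    calc |rsum fl y (n + 1) - s|
        = |(fl (n + 1) (s + e) - (s + e)) + e| := by rw [rsum, hz]; ring_nf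
      _ ≤ v * |s + e| + |e| := (abs_add_le _ _).trans (by linarith)
      _ ≤ v * |s| + (1 + v) * |e| := by
          linarith [mul_le_mul_of_nonneg_left (abs_add_le s e) hv]
      _ ≤ _ := by linarith [mul_le_mul_of_nonneg_left he (by linarith : 0 ≤ 1 + v)]

theorem one_add_pow_mul_one_sub_le {v : ℝ} (hv : 0 ≤ v) (m : ℕ) :
    (1 + v) ^ m * (1 - m * v) ≤ 1 := by
  induction m with
  | zero => simp
  | succ m ih =>
    have hstep : (1 + v) * (1 - (m + 1) * v) ≤ 1 - m * v := by
      nlinarith [mul_nonneg (add_nonneg (Nat.cast_nonneg m) zero_le_one) (mul_nonneg hv hv)]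
    calc (1 + v) ^ (m + 1) * (1 - ((m + 1 : ℕ) : ℝ) * v)
        = (1 + v) ^ m * ((1 + v) * (1 - (m + 1) * v)) := by push_cast; ring
      _ ≤ (1 + v) ^ m * (1 - m * v) := by gcongr
      _ ≤ 1 := ih

theorem div_one_add_mul_one_add_pow_le {u : ℝ} (hu : 0 ≤ u) {m : ℕ}
    (hm : ((m : ℝ) - 1) * u < 1) :
    u / (1 + u) * (1 + u / (1 + u)) ^ m ≤ u / (1 - ((m : ℝ) - 1) * u) := by
  set v := u / (1 + u)
  have hv : 0 ≤ v := by positivity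
  have hmv : 1 - m * v = (1 - ((m : ℝ) - 1) * u) / (1 + u) := by
    simp only [v]
    field_simp
    ring
  have hmv0 : 0 < 1 - m * v := by rw [hmv]; exact div_pos (by linarith) (by linarith)
  calc v * (1 + v) ^ m ≤ v / (1 - m * v) := by
        rw [le_div_iff₀ hmv0, mul_assoc]
        exact mul_le_of_le_one_right hv (one_add_pow_mul_one_sub_le hv m)
    _ = u / (1 - ((m : ℝ) - 1) * u) := by
        rw [hmv, div_div_div_cancel_right₀ (by linarith)]

theorem stmt15_general (β μ n : ℕ) (hβ : 2 ≤ β)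
    (u : ℝ) (hu : u = 1 / (2 * (β : ℝ) ^ μ)) (hnu : 20 * (n : ℝ) * u < 1)
    (fl : ℕ → ℝ → ℝ) (hfl : ∀ k, 1 ≤ k → k ≤ n → RTN (PerfectF β μ) (fl k))
    (y : ℕ → ℝ) :
    |rsum fl y n - ∑ k ∈ Finset.range (n + 1), y k| ≤
      (u / (1 - ((n : ℝ) - 2) * u)) *
        ∑ k ∈ Finset.Icc 1 n, |∑ i ∈ Finset.range (k + 1), y i| := by
  have hu0 : 0 ≤ u := by rw [hu]; positivity
  have hv : u / (1 + u) = 1 / (2 * (β : ℝ) ^ μ + 1) := by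
    rw [hu]
    field_simp
  have hround : ∀ k, 1 ≤ k → k ≤ n → ∀ z, |fl k z - z| ≤ u / (1 + u) * |z| := by
    intro k hk1 hkn z
    simpa [hv, div_eq_inv_mul] using (hfl k hk1 hkn).abs_sub_le_perfectF hβ z
  refine (abs_rsum_sub_sum_le (by positivity) hround y).trans ?_
  rw [Finset.mul_sum, Finset.mul_sum]
  refine Finset.sum_le_sum fun j hj => ?_
  obtain ⟨hj1, hjn⟩ := Finset.mem_Icc.mp hj
  have hcast : ((n - 1 : ℕ) : ℝ) - 1 = n - 2 := by
    rw [Nat.cast_sub (by omega)]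
    ring
  rw [← mul_assoc]
  gcongr
  calc u / (1 + u) * (1 + u / (1 + u)) ^ (n - j)
      ≤ u / (1 + u) * (1 + u / (1 + u)) ^ (n - 1) := by
        gcongr
        exact le_add_of_nonneg_right (by positivity)
    _ ≤ u / (1 - ((n : ℝ) - 2) * u) := by
        rw [← hcast]
        exact div_one_add_mul_one_add_pow_le hu0 (by rw [hcast]; nlinarith)

theorem stmt15 (β μ n : ℕ) (hβ : 2 ≤ β) (hμ : 1 ≤ μ) (hn : 1 ≤ n)
    (u : ℝ) (hu : u = 1 / (2 * (β : ℝ) ^ μ)) (hnu : 20 * (n : ℝ) * u < 1)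
    (fl : ℕ → ℝ → ℝ) (hfl : ∀ k, 1 ≤ k → k ≤ n → RTN (PerfectF β μ) (fl k))
    (y : ℕ → ℝ) :
    |rsum fl y n - ∑ k ∈ Finset.range (n + 1), y k| ≤
      (u / (1 - ((n : ℝ) - 2) * u)) *
        ∑ k ∈ Finset.Icc 1 n, |∑ i ∈ Finset.range (k + 1), y i| :=
  stmt15_general β μ n hβ u hu hnu fl hfl y
end
end

section
/- Critical sum proposition: let e be an exponent for F, x ∈ F, and z real with |x + z| = β^e(β^μ + r + 1/2) for some integer r ∈ [0,(β−1)β^μ). Then |z| ≥ β^e/2. -/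
noncomputable section

lemma half_int_aux (k : ℤ) : (1:ℝ)/2 ≤ |(k:ℝ) + 1/2| := by
  have h : (2*k+1 : ℤ) ≠ 0 := by omega
  have h1 : (1:ℝ) ≤ |((2*k+1 : ℤ) : ℝ)| := by
    exact_mod_cast Int.one_le_abs h
  have h2 : |((2*k+1 : ℤ) : ℝ)| = 2 * |(k:ℝ) + 1/2| := by
    push_cast
    rw [show ((2:ℝ)*k+1) = 2 * ((k:ℝ) + 1/2) by ring, abs_mul]
    norm_num
  linarith [h2 ▸ h1]

lemma Eset_dichotomy (β μ : ℕ) (hβ : 2 ≤ β) (e e' : ℤ) (x : ℝ) (hx : x ∈ Eset β μ e') :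
    (e ≤ e' → ∃ m : ℤ, x = (β:ℝ)^e * m) ∧ (e' < e → |x| < (β:ℝ)^e * (β:ℝ)^μ) := by
  obtain ⟨s, hs, rfl⟩ := hx
  have hb1 : (1:ℝ) < (β:ℝ) := by exact_mod_cast hβ.trans_lt' one_lt_two
  have hb0 : (0:ℝ) < (β:ℝ) := by linarith
  have hbne : (β:ℝ) ≠ 0 := ne_of_gt hb0
  constructor
  · intro he
    refine ⟨(β:ℤ)^(e'-e).toNat * ((β:ℤ)^μ + s), ?_⟩
    have he2 : ((e'-e).toNat : ℤ) = e' - e := Int.toNat_of_nonneg (by omega)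
    have : (β:ℝ)^e' = (β:ℝ)^e * (β:ℝ)^((e'-e).toNat : ℤ) := by
      rw [he2, ← zpow_add₀ hbne]; ring_nf
    rw [this]
    push_cast
    rw [zpow_natCast]
    ring
  · intro he
    have hpos : (0:ℝ) ≤ (β:ℝ)^e' * ((β:ℝ)^μ + s) := by positivity
    rw [abs_of_nonneg hpos]
    have hsR : (s:ℝ) < ((β:ℝ) - 1) * (β:ℝ)^μ := by
      have h := hs
      have : ((s:ℕ):ℝ) < (((β-1)*β^μ : ℕ) : ℝ) := by exact_mod_cast h
      push_cast [Nat.cast_sub (show 1 ≤ β by omega)] at this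
      exact this
    have h1 : (β:ℝ)^μ + s < (β:ℝ) * (β:ℝ)^μ := by nlinarith [pow_pos hb0 μ]
    have h2 : (β:ℝ)^e' * (β:ℝ) ≤ (β:ℝ)^e := by
      have : (β:ℝ)^e' * (β:ℝ) = (β:ℝ)^(e'+1) := by
        rw [zpow_add₀ hbne]; norm_num
      rw [this]
      exact zpow_le_zpow_right₀ (le_of_lt hb1) (by omega)
    have hp : (0:ℝ) < (β:ℝ)^e' := zpow_pos hb0 e'
    nlinarith [pow_pos hb0 μ]

lemma F_dichotomy (β μ : ℕ) (hβ : 2 ≤ β) (emin : ℤ) (F : Set ℝ) (e : ℤ)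
    (hF : F = PerfectF β μ ∨
          ((F = IEEEF β μ emin ∨ F = MPFRF β μ emin) ∧ emin ≤ e))
    (x : ℝ) (hx : x ∈ F) :
    (∃ m : ℤ, x = (β:ℝ)^e * m) ∨ |x| < (β:ℝ)^e * (β:ℝ)^μ := by
  have hb1 : (1:ℝ) < (β:ℝ) := by exact_mod_cast hβ.trans_lt' one_lt_two
  have hb0 : (0:ℝ) < (β:ℝ) := by linarith
  have hbne : (β:ℝ) ≠ 0 := ne_of_gt hb0
  have hmul : ∀ e' : ℤ, (x ∈ Eset β μ e' ∨ -x ∈ Eset β μ e') →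
      (∃ m : ℤ, x = (β:ℝ)^e * m) ∨ |x| < (β:ℝ)^e * (β:ℝ)^μ := by
    intro e' hx'
    rcases le_or_gt e e' with he | he
    · left
      rcases hx' with h | h
      · exact (Eset_dichotomy β μ hβ e e' x h).1 he
      · obtain ⟨m, hm⟩ := (Eset_dichotomy β μ hβ e e' (-x) h).1 he
        exact ⟨-m, by push_cast; linarith⟩
    · right
      rcases hx' with h | h
      · exact (Eset_dichotomy β μ hβ e e' x h).2 he
      · have := (Eset_dichotomy β μ hβ e e' (-x) h).2 he
        rwa [abs_neg] at this
  have hzero : x = 0 → (∃ m : ℤ, x = (β:ℝ)^e * m) ∨ |x| < (β:ℝ)^e * (β:ℝ)^μ := by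
    intro h; left; exact ⟨0, by simp [h]⟩
  have hsub : x ∈ SubN β μ emin → emin ≤ e →
      (∃ m : ℤ, x = (β:ℝ)^e * m) ∨ |x| < (β:ℝ)^e * (β:ℝ)^μ := by
    intro hxs hee
    obtain ⟨s, hs1, hs2, hcase⟩ := hxs
    right
    have hkey : (β:ℝ)^emin * s < (β:ℝ)^e * (β:ℝ)^μ := by
      have h1 : (s:ℝ) < (β:ℝ)^μ := by
        calc (s:ℝ) < ((β^μ : ℕ):ℝ) := by exact_mod_cast hs2
          _ = (β:ℝ)^μ := by push_cast; ring
      have h2 : (β:ℝ)^emin ≤ (β:ℝ)^e := zpow_le_zpow_right₀ (le_of_lt hb1) hee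
      have hp : (0:ℝ) < (β:ℝ)^emin := zpow_pos hb0 emin
      nlinarith [pow_pos hb0 μ]
    rcases hcase with h | h
    · rw [h, abs_of_nonneg (by positivity)]; exact hkey
    · rw [h, abs_neg, abs_of_nonneg (by positivity)]; exact hkey
  rcases hF with rfl | ⟨hF', hee⟩
  · rcases hx with h | ⟨e', h⟩
    · exact hzero h
    · exact hmul e' h
  · rcases hF' with rfl | rfl
    · rcases hx with (h | ⟨e', he', h⟩) | h
      · exact hzero h
      · exact hmul e' h
      · exact hsub h hee
    · rcases hx with h | ⟨e', he', h⟩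
      · exact hzero h
      · exact hmul e' h

theorem stmt16 (β μ : ℕ) (hβ : 2 ≤ β) (hμ : 1 ≤ μ) (emin : ℤ)
    (hemin : emin < -(μ : ℤ))
    (F : Set ℝ) (e : ℤ)
    (hF : F = PerfectF β μ ∨
          ((F = IEEEF β μ emin ∨ F = MPFRF β μ emin) ∧ emin ≤ e))
    (x z : ℝ) (hx : x ∈ F) (r : ℕ) (hr : r < (β - 1) * β ^ μ)
    (hxz : |x + z| = (β : ℝ) ^ e * ((β : ℝ) ^ μ + r + 1 / 2)) :
    (β : ℝ) ^ e / 2 ≤ |z| := by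
  have hb1 : (1:ℝ) < (β:ℝ) := by exact_mod_cast hβ.trans_lt' one_lt_two
  have hb0 : (0:ℝ) < (β:ℝ) := by linarith
  have hp : (0:ℝ) < (β:ℝ)^e := zpow_pos hb0 e
  rcases F_dichotomy β μ hβ emin F e hF x hx with ⟨m, hm⟩ | hlt
  · -- x is an integer multiple of β^e
    rcases abs_cases (x + z) with ⟨habs, _⟩ | ⟨habs, _⟩
    · -- x + z = β^e (β^μ + r + 1/2)
      set k : ℤ := (β:ℤ)^μ + r - m with hk
      have hz : z = (β:ℝ)^e * ((k:ℝ) + 1/2) := by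
        have : x + z = (β:ℝ)^e * ((β:ℝ)^μ + r + 1/2) := by rw [← habs, hxz]
        rw [hm] at this
        push_cast [hk]
        linarith
      rw [hz, abs_mul, abs_of_pos hp]
      have := half_int_aux k
      calc (β:ℝ)^e / 2 = (β:ℝ)^e * (1/2) := by ring
        _ ≤ (β:ℝ)^e * |(k:ℝ) + 1/2| := by nlinarith
    · -- x + z = -β^e (β^μ + r + 1/2)
      set k : ℤ := -((β:ℤ)^μ + r) - m - 1 with hk
      have hz : z = (β:ℝ)^e * ((k:ℝ) + 1/2) := by
        have : -(x + z) = (β:ℝ)^e * ((β:ℝ)^μ + r + 1/2) := by rw [← habs, hxz]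
        rw [hm] at this
        push_cast [hk]
        linarith
      rw [hz, abs_mul, abs_of_pos hp]
      have := half_int_aux k
      calc (β:ℝ)^e / 2 = (β:ℝ)^e * (1/2) := by ring
        _ ≤ (β:ℝ)^e * |(k:ℝ) + 1/2| := by nlinarith
  · -- |x| < β^(e+μ)
    have h1 : |x + z| - |x| ≤ |z| := by
      have := abs_sub_abs_le_abs_sub (x + z) x
      simpa using this
    have hr0 : (0:ℝ) ≤ (r:ℝ) := Nat.cast_nonneg r
    rw [hxz] at h1
    nlinarith
end
end
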